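/- arXiv:1302.5402 — 6 statements merged into one kernel-verified Lean document; each statement's English description precedes it below -/
import Mathlib

section
/- If at every point of D the angle function α satisfies ((2F² − EG) l − 2EF m + E² n) sin 2α + 2(−F l + E m) √(EG − F²) cos 2α = 0 (i.e. tan 2α = −2(−F l + E m)√(EG − F²)/((2F² − EG) l − 2EF m + E² n)), then ⟨L_β f₁, N⟩ = 0 at every point of D. -/
/-!
STATEMENT 4: If at every point of D the angle function α satisfies
((2F² − EG) l − 2EF m + E² n) sin 2α + 2(−F l + E m) √(EG − F²) cos 2α = 0
(i.e. tan 2α = −2(−F l + E m)√(EG − F²)/((2F² − EG) l − 2EF m + E² n)),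
then ⟨L_β f₁, N⟩ = 0 at every point of D.
-/

/-- The cross product of two vectors in Euclidean 3-space. -/
noncomputable def cross3 (a b : EuclideanSpace ℝ (Fin 3)) : EuclideanSpace ℝ (Fin 3) :=
  (WithLp.equiv 2 (Fin 3 → ℝ)).symm
    ![a 1 * b 2 - a 2 * b 1, a 2 * b 0 - a 0 * b 2, a 0 * b 1 - a 1 * b 0]


open scoped Topology

lemma inner_cross3_left (a b : EuclideanSpace ℝ (Fin 3)) : (inner ℝ a (cross3 a b) : ℝ) = 0 := by
  simp [cross3, PiLp.inner_apply, Fin.sum_univ_three, WithLp.equiv_symm_apply, PiLp.toLp_apply]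
  ring

lemma inner_cross3_right (a b : EuclideanSpace ℝ (Fin 3)) : (inner ℝ b (cross3 a b) : ℝ) = 0 := by
  simp [cross3, PiLp.inner_apply, Fin.sum_univ_three, WithLp.equiv_symm_apply, PiLp.toLp_apply]
  ring

set_option maxHeartbeats 1000000 in
theorem stmt_4
    (D : Set (ℝ × ℝ)) (hD : IsOpen D)
    (f fx fy : ℝ × ℝ → EuclideanSpace ℝ (Fin 3))
    (hf : ContDiffOn ℝ (⊤ : ℕ∞) f D)
    (hfx : ∀ p ∈ D, HasDerivAt (fun t : ℝ => f (t, p.2)) (fx p) p.1)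
    (hfy : ∀ p ∈ D, HasDerivAt (fun t : ℝ => f (p.1, t)) (fy p) p.2)
    (hind : ∀ p ∈ D, LinearIndependent ℝ ![fx p, fy p])
    (E F G : ℝ × ℝ → ℝ)
    (hE : ∀ p, E p = (inner ℝ (fx p) (fx p) : ℝ))
    (hF : ∀ p, F p = (inner ℝ (fx p) (fy p) : ℝ))
    (hG : ∀ p, G p = (inner ℝ (fy p) (fy p) : ℝ))
    (hEpos : ∀ p ∈ D, 0 < E p)
    (hdisc : ∀ p ∈ D, 0 < E p * G p - F p ^ 2)
    -- the unit normal (Gauss map)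
    (N : ℝ × ℝ → EuclideanSpace ℝ (Fin 3))
    (hN : ∀ p ∈ D, N p = ‖cross3 (fx p) (fy p)‖⁻¹ • cross3 (fx p) (fy p))
    -- second-order partial derivatives of f
    (fxx fxy fyy : ℝ × ℝ → EuclideanSpace ℝ (Fin 3))
    (hfxx : ∀ p ∈ D, HasDerivAt (fun t : ℝ => fx (t, p.2)) (fxx p) p.1)
    (hfxy : ∀ p ∈ D, HasDerivAt (fun t : ℝ => fx (p.1, t)) (fxy p) p.2)
    (hfyy : ∀ p ∈ D, HasDerivAt (fun t : ℝ => fy (p.1, t)) (fyy p) p.2)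
    -- second fundamental form coefficients
    (l m n : ℝ × ℝ → ℝ)
    (hl : ∀ p, l p = (inner ℝ (fxx p) (N p) : ℝ))
    (hm : ∀ p, m p = (inner ℝ (fxy p) (N p) : ℝ))
    (hn : ∀ p, n p = (inner ℝ (fyy p) (N p) : ℝ))
    (K α : ℝ × ℝ → ℝ)
    (hK : ContDiffOn ℝ (⊤ : ℕ∞) K D) (hKpos : ∀ p ∈ D, 0 < K p)
    (hα : ContDiffOn ℝ (⊤ : ℕ∞) α D)
    (D₁ D₂ f₁ f₂ : ℝ × ℝ → EuclideanSpace ℝ (Fin 3))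
    (hD₁ : ∀ p, D₁ p = (Real.sqrt (E p))⁻¹ • fx p)
    (hD₂ : ∀ p, D₂ p = (Real.sqrt (G p - F p ^ 2 / E p))⁻¹ • (fy p - (F p / E p) • fx p))
    (hf₁ : ∀ p, f₁ p = K p • (Real.cos (α p) • D₁ p + Real.sin (α p) • D₂ p))
    (hf₂ : ∀ p, f₂ p = K p • ((-Real.sin (α p)) • D₁ p + Real.cos (α p) • D₂ p))
    -- partial derivatives of f₁
    (f₁x f₁y : ℝ × ℝ → EuclideanSpace ℝ (Fin 3))
    (hf₁x : ∀ p ∈ D, HasDerivAt (fun t : ℝ => f₁ (t, p.2)) (f₁x p) p.1)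
    (hf₁y : ∀ p ∈ D, HasDerivAt (fun t : ℝ => f₁ (p.1, t)) (f₁y p) p.2)
    -- L_β applied to f₁
    (Lβf₁ : ℝ × ℝ → EuclideanSpace ℝ (Fin 3))
    (hLβf₁ : ∀ p, Lβf₁ p = K p • ((-(Real.sin (α p)) / Real.sqrt (E p)) • f₁x p
        + (Real.cos (α p) / Real.sqrt (G p - F p ^ 2 / E p))
          • (f₁y p - (F p / E p) • f₁x p)))
    -- the defining equation of the rotation angle α
    (hangle : ∀ p ∈ D,
      ((2 * F p ^ 2 - E p * G p) * l p - 2 * E p * F p * m p + E p ^ 2 * n p)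
          * Real.sin (2 * α p)
        + 2 * (-(F p) * l p + E p * m p) * Real.sqrt (E p * G p - F p ^ 2)
          * Real.cos (2 * α p) = 0) :
    ∀ p ∈ D, (inner ℝ (Lβf₁ p) (N p) : ℝ) = 0 := by
  intro p hp
  have hEp := hEpos p hp
  have hdp := hdisc p hp
  have hEne : E p ≠ 0 := hEp.ne'
  have hW2pos : 0 < G p - F p ^ 2 / E p := by
    have h : G p - F p ^ 2 / E p = (E p * G p - F p ^ 2) / E p := by field_simp
    rw [h]; positivity
  -- smoothness of fx, fy, E, F, G on D
  have hfdiff : DifferentiableOn ℝ f D := hf.differentiableOn (by simp)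
  have hfD : ∀ q ∈ D, HasFDerivAt f (fderiv ℝ f q) q := fun q hq =>
    (hfdiff.differentiableAt (hD.mem_nhds hq)).hasFDerivAt
  have hfx_eq : ∀ q ∈ D, fx q = fderiv ℝ f q (1, 0) := by
    intro q hq
    refine (hfx q hq).unique ?_
    have h2 : HasFDerivAt f (fderiv ℝ f q) ((q.1, q.2) : ℝ × ℝ) := by
      rw [Prod.mk.eta]; exact hfD q hq
    exact h2.comp_hasDerivAt q.1 ((hasDerivAt_id q.1).prodMk (hasDerivAt_const q.1 q.2))
  have hfy_eq : ∀ q ∈ D, fy q = fderiv ℝ f q (0, 1) := by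
    intro q hq
    refine (hfy q hq).unique ?_
    have h2 : HasFDerivAt f (fderiv ℝ f q) ((q.1, q.2) : ℝ × ℝ) := by
      rw [Prod.mk.eta]; exact hfD q hq
    exact h2.comp_hasDerivAt q.2 ((hasDerivAt_const q.2 q.1).prodMk (hasDerivAt_id q.2))
  have hfderiv_smooth : ContDiffOn ℝ (⊤ : ℕ∞) (fun q => fderiv ℝ f q) D := hf.fderiv_of_isOpen hD (by simp)
  have hfxsm : ContDiffOn ℝ (⊤ : ℕ∞) fx D := (hfderiv_smooth.clm_apply contDiffOn_const).congr hfx_eq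
  have hfysm : ContDiffOn ℝ (⊤ : ℕ∞) fy D := (hfderiv_smooth.clm_apply contDiffOn_const).congr hfy_eq
  have hEsm : ContDiffOn ℝ (⊤ : ℕ∞) E D := (hfxsm.inner ℝ hfxsm).congr (fun q _ => hE q)
  have hFsm : ContDiffOn ℝ (⊤ : ℕ∞) F D := (hfxsm.inner ℝ hfysm).congr (fun q _ => hF q)
  have hGsm : ContDiffOn ℝ (⊤ : ℕ∞) G D := (hfysm.inner ℝ hfysm).congr (fun q _ => hG q)
  -- the tangential coefficient functions a, b with f₁ = a • fx + b • fy
  set a : ℝ × ℝ → ℝ := fun q => K q * (Real.cos (α q) * (Real.sqrt (E q))⁻¹ -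
      Real.sin (α q) * ((Real.sqrt (G q - F q ^ 2 / E q))⁻¹ * (F q / E q))) with ha_def
  set b : ℝ × ℝ → ℝ := fun q =>
      K q * (Real.sin (α q) * (Real.sqrt (G q - F q ^ 2 / E q))⁻¹) with hb_def
  have hf₁ab : ∀ q, f₁ q = a q • fx q + b q • fy q := by
    intro q
    rw [hf₁ q, hD₁ q, hD₂ q]
    simp only [ha_def, hb_def]
    module
  -- differentiability of a and b at p
  have dK : DifferentiableAt ℝ K p := (hK.contDiffAt (hD.mem_nhds hp)).differentiableAt (by simp)
  have dα : DifferentiableAt ℝ α p := (hα.contDiffAt (hD.mem_nhds hp)).differentiableAt (by simp)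
  have dE : DifferentiableAt ℝ E p := (hEsm.contDiffAt (hD.mem_nhds hp)).differentiableAt (by simp)
  have dF : DifferentiableAt ℝ F p := (hFsm.contDiffAt (hD.mem_nhds hp)).differentiableAt (by simp)
  have dG : DifferentiableAt ℝ G p := (hGsm.contDiffAt (hD.mem_nhds hp)).differentiableAt (by simp)
  have dsqE : DifferentiableAt ℝ (fun q => Real.sqrt (E q)) p := dE.sqrt hEne
  have dF2 : DifferentiableAt ℝ (fun q => F q ^ 2 / E q) p := by
    have h1 : DifferentiableAt ℝ (fun q => F q ^ 2) p := dF.pow 2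
    exact h1.mul (dE.inv hEne)
  have dW2 : DifferentiableAt ℝ (fun q => G q - F q ^ 2 / E q) p := dG.sub dF2
  have dsqW : DifferentiableAt ℝ (fun q => Real.sqrt (G q - F q ^ 2 / E q)) p :=
    dW2.sqrt hW2pos.ne'
  have hsqEne : Real.sqrt (E p) ≠ 0 := (Real.sqrt_pos.mpr hEp).ne'
  have hsqWne : Real.sqrt (G p - F p ^ 2 / E p) ≠ 0 := (Real.sqrt_pos.mpr hW2pos).ne'
  have da : DifferentiableAt ℝ a p := by
    apply dK.mul
    exact (dα.cos.mul (dsqE.inv hsqEne)).sub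
      (dα.sin.mul ((dsqW.inv hsqWne).mul (dF.mul (dE.inv hEne))))
  have db : DifferentiableAt ℝ b p := dK.mul (dα.sin.mul (dsqW.inv hsqWne))
  -- directional derivatives
  have lineX : HasDerivAt (fun t : ℝ => (t, p.2)) ((1 : ℝ), (0 : ℝ)) p.1 :=
    (hasDerivAt_id p.1).prodMk (hasDerivAt_const p.1 p.2)
  have lineY : HasDerivAt (fun t : ℝ => (p.1, t)) ((0 : ℝ), (1 : ℝ)) p.2 :=
    (hasDerivAt_const p.2 p.1).prodMk (hasDerivAt_id p.2)
  have haX : HasDerivAt (fun t => a (t, p.2)) (fderiv ℝ a p (1, 0)) p.1 := by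
    have h2 : HasFDerivAt a (fderiv ℝ a p) ((p.1, p.2) : ℝ × ℝ) := by
      rw [Prod.mk.eta]; exact da.hasFDerivAt
    exact h2.comp_hasDerivAt p.1 lineX
  have haY : HasDerivAt (fun t => a (p.1, t)) (fderiv ℝ a p (0, 1)) p.2 := by
    have h2 : HasFDerivAt a (fderiv ℝ a p) ((p.1, p.2) : ℝ × ℝ) := by
      rw [Prod.mk.eta]; exact da.hasFDerivAt
    exact h2.comp_hasDerivAt p.2 lineY
  have hbX : HasDerivAt (fun t => b (t, p.2)) (fderiv ℝ b p (1, 0)) p.1 := by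
    have h2 : HasFDerivAt b (fderiv ℝ b p) ((p.1, p.2) : ℝ × ℝ) := by
      rw [Prod.mk.eta]; exact db.hasFDerivAt
    exact h2.comp_hasDerivAt p.1 lineX
  have hbY : HasDerivAt (fun t => b (p.1, t)) (fderiv ℝ b p (0, 1)) p.2 := by
    have h2 : HasFDerivAt b (fderiv ℝ b p) ((p.1, p.2) : ℝ × ℝ) := by
      rw [Prod.mk.eta]; exact db.hasFDerivAt
    exact h2.comp_hasDerivAt p.2 lineY
  -- Schwarz symmetry: the x-derivative of fy is fxy
  have hfderiv_diffAt : DifferentiableAt ℝ (fun q => fderiv ℝ f q) p :=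
    (hfderiv_smooth.contDiffAt (hD.mem_nhds hp)).differentiableAt (by simp)
  have hsymm : IsSymmSndFDerivAt ℝ f p :=
    (hf.contDiffAt (hD.mem_nhds hp)).isSymmSndFDerivAt
      (by rw [minSmoothness_of_isRCLikeNormedField]; exact WithTop.coe_le_coe.mpr le_top)
  have happ : ∀ v : ℝ × ℝ, HasFDerivAt (fun q => fderiv ℝ f q v)
      ((ContinuousLinearMap.apply ℝ (EuclideanSpace ℝ (Fin 3)) v).comp
        (fderiv ℝ (fun q => fderiv ℝ f q) p)) p := fun v =>
    (ContinuousLinearMap.apply ℝ (EuclideanSpace ℝ (Fin 3)) v).hasFDerivAt.comp p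
      hfderiv_diffAt.hasFDerivAt
  have hmemX : ∀ᶠ t in 𝓝 p.1, (t, p.2) ∈ D := by
    have hop : IsOpen ((fun t : ℝ => (t, p.2)) ⁻¹' D) :=
      hD.preimage (continuous_id.prodMk continuous_const)
    have hmem : p.1 ∈ ((fun t : ℝ => (t, p.2)) ⁻¹' D) := by
      show ((p.1, p.2) : ℝ × ℝ) ∈ D; rw [Prod.mk.eta]; exact hp
    exact Filter.eventually_of_mem (hop.mem_nhds hmem) (fun t ht => ht)
  have hmemY : ∀ᶠ t in 𝓝 p.2, (p.1, t) ∈ D := by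
    have hop : IsOpen ((fun t : ℝ => (p.1, t)) ⁻¹' D) :=
      hD.preimage (continuous_const.prodMk continuous_id)
    have hmem : p.2 ∈ ((fun t : ℝ => (p.1, t)) ⁻¹' D) := by
      show ((p.1, p.2) : ℝ × ℝ) ∈ D; rw [Prod.mk.eta]; exact hp
    exact Filter.eventually_of_mem (hop.mem_nhds hmem) (fun t ht => ht)
  have hfxy_eq : fxy p = fderiv ℝ (fun q => fderiv ℝ f q) p (0, 1) (1, 0) := by
    refine (hfxy p hp).unique ?_
    have h2 : HasFDerivAt (fun q => fderiv ℝ f q (1, 0))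
        ((ContinuousLinearMap.apply ℝ (EuclideanSpace ℝ (Fin 3)) (1, 0)).comp
          (fderiv ℝ (fun q => fderiv ℝ f q) p)) ((p.1, p.2) : ℝ × ℝ) := by
      rw [Prod.mk.eta]; exact happ (1, 0)
    have h1 := h2.comp_hasDerivAt p.2 lineY
    have h3 : HasDerivAt (fun t => fderiv ℝ f (p.1, t) (1, 0))
        (fderiv ℝ (fun q => fderiv ℝ f q) p (0, 1) (1, 0)) p.2 := by exact h1
    refine h3.congr_of_eventuallyEq ?_
    filter_upwards [hmemY] with t ht
    exact hfx_eq (p.1, t) ht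
  have hfyx : HasDerivAt (fun t => fy (t, p.2)) (fxy p) p.1 := by
    have h2 : HasFDerivAt (fun q => fderiv ℝ f q (0, 1))
        ((ContinuousLinearMap.apply ℝ (EuclideanSpace ℝ (Fin 3)) (0, 1)).comp
          (fderiv ℝ (fun q => fderiv ℝ f q) p)) ((p.1, p.2) : ℝ × ℝ) := by
      rw [Prod.mk.eta]; exact happ (0, 1)
    have h1 := h2.comp_hasDerivAt p.1 lineX
    have h3 : HasDerivAt (fun t => fderiv ℝ f (t, p.2) (0, 1))
        (fderiv ℝ (fun q => fderiv ℝ f q) p (1, 0) (0, 1)) p.1 := by exact h1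
    have h4 : HasDerivAt (fun t => fy (t, p.2))
        (fderiv ℝ (fun q => fderiv ℝ f q) p (1, 0) (0, 1)) p.1 := by
      refine h3.congr_of_eventuallyEq ?_
      filter_upwards [hmemX] with t ht
      exact hfy_eq (t, p.2) ht
    rw [hfxy_eq]
    have := hsymm.eq (1, 0) (0, 1)
    rw [← this]
    exact h4
  -- compute f₁x and f₁y
  have hf₁funX : (fun t : ℝ => f₁ (t, p.2)) =
      fun t => a (t, p.2) • fx (t, p.2) + b (t, p.2) • fy (t, p.2) :=
    funext fun t => hf₁ab (t, p.2)
  have hf₁funY : (fun t : ℝ => f₁ (p.1, t)) =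
      fun t => a (p.1, t) • fx (p.1, t) + b (p.1, t) • fy (p.1, t) :=
    funext fun t => hf₁ab (p.1, t)
  have hf₁x_val : f₁x p = (a p • fxx p + (fderiv ℝ a p (1, 0)) • fx p) +
      (b p • fxy p + (fderiv ℝ b p (1, 0)) • fy p) := by
    refine (hf₁x p hp).unique ?_
    rw [hf₁funX]
    exact (haX.smul (hfxx p hp)).add (hbX.smul hfyx)
  have hf₁y_val : f₁y p = (a p • fxy p + (fderiv ℝ a p (0, 1)) • fx p) +
      (b p • fyy p + (fderiv ℝ b p (0, 1)) • fy p) := by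
    refine (hf₁y p hp).unique ?_
    rw [hf₁funY]
    exact (haY.smul (hfxy p hp)).add (hbY.smul (hfyy p hp))
  -- inner products with N
  have hNfx : (inner ℝ (fx p) (N p) : ℝ) = 0 := by
    rw [hN p hp, real_inner_smul_right, inner_cross3_left, mul_zero]
  have hNfy : (inner ℝ (fy p) (N p) : ℝ) = 0 := by
    rw [hN p hp, real_inner_smul_right, inner_cross3_right, mul_zero]
  have hI1 : (inner ℝ (f₁x p) (N p) : ℝ) = a p * l p + b p * m p := by
    rw [hf₁x_val]
    simp only [inner_add_left, real_inner_smul_left, hNfx, hNfy, mul_zero, add_zero]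
    rw [hl p, hm p]
  have hI2 : (inner ℝ (f₁y p) (N p) : ℝ) = a p * m p + b p * n p := by
    rw [hf₁y_val]
    simp only [inner_add_left, real_inner_smul_left, hNfx, hNfy, mul_zero, add_zero]
    rw [hm p, hn p]
  -- final algebra
  rw [hLβf₁ p]
  rw [real_inner_smul_left]
  simp only [inner_add_left, inner_sub_left, real_inner_smul_left, hI1, hI2]
  have hap : a p = K p * (Real.cos (α p) * (Real.sqrt (E p))⁻¹ -
      Real.sin (α p) * ((Real.sqrt (G p - F p ^ 2 / E p))⁻¹ * (F p / E p))) := rfl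
  have hbp : b p = K p * (Real.sin (α p) * (Real.sqrt (G p - F p ^ 2 / E p))⁻¹) := rfl
  rw [hap, hbp]
  set e := Real.sqrt (E p) with he_def
  set W := Real.sqrt (G p - F p ^ 2 / E p) with hW_def
  have he : 0 < e := Real.sqrt_pos.mpr hEp
  have hW : 0 < W := Real.sqrt_pos.mpr hW2pos
  have he2 : e ^ 2 = E p := Real.sq_sqrt hEp.le
  have hW2 : W ^ 2 = G p - F p ^ 2 / E p := Real.sq_sqrt hW2pos.le
  have hang := hangle p hp
  have hS : Real.sqrt (E p * G p - F p ^ 2) = e * W := by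
    rw [show E p * G p - F p ^ 2 = E p * (G p - F p ^ 2 / E p) by field_simp,
      Real.sqrt_mul hEp.le, he_def, hW_def]
  rw [hS, Real.sin_two_mul, Real.cos_two_mul'] at hang
  have hE2 : E p = e ^ 2 := he2.symm
  have hG2 : G p = W ^ 2 + F p ^ 2 / e ^ 2 := by rw [hW2, hE2]; ring
  rw [hE2, hG2] at hang
  rw [hE2]
  refine mul_left_cancel₀ (a := 2 * e ^ 4 * W ^ 2) (by positivity) ?_
  rw [mul_zero]
  calc 2 * e ^ 4 * W ^ 2 * (K p *
      (-Real.sin (α p) / e *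
          (K p * (Real.cos (α p) * e⁻¹ - Real.sin (α p) * (W⁻¹ * (F p / e ^ 2))) * l p +
            K p * (Real.sin (α p) * W⁻¹) * m p) +
        Real.cos (α p) / W *
          ((K p * (Real.cos (α p) * e⁻¹ - Real.sin (α p) * (W⁻¹ * (F p / e ^ 2))) * m p +
              K p * (Real.sin (α p) * W⁻¹) * n p) -
            F p / e ^ 2 *
              (K p * (Real.cos (α p) * e⁻¹ - Real.sin (α p) * (W⁻¹ * (F p / e ^ 2))) * l p +
                K p * (Real.sin (α p) * W⁻¹) * m p))))
      = K p ^ 2 *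
        (((2 * F p ^ 2 - (W ^ 2 + F p ^ 2 / e ^ 2) * e ^ 2) * l p - 2 * e ^ 2 * F p * m p +
            (e ^ 2) ^ 2 * n p) * (2 * Real.sin (α p) * Real.cos (α p)) +
          2 * (-(F p) * l p + e ^ 2 * m p) * (e * W) *
            (Real.cos (α p) ^ 2 - Real.sin (α p) ^ 2)) := by
        field_simp
        ring
    _ = 0 := by linear_combination K p ^ 2 * hang
end

section
/- At every point of D one has the decomposition L_β f₁ − L_γ f₂ = (L_β K · cos α + L_γ K · sin α + K²(P₂ + Q₂)) D₁ + (L_β K · sin α − L_γ K · cos α + K²(P₁ + Q₁)) D₂. -/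
set_option maxHeartbeats 4000000

open Real

variable {V : Type*} [NormedAddCommGroup V] [NormedSpace ℝ V]

variable {V : Type*} [NormedAddCommGroup V] [NormedSpace ℝ V]

lemma lineX_hasDerivAt' {f : ℝ × ℝ → V} {L : ℝ × ℝ →L[ℝ] V} {p : ℝ × ℝ}
    (h : HasFDerivAt f L p) :
    HasDerivAt (fun t => f (t, p.2)) (L (1, 0)) p.1 :=
  h.comp_hasDerivAt p.1 ((hasDerivAt_id p.1).prodMk (hasDerivAt_const p.1 p.2))

lemma lineY_hasDerivAt' {f : ℝ × ℝ → V} {L : ℝ × ℝ →L[ℝ] V} {p : ℝ × ℝ}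
    (h : HasFDerivAt f L p) :
    HasDerivAt (fun t => f (p.1, t)) (L (0, 1)) p.2 :=
  h.comp_hasDerivAt p.2 ((hasDerivAt_const p.2 p.1).prodMk (hasDerivAt_id p.2))

lemma lineX_hasDerivAt {f : ℝ × ℝ → V} {p : ℝ × ℝ} (hfd : DifferentiableAt ℝ f p) :
    HasDerivAt (fun t => f (t, p.2)) (fderiv ℝ f p (1, 0)) p.1 :=
  lineX_hasDerivAt' hfd.hasFDerivAt

lemma lineY_hasDerivAt {f : ℝ × ℝ → V} {p : ℝ × ℝ} (hfd : DifferentiableAt ℝ f p) :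
    HasDerivAt (fun t => f (p.1, t)) (fderiv ℝ f p (0, 1)) p.2 :=
  lineY_hasDerivAt' hfd.hasFDerivAt

/-- Main machinery: second partials of a C^∞ function on an open set, with symmetry. -/
lemma second_partials {D : Set (ℝ × ℝ)} (hD : IsOpen D) {f fx fy : ℝ × ℝ → V}
    (hf : ContDiffOn ℝ (⊤ : ℕ∞) f D)
    (hfx : ∀ p ∈ D, HasDerivAt (fun t : ℝ => f (t, p.2)) (fx p) p.1)
    (hfy : ∀ p ∈ D, HasDerivAt (fun t : ℝ => f (p.1, t)) (fy p) p.2)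
    {p : ℝ × ℝ} (hp : p ∈ D) :
    ∃ X1 X2 X3 : V,
      HasDerivAt (fun t : ℝ => fx (t, p.2)) X1 p.1 ∧
      HasDerivAt (fun t : ℝ => fx (p.1, t)) X2 p.2 ∧
      HasDerivAt (fun t : ℝ => fy (t, p.2)) X2 p.1 ∧
      HasDerivAt (fun t : ℝ => fy (p.1, t)) X3 p.2 := by
  have hdf : ∀ q ∈ D, DifferentiableAt ℝ f q := fun q hq =>
    (hf.contDiffAt (hD.mem_nhds hq)).differentiableAt (by simp)
  have hfx_eq : ∀ q ∈ D, fx q = fderiv ℝ f q (1, 0) := fun q hq =>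
    (hfx q hq).unique (lineX_hasDerivAt (hdf q hq))
  have hfy_eq : ∀ q ∈ D, fy q = fderiv ℝ f q (0, 1) := fun q hq =>
    (hfy q hq).unique (lineY_hasDerivAt (hdf q hq))
  set f' := fderiv ℝ f with hf'
  have hf'c : ContDiffOn ℝ (⊤ : ℕ∞) f' D := hf.fderiv_of_isOpen hD (by simp)
  have hdf' : DifferentiableAt ℝ f' p :=
    (hf'c.contDiffAt (hD.mem_nhds hp)).differentiableAt (by simp)
  set M := fderiv ℝ f' p with hM
  have happ : ∀ v : ℝ × ℝ, HasFDerivAt (fun q => f' q v)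
      ((ContinuousLinearMap.apply ℝ V v).comp M) p := fun v =>
    (ContinuousLinearMap.apply ℝ V v).hasFDerivAt.comp p hdf'.hasFDerivAt
  have hmemX : ∀ᶠ t in nhds p.1, (t, p.2) ∈ D := by
    have hc : Continuous (fun t : ℝ => (t, p.2)) := by fun_prop
    exact hc.continuousAt.preimage_mem_nhds (by rw [Prod.mk.eta]; exact hD.mem_nhds hp)
  have hmemY : ∀ᶠ t in nhds p.2, (p.1, t) ∈ D := by
    have hc : Continuous (fun t : ℝ => (p.1, t)) := by fun_prop
    exact hc.continuousAt.preimage_mem_nhds (by rw [Prod.mk.eta]; exact hD.mem_nhds hp)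
  have hsymm : ∀ v w, M v w = M w v := fun v w =>
    (hf.contDiffAt (hD.mem_nhds hp)).isSymmSndFDerivAt (by rw [minSmoothness_of_isRCLikeNormedField]; exact WithTop.coe_le_coe.2 le_top) v w
  refine ⟨M (1,0) (1,0), M (0,1) (1,0), M (0,1) (0,1), ?_, ?_, ?_, ?_⟩
  · have h := lineX_hasDerivAt' (happ (1,0))
    refine (h.congr_of_eventuallyEq ?_).congr_deriv (by simp)
    filter_upwards [hmemX] with t ht using hfx_eq _ ht
  · have h := lineY_hasDerivAt' (happ (1,0))
    refine (h.congr_of_eventuallyEq ?_).congr_deriv (by simp)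
    filter_upwards [hmemY] with t ht using hfx_eq _ ht
  · have h := lineX_hasDerivAt' (happ (0,1))
    refine (h.congr_of_eventuallyEq ?_).congr_deriv (by simp [hsymm (1,0) (0,1)])
    filter_upwards [hmemX] with t ht using hfy_eq _ ht
  · have h := lineY_hasDerivAt' (happ (0,1))
    refine (h.congr_of_eventuallyEq ?_).congr_deriv (by simp)
    filter_upwards [hmemY] with t ht using hfy_eq _ ht

lemma main_deriv (E F G K C S : ℝ → ℝ) (X Y : ℝ → V) (t : ℝ)
    (e' fv' g' k' c' s' : ℝ) (u' v' : V)
    (hE : HasDerivAt E e' t) (hF : HasDerivAt F fv' t) (hG : HasDerivAt G g' t)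
    (hK : HasDerivAt K k' t) (hC : HasDerivAt C c' t) (hS : HasDerivAt S s' t)
    (hX : HasDerivAt X u' t) (hY : HasDerivAt Y v' t)
    (he : 0 < E t) (hw : 0 < G t - F t ^ 2 / E t) :
    HasDerivAt (fun τ => K τ • (C τ • ((Real.sqrt (E τ))⁻¹ • X τ)
        + S τ • ((Real.sqrt (G τ - F τ ^ 2 / E τ))⁻¹ • (Y τ - (F τ / E τ) • X τ))))
      ((k' * C t / Real.sqrt (E t) + K t * c' / Real.sqrt (E t)
          - K t * C t * e' / (2 * Real.sqrt (E t) ^ 3)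
          - (k' * S t / Real.sqrt (G t - F t ^ 2 / E t)
              + K t * s' / Real.sqrt (G t - F t ^ 2 / E t)
              - K t * S t * (g' - (2 * F t * fv' * E t - F t ^ 2 * e') / E t ^ 2)
                  / (2 * Real.sqrt (G t - F t ^ 2 / E t) ^ 3)) * (F t / E t)
          - (K t * S t / Real.sqrt (G t - F t ^ 2 / E t))
              * ((fv' * E t - F t * e') / E t ^ 2)) • X t
        + (k' * S t / Real.sqrt (G t - F t ^ 2 / E t)
            + K t * s' / Real.sqrt (G t - F t ^ 2 / E t)
            - K t * S t * (g' - (2 * F t * fv' * E t - F t ^ 2 * e') / E t ^ 2)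
                / (2 * Real.sqrt (G t - F t ^ 2 / E t) ^ 3)) • Y t
        + (K t * C t / Real.sqrt (E t)
            - K t * S t * (F t / E t) / Real.sqrt (G t - F t ^ 2 / E t)) • u'
        + (K t * S t / Real.sqrt (G t - F t ^ 2 / E t)) • v') t := by
  have hsE : HasDerivAt (fun τ => Real.sqrt (E τ)) (e' / (2 * Real.sqrt (E t))) t :=
    hE.sqrt he.ne'
  have hsEne : Real.sqrt (E t) ≠ 0 := (Real.sqrt_pos.2 he).ne'
  have hsEi := hsE.inv hsEne
  have hW : HasDerivAt (fun τ => G τ - F τ ^ 2 / E τ)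
      (g' - ((2 * F t ^ 1 * fv') * E t - F t ^ 2 * e') / E t ^ 2) t :=
    hG.sub (((hF.pow 2)).div hE he.ne')
  have hsW : HasDerivAt (fun τ => Real.sqrt (G τ - F τ ^ 2 / E τ))
      ((g' - ((2 * F t ^ 1 * fv') * E t - F t ^ 2 * e') / E t ^ 2)
        / (2 * Real.sqrt (G t - F t ^ 2 / E t))) t := hW.sqrt hw.ne'
  have hsWne : Real.sqrt (G t - F t ^ 2 / E t) ≠ 0 := (Real.sqrt_pos.2 hw).ne'
  have hsWi := hsW.inv hsWne
  have hFE := hF.div hE he.ne'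
  have h1 := hC.smul (hsEi.smul hX)
  have h2 := hS.smul (hsWi.smul (hY.sub (hFE.smul hX)))
  have h := hK.smul (h1.add h2)
  convert h using 1
  · rfl
  simp only [Pi.smul_apply', Pi.smul_apply, Pi.add_apply, Pi.sub_apply, Pi.inv_apply, Pi.div_apply]
  have hb2 : G t - F t ^ 2 / E t = Real.sqrt (G t - F t ^ 2 / E t) ^ 2 :=
    (Real.sq_sqrt hw.le).symm
  have ha2 : E t = Real.sqrt (E t) ^ 2 := (Real.sq_sqrt he.le).symm
  set a := Real.sqrt (E t) with ha
  set b := Real.sqrt (G t - F t ^ 2 / E t) with hb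
  have hapos : 0 < a := Real.sqrt_pos.2 he
  have hbpos : 0 < b := Real.sqrt_pos.2 hw
  rw [ha2]
  match_scalars <;> field_simp <;> ring

/-!
STATEMENT 5: At every point of D one has the decomposition
L_β f₁ − L_γ f₂ = (L_β K · cos α + L_γ K · sin α + K²(P₂ + Q₂)) D₁
                + (L_β K · sin α − L_γ K · cos α + K²(P₁ + Q₁)) D₂.
-/

theorem stmt_5
    (D : Set (ℝ × ℝ)) (hD : IsOpen D)
    (f fx fy : ℝ × ℝ → EuclideanSpace ℝ (Fin 3))
    (hf : ContDiffOn ℝ (⊤ : ℕ∞) f D)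
    (hfx : ∀ p ∈ D, HasDerivAt (fun t : ℝ => f (t, p.2)) (fx p) p.1)
    (hfy : ∀ p ∈ D, HasDerivAt (fun t : ℝ => f (p.1, t)) (fy p) p.2)
    (hind : ∀ p ∈ D, LinearIndependent ℝ ![fx p, fy p])
    (E F G : ℝ × ℝ → ℝ)
    (hE : ∀ p, E p = (inner ℝ (fx p) (fx p) : ℝ))
    (hF : ∀ p, F p = (inner ℝ (fx p) (fy p) : ℝ))
    (hG : ∀ p, G p = (inner ℝ (fy p) (fy p) : ℝ))
    (hEpos : ∀ p ∈ D, 0 < E p)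
    (hdisc : ∀ p ∈ D, 0 < E p * G p - F p ^ 2)
    (K α : ℝ × ℝ → ℝ)
    (hK : ContDiffOn ℝ (⊤ : ℕ∞) K D) (hKpos : ∀ p ∈ D, 0 < K p)
    (hα : ContDiffOn ℝ (⊤ : ℕ∞) α D)
    (D₁ D₂ f₁ f₂ : ℝ × ℝ → EuclideanSpace ℝ (Fin 3))
    (hD₁ : ∀ p, D₁ p = (Real.sqrt (E p))⁻¹ • fx p)
    (hD₂ : ∀ p, D₂ p = (Real.sqrt (G p - F p ^ 2 / E p))⁻¹ • (fy p - (F p / E p) • fx p))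
    (hf₁ : ∀ p, f₁ p = K p • (Real.cos (α p) • D₁ p + Real.sin (α p) • D₂ p))
    (hf₂ : ∀ p, f₂ p = K p • ((-Real.sin (α p)) • D₁ p + Real.cos (α p) • D₂ p))
    -- partial derivatives of the scalar data E, F, G, α, K
    (Ex Ey Fx Gx αx αy Kx Ky : ℝ × ℝ → ℝ)
    (hEx : ∀ p ∈ D, HasDerivAt (fun t : ℝ => E (t, p.2)) (Ex p) p.1)
    (hEy : ∀ p ∈ D, HasDerivAt (fun t : ℝ => E (p.1, t)) (Ey p) p.2)
    (hFx : ∀ p ∈ D, HasDerivAt (fun t : ℝ => F (t, p.2)) (Fx p) p.1)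
    (hGx : ∀ p ∈ D, HasDerivAt (fun t : ℝ => G (t, p.2)) (Gx p) p.1)
    (hαx : ∀ p ∈ D, HasDerivAt (fun t : ℝ => α (t, p.2)) (αx p) p.1)
    (hαy : ∀ p ∈ D, HasDerivAt (fun t : ℝ => α (p.1, t)) (αy p) p.2)
    (hKx : ∀ p ∈ D, HasDerivAt (fun t : ℝ => K (t, p.2)) (Kx p) p.1)
    (hKy : ∀ p ∈ D, HasDerivAt (fun t : ℝ => K (p.1, t)) (Ky p) p.2)
    -- the quantities P₁, P₂, Q₁, Q₂
    (P₁ P₂ Q₁ Q₂ : ℝ × ℝ → ℝ)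
    (hP₁ : ∀ p, P₁ p = ((F p ^ 2 / E p ^ 2) * Ex p - 2 * (F p / E p) * Fx p + Gx p)
        / (2 * (G p - F p ^ 2 / E p) * Real.sqrt (E p)))
    (hP₂ : ∀ p, P₂ p = (-Ey p - (F p / E p) * Ex p + 2 * Fx p)
        / (2 * E p * Real.sqrt (G p - F p ^ 2 / E p)))
    (hQ₁ : ∀ p, Q₁ p = (αy p - (F p / E p) * αx p) / Real.sqrt (G p - F p ^ 2 / E p))
    (hQ₂ : ∀ p, Q₂ p = αx p / Real.sqrt (E p))
    -- L_γ K and L_β K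
    (LγK LβK : ℝ × ℝ → ℝ)
    (hLγK : ∀ p, LγK p = K p * (Real.cos (α p) * Kx p / Real.sqrt (E p)
        + Real.sin (α p) * (Ky p - (F p / E p) * Kx p)
          / Real.sqrt (G p - F p ^ 2 / E p)))
    (hLβK : ∀ p, LβK p = K p * (-(Real.sin (α p)) * Kx p / Real.sqrt (E p)
        + Real.cos (α p) * (Ky p - (F p / E p) * Kx p)
          / Real.sqrt (G p - F p ^ 2 / E p)))
    -- partial derivatives of the vector fields f₁ and f₂
    (f₁x f₁y f₂x f₂y : ℝ × ℝ → EuclideanSpace ℝ (Fin 3))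
    (hf₁x : ∀ p ∈ D, HasDerivAt (fun t : ℝ => f₁ (t, p.2)) (f₁x p) p.1)
    (hf₁y : ∀ p ∈ D, HasDerivAt (fun t : ℝ => f₁ (p.1, t)) (f₁y p) p.2)
    (hf₂x : ∀ p ∈ D, HasDerivAt (fun t : ℝ => f₂ (t, p.2)) (f₂x p) p.1)
    (hf₂y : ∀ p ∈ D, HasDerivAt (fun t : ℝ => f₂ (p.1, t)) (f₂y p) p.2)
    -- L_β f₁ and L_γ f₂
    (Lβf₁ Lγf₂ : ℝ × ℝ → EuclideanSpace ℝ (Fin 3))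
    (hLβf₁ : ∀ p, Lβf₁ p = K p • ((-(Real.sin (α p)) / Real.sqrt (E p)) • f₁x p
        + (Real.cos (α p) / Real.sqrt (G p - F p ^ 2 / E p))
          • (f₁y p - (F p / E p) • f₁x p)))
    (hLγf₂ : ∀ p, Lγf₂ p = K p • ((Real.cos (α p) / Real.sqrt (E p)) • f₂x p
        + (Real.sin (α p) / Real.sqrt (G p - F p ^ 2 / E p))
          • (f₂y p - (F p / E p) • f₂x p))) :
    ∀ p ∈ D,
      Lβf₁ p - Lγf₂ p
        = (LβK p * Real.cos (α p) + LγK p * Real.sin (α p)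
            + K p ^ 2 * (P₂ p + Q₂ p)) • D₁ p
        + (LβK p * Real.sin (α p) - LγK p * Real.cos (α p)
            + K p ^ 2 * (P₁ p + Q₁ p)) • D₂ p := by
  intro p hp
  classical
  -- second partial derivatives of f
  obtain ⟨X1, X2, X3, hX1, hX2y, hX2x, hX3⟩ := second_partials hD hf hfx hfy hp
  -- differentiability of F and G on D, to get y-derivatives of F and G
  have hdf : ∀ q ∈ D, DifferentiableAt ℝ f q := fun q hq =>
    (hf.contDiffAt (hD.mem_nhds hq)).differentiableAt (by simp)
  have hfx_eq : ∀ q ∈ D, fx q = fderiv ℝ f q (1, 0) := fun q hq =>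
    (hfx q hq).unique (lineX_hasDerivAt (hdf q hq))
  have hfy_eq : ∀ q ∈ D, fy q = fderiv ℝ f q (0, 1) := fun q hq =>
    (hfy q hq).unique (lineY_hasDerivAt (hdf q hq))
  have hf'c : ContDiffOn ℝ (⊤ : ℕ∞) (fderiv ℝ f) D := hf.fderiv_of_isOpen hD (by simp)
  have happc : ∀ v : ℝ × ℝ, ContDiffOn ℝ (⊤ : ℕ∞) (fun q => fderiv ℝ f q v) D := fun v =>
    (ContinuousLinearMap.apply ℝ (EuclideanSpace ℝ (Fin 3)) v).contDiff.comp_contDiffOn hf'c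
  have hFc : ContDiffOn ℝ (⊤ : ℕ∞) F D := by
    refine ContDiffOn.congr (ContDiffOn.inner ℝ (happc (1,0)) (happc (0,1))) ?_
    intro q hq
    rw [hF q, hfx_eq q hq, hfy_eq q hq]
  have hGc : ContDiffOn ℝ (⊤ : ℕ∞) G D := by
    refine ContDiffOn.congr (ContDiffOn.inner ℝ (happc (0,1)) (happc (0,1))) ?_
    intro q hq
    rw [hG q, hfy_eq q hq]
  have hFy : HasDerivAt (fun t : ℝ => F (p.1, t)) (fderiv ℝ F p (0,1)) p.2 :=
    lineY_hasDerivAt ((hFc.contDiffAt (hD.mem_nhds hp)).differentiableAt (by simp))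
  have hGy : HasDerivAt (fun t : ℝ => G (p.1, t)) (fderiv ℝ G p (0,1)) p.2 :=
    lineY_hasDerivAt ((hGc.contDiffAt (hD.mem_nhds hp)).differentiableAt (by simp))
  set Fy := fderiv ℝ F p (0,1) with hFydef
  set Gy := fderiv ℝ G p (0,1) with hGydef
  -- positivity
  have hepos : 0 < E (p.1, p.2) := hEpos p hp
  have hwpos : 0 < G (p.1, p.2) - F (p.1, p.2) ^ 2 / E (p.1, p.2) := by
    have h1 := hdisc p hp
    have h2 := hEpos p hp
    have : G p - F p ^ 2 / E p = (E p * G p - F p ^ 2) / E p := by field_simp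
    show 0 < G p - F p ^ 2 / E p
    rw [this]
    positivity
  -- the four derivative computations
  have h1x := main_deriv (fun t => E (t,p.2)) (fun t => F (t,p.2)) (fun t => G (t,p.2))
    (fun t => K (t,p.2)) (fun t => Real.cos (α (t,p.2))) (fun t => Real.sin (α (t,p.2)))
    (fun t => fx (t,p.2)) (fun t => fy (t,p.2)) p.1
    (Ex p) (Fx p) (Gx p) (Kx p) (-Real.sin (α p) * αx p) (Real.cos (α p) * αx p) X1 X2
    (hEx p hp) (hFx p hp) (hGx p hp) (hKx p hp) ((hαx p hp).cos) ((hαx p hp).sin)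
    hX1 hX2x hepos hwpos
  have h1y := main_deriv (fun t => E (p.1,t)) (fun t => F (p.1,t)) (fun t => G (p.1,t))
    (fun t => K (p.1,t)) (fun t => Real.cos (α (p.1,t))) (fun t => Real.sin (α (p.1,t)))
    (fun t => fx (p.1,t)) (fun t => fy (p.1,t)) p.2
    (Ey p) Fy Gy (Ky p) (-Real.sin (α p) * αy p) (Real.cos (α p) * αy p) X2 X3
    (hEy p hp) hFy hGy (hKy p hp) ((hαy p hp).cos) ((hαy p hp).sin)
    hX2y hX3 hepos hwpos
  have h2x := main_deriv (fun t => E (t,p.2)) (fun t => F (t,p.2)) (fun t => G (t,p.2))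
    (fun t => K (t,p.2)) (fun t => -Real.sin (α (t,p.2))) (fun t => Real.cos (α (t,p.2)))
    (fun t => fx (t,p.2)) (fun t => fy (t,p.2)) p.1
    (Ex p) (Fx p) (Gx p) (Kx p) (-(Real.cos (α p) * αx p)) (-Real.sin (α p) * αx p) X1 X2
    (hEx p hp) (hFx p hp) (hGx p hp) (hKx p hp) ((hαx p hp).sin).neg ((hαx p hp).cos)
    hX1 hX2x hepos hwpos
  have h2y := main_deriv (fun t => E (p.1,t)) (fun t => F (p.1,t)) (fun t => G (p.1,t))
    (fun t => K (p.1,t)) (fun t => -Real.sin (α (p.1,t))) (fun t => Real.cos (α (p.1,t)))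
    (fun t => fx (p.1,t)) (fun t => fy (p.1,t)) p.2
    (Ey p) Fy Gy (Ky p) (-(Real.cos (α p) * αy p)) (-Real.sin (α p) * αy p) X2 X3
    (hEy p hp) hFy hGy (hKy p hp) ((hαy p hp).sin).neg ((hαy p hp).cos)
    hX2y hX3 hepos hwpos
  have e1x := (hf₁x p hp).unique (h1x.congr_of_eventuallyEq
    (Filter.Eventually.of_forall (fun t => by simp only [hf₁, hD₁, hD₂])))
  have e1y := (hf₁y p hp).unique (h1y.congr_of_eventuallyEq
    (Filter.Eventually.of_forall (fun t => by simp only [hf₁, hD₁, hD₂])))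
  have e2x := (hf₂x p hp).unique (h2x.congr_of_eventuallyEq
    (Filter.Eventually.of_forall (fun t => by simp only [hf₂, hD₁, hD₂])))
  have e2y := (hf₂y p hp).unique (h2y.congr_of_eventuallyEq
    (Filter.Eventually.of_forall (fun t => by simp only [hf₂, hD₁, hD₂])))
  rw [hLβf₁ p, hLγf₂ p, e1x, e1y, e2x, e2y, hD₁ p, hD₂ p, hLβK p, hLγK p,
    hP₁ p, hP₂ p, hQ₁ p, hQ₂ p]
  simp only [Prod.mk.eta]
  have hE0 := hEpos p hp
  have hW0 : 0 < G p - F p ^ 2 / E p := hwpos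
  have ha2 : E p = Real.sqrt (E p) ^ 2 := (Real.sq_sqrt hE0.le).symm
  have hb2 : G p - F p ^ 2 / E p = Real.sqrt (G p - F p ^ 2 / E p) ^ 2 :=
    (Real.sq_sqrt hW0.le).symm
  have hapos : 0 < Real.sqrt (E p) := Real.sqrt_pos.2 hE0
  have hbpos : 0 < Real.sqrt (G p - F p ^ 2 / E p) := Real.sqrt_pos.2 hW0
  set a := Real.sqrt (E p) with hadef
  set b := Real.sqrt (G p - F p ^ 2 / E p) with hbdef
  rw [hb2, ha2]
  have hcs : Real.cos (α p) ^ 2 + Real.sin (α p) ^ 2 = 1 := Real.cos_sq_add_sin_sq (α p)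
  set c := Real.cos (α p)
  set s := Real.sin (α p)
  match_scalars
  · field_simp
    linear_combination (2 * K p ^ 2 * a ^ 6 * b ^ 4 * αx p - 1 * F p * Gx p * K p ^ 2 * a ^ 5 * b + 2 * F p ^ 2 * Fx p * K p ^ 2 * a ^ 3 * b - 1 * Ex p * F p ^ 3 * K p ^ 2 * a * b + 2 * Fx p * K p ^ 2 * a ^ 5 * b ^ 3 - 1 * Ex p * F p * K p ^ 2 * a ^ 3 * b ^ 3 - 1 * Ey p * K p ^ 2 * a ^ 5 * b ^ 3 - 2 * F p * K p ^ 2 * a ^ 6 * b ^ 2 * αy p + 2 * F p ^ 2 * K p ^ 2 * a ^ 4 * b ^ 2 * αx p) * hcs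
  · field_simp
    linear_combination (1 * Gx p * K p ^ 2 * a ^ 5 * b - 2 * F p * Fx p * K p ^ 2 * a ^ 3 * b + 1 * Ex p * F p ^ 2 * K p ^ 2 * a * b + 2 * K p ^ 2 * a ^ 6 * b ^ 2 * αy p - 2 * F p * K p ^ 2 * a ^ 4 * b ^ 2 * αx p) * hcs
  · field_simp
    ring
  · field_simp
    ring
  · field_simp
    ring
end

section
/- The compatibility condition L_β f₁ = L_γ f₂ holds at every point of D if and only if K satisfies the two first-order equations L_β K · cos α + L_γ K · sin α = −K²(P₂ + Q₂) and L_β K · sin α − L_γ K · cos α = −K²(P₁ + Q₁) at every point of D. -/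
set_option maxHeartbeats 1000000000

open scoped RealInnerProductSpace in
theorem helperDeriv {V : Type*} [NormedAddCommGroup V] [NormedSpace ℝ V]
    {k c s se sw q : ℝ → ℝ} {u v : ℝ → V} {t : ℝ}
    {k' c' s' se' sw' q' : ℝ} {u' v' : V}
    (hk : HasDerivAt k k' t) (hc : HasDerivAt c c' t) (hs : HasDerivAt s s' t)
    (hse : HasDerivAt se se' t) (hsw : HasDerivAt sw sw' t)
    (hq : HasDerivAt q q' t) (hu : HasDerivAt u u' t) (hv : HasDerivAt v v' t)
    (hse0 : se t ≠ 0) (hsw0 : sw t ≠ 0) :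
    HasDerivAt (fun x => k x • (c x • ((se x)⁻¹ • u x) + s x • ((sw x)⁻¹ • (v x - q x • u x))))
      (k t • ((c t • ((se t)⁻¹ • u' + (-se' / se t ^ 2) • u t) + c' • ((se t)⁻¹ • u t))
          + (s t • ((sw t)⁻¹ • (v' - (q t • u' + q' • u t)) + (-sw' / sw t ^ 2) • (v t - q t • u t))
          + s' • ((sw t)⁻¹ • (v t - q t • u t))))
        + k' • (c t • ((se t)⁻¹ • u t) + s t • ((sw t)⁻¹ • (v t - q t • u t)))) t :=
  hk.smul ((hc.smul ((hse.inv hse0).smul hu)).add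
    (hs.smul ((hsw.inv hsw0).smul (hv.sub (hq.smul hu)))))


/-!
STATEMENT 6: The compatibility condition L_β f₁ = L_γ f₂ holds at every point of D
if and only if K satisfies the two first-order equations
L_β K · cos α + L_γ K · sin α = −K²(P₂ + Q₂) and
L_β K · sin α − L_γ K · cos α = −K²(P₁ + Q₁) at every point of D.
-/

theorem stmt_6
    (D : Set (ℝ × ℝ)) (hD : IsOpen D)
    (f fx fy : ℝ × ℝ → EuclideanSpace ℝ (Fin 3))
    (hf : ContDiffOn ℝ (⊤ : ℕ∞) f D)
    (hfx : ∀ p ∈ D, HasDerivAt (fun t : ℝ => f (t, p.2)) (fx p) p.1)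
    (hfy : ∀ p ∈ D, HasDerivAt (fun t : ℝ => f (p.1, t)) (fy p) p.2)
    (hind : ∀ p ∈ D, LinearIndependent ℝ ![fx p, fy p])
    (E F G : ℝ × ℝ → ℝ)
    (hE : ∀ p, E p = (inner ℝ (fx p) (fx p) : ℝ))
    (hF : ∀ p, F p = (inner ℝ (fx p) (fy p) : ℝ))
    (hG : ∀ p, G p = (inner ℝ (fy p) (fy p) : ℝ))
    (hEpos : ∀ p ∈ D, 0 < E p)
    (hdisc : ∀ p ∈ D, 0 < E p * G p - F p ^ 2)
    (K α : ℝ × ℝ → ℝ)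
    (hK : ContDiffOn ℝ (⊤ : ℕ∞) K D) (hKpos : ∀ p ∈ D, 0 < K p)
    (hα : ContDiffOn ℝ (⊤ : ℕ∞) α D)
    (D₁ D₂ f₁ f₂ : ℝ × ℝ → EuclideanSpace ℝ (Fin 3))
    (hD₁ : ∀ p, D₁ p = (Real.sqrt (E p))⁻¹ • fx p)
    (hD₂ : ∀ p, D₂ p = (Real.sqrt (G p - F p ^ 2 / E p))⁻¹ • (fy p - (F p / E p) • fx p))
    (hf₁ : ∀ p, f₁ p = K p • (Real.cos (α p) • D₁ p + Real.sin (α p) • D₂ p))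
    (hf₂ : ∀ p, f₂ p = K p • ((-Real.sin (α p)) • D₁ p + Real.cos (α p) • D₂ p))
    -- partial derivatives of the scalar data E, F, G, α, K
    (Ex Ey Fx Gx αx αy Kx Ky : ℝ × ℝ → ℝ)
    (hEx : ∀ p ∈ D, HasDerivAt (fun t : ℝ => E (t, p.2)) (Ex p) p.1)
    (hEy : ∀ p ∈ D, HasDerivAt (fun t : ℝ => E (p.1, t)) (Ey p) p.2)
    (hFx : ∀ p ∈ D, HasDerivAt (fun t : ℝ => F (t, p.2)) (Fx p) p.1)
    (hGx : ∀ p ∈ D, HasDerivAt (fun t : ℝ => G (t, p.2)) (Gx p) p.1)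
    (hαx : ∀ p ∈ D, HasDerivAt (fun t : ℝ => α (t, p.2)) (αx p) p.1)
    (hαy : ∀ p ∈ D, HasDerivAt (fun t : ℝ => α (p.1, t)) (αy p) p.2)
    (hKx : ∀ p ∈ D, HasDerivAt (fun t : ℝ => K (t, p.2)) (Kx p) p.1)
    (hKy : ∀ p ∈ D, HasDerivAt (fun t : ℝ => K (p.1, t)) (Ky p) p.2)
    -- the quantities P₁, P₂, Q₁, Q₂
    (P₁ P₂ Q₁ Q₂ : ℝ × ℝ → ℝ)
    (hP₁ : ∀ p, P₁ p = ((F p ^ 2 / E p ^ 2) * Ex p - 2 * (F p / E p) * Fx p + Gx p)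
        / (2 * (G p - F p ^ 2 / E p) * Real.sqrt (E p)))
    (hP₂ : ∀ p, P₂ p = (-Ey p - (F p / E p) * Ex p + 2 * Fx p)
        / (2 * E p * Real.sqrt (G p - F p ^ 2 / E p)))
    (hQ₁ : ∀ p, Q₁ p = (αy p - (F p / E p) * αx p) / Real.sqrt (G p - F p ^ 2 / E p))
    (hQ₂ : ∀ p, Q₂ p = αx p / Real.sqrt (E p))
    -- L_γ K and L_β K
    (LγK LβK : ℝ × ℝ → ℝ)
    (hLγK : ∀ p, LγK p = K p * (Real.cos (α p) * Kx p / Real.sqrt (E p)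
        + Real.sin (α p) * (Ky p - (F p / E p) * Kx p)
          / Real.sqrt (G p - F p ^ 2 / E p)))
    (hLβK : ∀ p, LβK p = K p * (-(Real.sin (α p)) * Kx p / Real.sqrt (E p)
        + Real.cos (α p) * (Ky p - (F p / E p) * Kx p)
          / Real.sqrt (G p - F p ^ 2 / E p)))
    -- partial derivatives of the vector fields f₁ and f₂
    (f₁x f₁y f₂x f₂y : ℝ × ℝ → EuclideanSpace ℝ (Fin 3))
    (hf₁x : ∀ p ∈ D, HasDerivAt (fun t : ℝ => f₁ (t, p.2)) (f₁x p) p.1)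
    (hf₁y : ∀ p ∈ D, HasDerivAt (fun t : ℝ => f₁ (p.1, t)) (f₁y p) p.2)
    (hf₂x : ∀ p ∈ D, HasDerivAt (fun t : ℝ => f₂ (t, p.2)) (f₂x p) p.1)
    (hf₂y : ∀ p ∈ D, HasDerivAt (fun t : ℝ => f₂ (p.1, t)) (f₂y p) p.2)
    -- L_β f₁ and L_γ f₂
    (Lβf₁ Lγf₂ : ℝ × ℝ → EuclideanSpace ℝ (Fin 3))
    (hLβf₁ : ∀ p, Lβf₁ p = K p • ((-(Real.sin (α p)) / Real.sqrt (E p)) • f₁x p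
        + (Real.cos (α p) / Real.sqrt (G p - F p ^ 2 / E p))
          • (f₁y p - (F p / E p) • f₁x p)))
    (hLγf₂ : ∀ p, Lγf₂ p = K p • ((Real.cos (α p) / Real.sqrt (E p)) • f₂x p
        + (Real.sin (α p) / Real.sqrt (G p - F p ^ 2 / E p))
          • (f₂y p - (F p / E p) • f₂x p))) :
    (∀ p ∈ D, Lβf₁ p = Lγf₂ p)
      ↔ (∀ p ∈ D,
          LβK p * Real.cos (α p) + LγK p * Real.sin (α p)
            = -(K p ^ 2) * (P₂ p + Q₂ p)
          ∧ LβK p * Real.sin (α p) - LγK p * Real.cos (α p)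
            = -(K p ^ 2) * (P₁ p + Q₁ p)) := by
  have key : ∀ p ∈ D, (Lβf₁ p = Lγf₂ p) ↔
      ((LβK p * Real.cos (α p) + LγK p * Real.sin (α p) = -(K p ^ 2) * (P₂ p + Q₂ p))
        ∧ (LβK p * Real.sin (α p) - LγK p * Real.cos (α p) = -(K p ^ 2) * (P₁ p + Q₁ p))) := by
    intro p hp
    have hmem : D ∈ nhds p := hD.mem_nhds hp
    have hEp : 0 < E p := hEpos p hp
    have hKp : 0 < K p := hKpos p hp
    have hWp : 0 < G p - F p ^ 2 / E p := by
      have h1 := hdisc p hp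
      have h2 : G p - F p ^ 2 / E p = (E p * G p - F p ^ 2) / E p := by field_simp
      rw [h2]; positivity
    have hE0 : E p ≠ 0 := hEp.ne'
    have hW0 : G p - F p ^ 2 / E p ≠ 0 := hWp.ne'
    -- second derivatives of f
    have hfq : ∀ q ∈ D, fx q = fderiv ℝ f q (1, 0) := by
      intro q hq
      have hdf : HasFDerivAt f (fderiv ℝ f q) q :=
        ((hf.contDiffAt (hD.mem_nhds hq)).differentiableAt (by simp)).hasFDerivAt
      have hline : HasDerivAt (fun t : ℝ => ((t, q.2) : ℝ × ℝ)) ((1 : ℝ), (0 : ℝ)) q.1 :=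
        HasDerivAt.prodMk (hasDerivAt_id q.1) (hasDerivAt_const q.1 q.2)
      exact (hfx q hq).unique (hdf.comp_hasDerivAt q.1 hline)
    have hfq' : ∀ q ∈ D, fy q = fderiv ℝ f q (0, 1) := by
      intro q hq
      have hdf : HasFDerivAt f (fderiv ℝ f q) q :=
        ((hf.contDiffAt (hD.mem_nhds hq)).differentiableAt (by simp)).hasFDerivAt
      have hline : HasDerivAt (fun t : ℝ => ((q.1, t) : ℝ × ℝ)) ((0 : ℝ), (1 : ℝ)) q.2 :=
        HasDerivAt.prodMk (hasDerivAt_const q.2 q.1) (hasDerivAt_id q.2)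
      exact (hfy q hq).unique (hdf.comp_hasDerivAt q.2 hline)
    have hgd : DifferentiableAt ℝ (fderiv ℝ f) p :=
      (((hf.contDiffAt hmem).fderiv_right (m := 1) ((WithTop.coe_le_coe.mpr le_top))).differentiableAt one_ne_zero)
    have hsymm : ∀ v w, fderiv ℝ (fderiv ℝ f) p v w = fderiv ℝ (fderiv ℝ f) p w v :=
      fun v w => ((hf.contDiffAt hmem).isSymmSndFDerivAt (by rw [minSmoothness_of_isRCLikeNormedField]; exact WithTop.coe_le_coe.mpr le_top)) v w
    have hgx : HasDerivAt (fun t : ℝ => fderiv ℝ f (t, p.2)) (fderiv ℝ (fderiv ℝ f) p (1, 0)) p.1 :=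
      hgd.hasFDerivAt.comp_hasDerivAt p.1 (HasDerivAt.prodMk (hasDerivAt_id p.1) (hasDerivAt_const p.1 p.2))
    have hgy : HasDerivAt (fun t : ℝ => fderiv ℝ f (p.1, t)) (fderiv ℝ (fderiv ℝ f) p (0, 1)) p.2 :=
      hgd.hasFDerivAt.comp_hasDerivAt p.2 (HasDerivAt.prodMk (hasDerivAt_const p.2 p.1) (hasDerivAt_id p.2))
    have hDx : ∀ᶠ t in nhds p.1, (t, p.2) ∈ D := by
      have hcont : Continuous (fun t : ℝ => ((t, p.2) : ℝ × ℝ)) := by fun_prop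
      exact hcont.continuousAt.preimage_mem_nhds hmem
    have hDy : ∀ᶠ t in nhds p.2, (p.1, t) ∈ D := by
      have hcont : Continuous (fun t : ℝ => ((p.1, t) : ℝ × ℝ)) := by fun_prop
      exact hcont.continuousAt.preimage_mem_nhds hmem
    obtain ⟨fxxv, hfxxv⟩ : ∃ z, fderiv ℝ (fderiv ℝ f) p (1, 0) (1, 0) = z := ⟨_, rfl⟩
    obtain ⟨Mv, hMv⟩ : ∃ z, fderiv ℝ (fderiv ℝ f) p (1, 0) (0, 1) = z := ⟨_, rfl⟩
    obtain ⟨fyyv, hfyyv⟩ : ∃ z, fderiv ℝ (fderiv ℝ f) p (0, 1) (0, 1) = z := ⟨_, rfl⟩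
    have hxx : HasDerivAt (fun t => fx (t, p.2)) fxxv p.1 := by
      have h1 : HasDerivAt (fun t : ℝ => fderiv ℝ f (t, p.2) (1, 0)) fxxv p.1 := by
        have := hgx.clm_apply (hasDerivAt_const p.1 ((1 : ℝ), (0 : ℝ)))
        simpa [hfxxv] using this
      exact h1.congr_of_eventuallyEq (by filter_upwards [hDx] with t ht using hfq _ ht)
    have hxy : HasDerivAt (fun t => fx (p.1, t)) Mv p.2 := by
      have h1 : HasDerivAt (fun t : ℝ => fderiv ℝ f (p.1, t) (1, 0)) Mv p.2 := by
        have := hgy.clm_apply (hasDerivAt_const p.2 ((1 : ℝ), (0 : ℝ)))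
        simpa [hsymm (0,1) (1,0), hMv] using this
      exact h1.congr_of_eventuallyEq (by filter_upwards [hDy] with t ht using hfq _ ht)
    have hyx : HasDerivAt (fun t => fy (t, p.2)) Mv p.1 := by
      have h1 : HasDerivAt (fun t : ℝ => fderiv ℝ f (t, p.2) (0, 1)) Mv p.1 := by
        have := hgx.clm_apply (hasDerivAt_const p.1 ((0 : ℝ), (1 : ℝ)))
        simpa [hMv] using this
      exact h1.congr_of_eventuallyEq (by filter_upwards [hDx] with t ht using hfq' _ ht)
    have hyy : HasDerivAt (fun t => fy (p.1, t)) fyyv p.2 := by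
      have h1 : HasDerivAt (fun t : ℝ => fderiv ℝ f (p.1, t) (0, 1)) fyyv p.2 := by
        have := hgy.clm_apply (hasDerivAt_const p.2 ((0 : ℝ), (1 : ℝ)))
        simpa [hfyyv] using this
      exact h1.congr_of_eventuallyEq (by filter_upwards [hDy] with t ht using hfq' _ ht)
    -- y-derivatives of F and G
    obtain ⟨Fyv, hFyv⟩ : ∃ z, (inner ℝ (fx p) fyyv + inner ℝ Mv (fy p) : ℝ) = z := ⟨_, rfl⟩
    obtain ⟨Gyv, hGyv⟩ : ∃ z, (inner ℝ (fy p) fyyv + inner ℝ fyyv (fy p) : ℝ) = z := ⟨_, rfl⟩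
    have hFyD : HasDerivAt (fun t => F (p.1, t)) Fyv p.2 := by
      have hFeq : (fun t => F (p.1, t)) = fun t => (inner ℝ (fx (p.1, t)) (fy (p.1, t)) : ℝ) :=
        funext fun t => hF (p.1, t)
      rw [hFeq, ← hFyv]
      exact HasDerivAt.inner ℝ hxy hyy
    have hGyD : HasDerivAt (fun t => G (p.1, t)) Gyv p.2 := by
      have hGeq : (fun t => G (p.1, t)) = fun t => (inner ℝ (fy (p.1, t)) (fy (p.1, t)) : ℝ) :=
        funext fun t => hG (p.1, t)
      rw [hGeq, ← hGyv]
      exact HasDerivAt.inner ℝ hyy hyy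
    -- the four derivatives of f₁ and f₂
    have hfun1x : (fun t : ℝ => f₁ (t, p.2)) = (fun t => K (t, p.2) •
        (Real.cos (α (t, p.2)) • ((Real.sqrt (E (t, p.2)))⁻¹ • fx (t, p.2))
          + Real.sin (α (t, p.2)) • ((Real.sqrt (G (t, p.2) - F (t, p.2) ^ 2 / E (t, p.2)))⁻¹ •
            (fy (t, p.2) - (F (t, p.2) / E (t, p.2)) • fx (t, p.2))))) := by
      funext t; rw [hf₁, hD₁, hD₂]
    have hfun1y : (fun t : ℝ => f₁ (p.1, t)) = (fun t => K (p.1, t) •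
        (Real.cos (α (p.1, t)) • ((Real.sqrt (E (p.1, t)))⁻¹ • fx (p.1, t))
          + Real.sin (α (p.1, t)) • ((Real.sqrt (G (p.1, t) - F (p.1, t) ^ 2 / E (p.1, t)))⁻¹ •
            (fy (p.1, t) - (F (p.1, t) / E (p.1, t)) • fx (p.1, t))))) := by
      funext t; rw [hf₁, hD₁, hD₂]
    have hfun2x : (fun t : ℝ => f₂ (t, p.2)) = (fun t => K (t, p.2) •
        ((-Real.sin (α (t, p.2))) • ((Real.sqrt (E (t, p.2)))⁻¹ • fx (t, p.2))
          + Real.cos (α (t, p.2)) • ((Real.sqrt (G (t, p.2) - F (t, p.2) ^ 2 / E (t, p.2)))⁻¹ •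
            (fy (t, p.2) - (F (t, p.2) / E (t, p.2)) • fx (t, p.2))))) := by
      funext t; rw [hf₂, hD₁, hD₂]
    have hfun2y : (fun t : ℝ => f₂ (p.1, t)) = (fun t => K (p.1, t) •
        ((-Real.sin (α (p.1, t))) • ((Real.sqrt (E (p.1, t)))⁻¹ • fx (p.1, t))
          + Real.cos (α (p.1, t)) • ((Real.sqrt (G (p.1, t) - F (p.1, t) ^ 2 / E (p.1, t)))⁻¹ •
            (fy (p.1, t) - (F (p.1, t) / E (p.1, t)) • fx (p.1, t))))) := by
      funext t; rw [hf₂, hD₁, hD₂]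
    have hsqE0 : Real.sqrt (E p) ≠ 0 := (Real.sqrt_pos.mpr hEp).ne'
    have hsqW0 : Real.sqrt (G p - F p ^ 2 / E p) ≠ 0 := (Real.sqrt_pos.mpr hWp).ne'
    have hX1 : f₁x p = K p • ((Real.cos (α p) • ((Real.sqrt (E p))⁻¹ • fxxv + (-(Ex p / (2 * Real.sqrt (E p))) / Real.sqrt (E p) ^ 2) • fx p) + (-Real.sin (α p) * αx p) • ((Real.sqrt (E p))⁻¹ • fx p))
      + (Real.sin (α p) • ((Real.sqrt (G p - F p ^ 2 / E p))⁻¹ • (Mv - ((F p / E p) • fxxv + ((Fx p * E p - F p * Ex p) / E p ^ 2) • fx p)) + (-((Gx p - (((2:ℕ):ℝ) * F p ^ (2 - 1) * Fx p * E p - F p ^ 2 * Ex p) / E p ^ 2) / (2 * Real.sqrt (G p - F p ^ 2 / E p))) / Real.sqrt (G p - F p ^ 2 / E p) ^ 2) • (fy p - (F p / E p) • fx p))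
      + (Real.cos (α p) * αx p) • ((Real.sqrt (G p - F p ^ 2 / E p))⁻¹ • (fy p - (F p / E p) • fx p))))
      + Kx p • (Real.cos (α p) • ((Real.sqrt (E p))⁻¹ • fx p) + Real.sin (α p) • ((Real.sqrt (G p - F p ^ 2 / E p))⁻¹ • (fy p - (F p / E p) • fx p))) := by
      refine (hf₁x p hp).unique ?_
      rw [hfun1x]
      exact helperDeriv (hKx p hp) ((hαx p hp).cos) ((hαx p hp).sin)
        ((hEx p hp).sqrt hE0)
        (((hGx p hp).sub (((hFx p hp).pow 2).div (hEx p hp) hE0)).sqrt hW0)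
        ((hFx p hp).div (hEx p hp) hE0) hxx hyx hsqE0 hsqW0
    have hY1 : f₁y p = K p • ((Real.cos (α p) • ((Real.sqrt (E p))⁻¹ • Mv + (-(Ey p / (2 * Real.sqrt (E p))) / Real.sqrt (E p) ^ 2) • fx p) + (-Real.sin (α p) * αy p) • ((Real.sqrt (E p))⁻¹ • fx p))
      + (Real.sin (α p) • ((Real.sqrt (G p - F p ^ 2 / E p))⁻¹ • (fyyv - ((F p / E p) • Mv + ((Fyv * E p - F p * Ey p) / E p ^ 2) • fx p)) + (-((Gyv - (((2:ℕ):ℝ) * F p ^ (2 - 1) * Fyv * E p - F p ^ 2 * Ey p) / E p ^ 2) / (2 * Real.sqrt (G p - F p ^ 2 / E p))) / Real.sqrt (G p - F p ^ 2 / E p) ^ 2) • (fy p - (F p / E p) • fx p))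
      + (Real.cos (α p) * αy p) • ((Real.sqrt (G p - F p ^ 2 / E p))⁻¹ • (fy p - (F p / E p) • fx p))))
      + Ky p • (Real.cos (α p) • ((Real.sqrt (E p))⁻¹ • fx p) + Real.sin (α p) • ((Real.sqrt (G p - F p ^ 2 / E p))⁻¹ • (fy p - (F p / E p) • fx p))) := by
      refine (hf₁y p hp).unique ?_
      rw [hfun1y]
      exact helperDeriv (hKy p hp) ((hαy p hp).cos) ((hαy p hp).sin)
        ((hEy p hp).sqrt hE0)
        ((hGyD.sub ((hFyD.pow 2).div (hEy p hp) hE0)).sqrt hW0)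
        (hFyD.div (hEy p hp) hE0) hxy hyy hsqE0 hsqW0
    have hX2 : f₂x p = K p • (((-Real.sin (α p)) • ((Real.sqrt (E p))⁻¹ • fxxv + (-(Ex p / (2 * Real.sqrt (E p))) / Real.sqrt (E p) ^ 2) • fx p) + (-(Real.cos (α p) * αx p)) • ((Real.sqrt (E p))⁻¹ • fx p))
      + (Real.cos (α p) • ((Real.sqrt (G p - F p ^ 2 / E p))⁻¹ • (Mv - ((F p / E p) • fxxv + ((Fx p * E p - F p * Ex p) / E p ^ 2) • fx p)) + (-((Gx p - (((2:ℕ):ℝ) * F p ^ (2 - 1) * Fx p * E p - F p ^ 2 * Ex p) / E p ^ 2) / (2 * Real.sqrt (G p - F p ^ 2 / E p))) / Real.sqrt (G p - F p ^ 2 / E p) ^ 2) • (fy p - (F p / E p) • fx p))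
      + (-Real.sin (α p) * αx p) • ((Real.sqrt (G p - F p ^ 2 / E p))⁻¹ • (fy p - (F p / E p) • fx p))))
      + Kx p • ((-Real.sin (α p)) • ((Real.sqrt (E p))⁻¹ • fx p) + Real.cos (α p) • ((Real.sqrt (G p - F p ^ 2 / E p))⁻¹ • (fy p - (F p / E p) • fx p))) := by
      refine (hf₂x p hp).unique ?_
      rw [hfun2x]
      exact helperDeriv (hKx p hp) (((hαx p hp).sin).neg) ((hαx p hp).cos)
        ((hEx p hp).sqrt hE0)
        (((hGx p hp).sub (((hFx p hp).pow 2).div (hEx p hp) hE0)).sqrt hW0)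
        ((hFx p hp).div (hEx p hp) hE0) hxx hyx hsqE0 hsqW0
    have hY2 : f₂y p = K p • (((-Real.sin (α p)) • ((Real.sqrt (E p))⁻¹ • Mv + (-(Ey p / (2 * Real.sqrt (E p))) / Real.sqrt (E p) ^ 2) • fx p) + (-(Real.cos (α p) * αy p)) • ((Real.sqrt (E p))⁻¹ • fx p))
      + (Real.cos (α p) • ((Real.sqrt (G p - F p ^ 2 / E p))⁻¹ • (fyyv - ((F p / E p) • Mv + ((Fyv * E p - F p * Ey p) / E p ^ 2) • fx p)) + (-((Gyv - (((2:ℕ):ℝ) * F p ^ (2 - 1) * Fyv * E p - F p ^ 2 * Ey p) / E p ^ 2) / (2 * Real.sqrt (G p - F p ^ 2 / E p))) / Real.sqrt (G p - F p ^ 2 / E p) ^ 2) • (fy p - (F p / E p) • fx p))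
      + (-Real.sin (α p) * αy p) • ((Real.sqrt (G p - F p ^ 2 / E p))⁻¹ • (fy p - (F p / E p) • fx p))))
      + Ky p • ((-Real.sin (α p)) • ((Real.sqrt (E p))⁻¹ • fx p) + Real.cos (α p) • ((Real.sqrt (G p - F p ^ 2 / E p))⁻¹ • (fy p - (F p / E p) • fx p))) := by
      refine (hf₂y p hp).unique ?_
      rw [hfun2y]
      exact helperDeriv (hKy p hp) (((hαy p hp).sin).neg) ((hαy p hp).cos)
        ((hEy p hp).sqrt hE0)
        ((hGyD.sub ((hFyD.pow 2).div (hEy p hp) hE0)).sqrt hW0)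
        (hFyD.div (hEy p hp) hE0) hxy hyy hsqE0 hsqW0
    -- abbreviations
    obtain ⟨sEv, hsEv⟩ : ∃ z, Real.sqrt (E p) = z := ⟨_, rfl⟩
    obtain ⟨sWv, hsWv⟩ : ∃ z, Real.sqrt (G p - F p ^ 2 / E p) = z := ⟨_, rfl⟩
    have hsEpos : 0 < sEv := hsEv ▸ Real.sqrt_pos.mpr hEp
    have hsWpos : 0 < sWv := hsWv ▸ Real.sqrt_pos.mpr hWp
    have hsE0 : sEv ≠ 0 := hsEpos.ne'
    have hsW0 : sWv ≠ 0 := hsWpos.ne'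
    have hE2 : E p = sEv ^ 2 := by rw [← hsEv, Real.sq_sqrt hEp.le]
    have hW2 : G p - F p ^ 2 / E p = sWv ^ 2 := by rw [← hsWv, Real.sq_sqrt hWp.le]
    have hcs : Real.sin (α p) ^ 2 + Real.cos (α p) ^ 2 = 1 := Real.sin_sq_add_cos_sq (α p)
    -- the main vector identity
    have hcomb : Lβf₁ p - Lγf₂ p =
        (((-1) * (F p)^3 * (K p)^2 * (Real.sin (α p))^2 * (Ex p) + (-1) * (F p)^3 * (K p)^2 * (Real.cos (α p))^2 * (Ex p) + (2) * (sEv)^2 * (F p)^2 * (K p)^2 * (Real.sin (α p))^2 * (Fx p) + (2) * (sEv)^2 * (F p)^2 * (K p)^2 * (Real.cos (α p))^2 * (Fx p) + (-1) * (sEv)^2 * (sWv)^2 * (F p) * (K p)^2 * (Real.sin (α p))^2 * (Ex p) + (-1) * (sEv)^2 * (sWv)^2 * (F p) * (K p)^2 * (Real.cos (α p))^2 * (Ex p) + (2) * (sEv)^3 * (sWv) * (F p)^2 * (K p)^2 * (Real.sin (α p))^2 * (αx p) + (2) * (sEv)^3 * (sWv) * (F p)^2 * (K p)^2 * (Real.cos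 (α p))^2 * (αx p) + (-1) * (sEv)^4 * (F p) * (K p)^2 * (Real.sin (α p))^2 * (Gx p) + (-1) * (sEv)^4 * (F p) * (K p)^2 * (Real.cos (α p))^2 * (Gx p) + (2) * (sEv)^4 * (sWv)^2 * (K p)^2 * (Real.sin (α p))^2 * (Fx p) + (-1) * (sEv)^4 * (sWv)^2 * (K p)^2 * (Real.sin (α p))^2 * (Ey p) + (2) * (sEv)^4 * (sWv)^2 * (K p)^2 * (Real.cos (α p))^2 * (Fx p) + (-1) * (sEv)^4 * (sWv)^2 * (K p)^2 * (Real.cos (α p))^2 * (Ey p) + (-2) * (sEv)^5 * (sWv) * (F p) * (K p)^2 * (Real.sin (α p))^2 * (αy p) + (-2) * (sEv)^5 * (sWv) * (F p) * (K p)^2 * (Real.cos (α p))^2 * (αy p) + (2) * (sEv)^5 * (sWv)^3 * (K p)^2 * (Real.sin (α p))^2 * (αx p) + (2) * (sEv)^5 * (sWv)^3 * (K p)^2 * (Real.cos (α p))^2 * (αx p) + (2) * (sEv)^6 * (sWv)^2 * (K p) * (Ky p) * (Real.sin (α p))^2 + (2) * (sEv)^6 * (sWv)^2 * (K p) * (Ky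 p) * (Real.cos (α p))^2) / (2 * sEv ^ 7 * sWv ^ 3)) • fx p
        + (((1) * (F p)^2 * (K p)^2 * (Real.sin (α p))^2 * (Ex p) + (1) * (F p)^2 * (K p)^2 * (Real.cos (α p))^2 * (Ex p) + (-2) * (sEv)^2 * (F p) * (K p)^2 * (Real.sin (α p))^2 * (Fx p) + (-2) * (sEv)^2 * (F p) * (K p)^2 * (Real.cos (α p))^2 * (Fx p) + (-2) * (sEv)^3 * (sWv) * (F p) * (K p)^2 * (Real.sin (α p))^2 * (αx p) + (-2) * (sEv)^3 * (sWv) * (F p) * (K p)^2 * (Real.cos (α p))^2 * (αx p) + (1) * (sEv)^4 * (K p)^2 * (Real.sin (α p))^2 * (Gx p) + (1) * (sEv)^4 * (K p)^2 * (Real.cos (α p))^2 * (Gx p) + (-2) * (sEv)^4 * (sWv)^2 * (K p) * (Kx p) * (Real.sin (α p))^2 + (-2) * (sEv)^4 * (sWv)^2 * (K p) * (Kx p) * (Real.cos (α p))^2 + (2) * (sEv)^5 * (sWv) * (K p)^2 * (Real.sin (α p))^2 * (αy p) + (2) * (sEv)^5 * (sWv) * (K p)^2 * (Real.cos (α p))^2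 * (αy p)) / (2 * sEv ^ 5 * sWv ^ 3)) • fy p := by
      rw [hLβf₁ p, hLγf₂ p, hX1, hY1, hX2, hY2]
      simp only [hsWv]
      simp only [hsEv]
      simp only [hE2]
      match_scalars <;> (field_simp; ring)
    have hd1 : (2 * sEv ^ 7 * sWv ^ 3 : ℝ) ≠ 0 := by positivity
    have hd2 : (2 * sEv ^ 5 * sWv ^ 3 : ℝ) ≠ 0 := by positivity
    have hd3 : (2 * sEv ^ 4 * sWv : ℝ) ≠ 0 := by positivity
    have hd4 : (2 * sEv ^ 5 * sWv ^ 2 : ℝ) ≠ 0 := by positivity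
    have h1 : (Lβf₁ p = Lγf₂ p) ↔ (((-1) * (F p)^3 * (K p)^2 * (Real.sin (α p))^2 * (Ex p) + (-1) * (F p)^3 * (K p)^2 * (Real.cos (α p))^2 * (Ex p) + (2) * (sEv)^2 * (F p)^2 * (K p)^2 * (Real.sin (α p))^2 * (Fx p) + (2) * (sEv)^2 * (F p)^2 * (K p)^2 * (Real.cos (α p))^2 * (Fx p) + (-1) * (sEv)^2 * (sWv)^2 * (F p) * (K p)^2 * (Real.sin (α p))^2 * (Ex p) + (-1) * (sEv)^2 * (sWv)^2 * (F p) * (K p)^2 * (Real.cos (α p))^2 * (Ex p) + (2) * (sEv)^3 * (sWv) * (F p)^2 * (K p)^2 * (Real.sin (α p))^2 * (αx p) + (2) * (sEv)^3 * (sWv) * (F p)^2 * (K p)^2 * (Real.cos (α p))^2 * (αx p) + (-1) * (sEv)^4 * (F p) * (K p)^2 * (Real.sin (α p))^2 * (Gx p) + (-1) * (sEv)^4 * (F p) * (K p)^2 * (Real.cos (α p))^2 * (Gx p) + (2) * (sEv)^4 * (sWv)^2 * (K p)^2 * (Real.sin (α p))^2 * (Fx p) + (-1) * (sEv)^4 *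 (sWv)^2 * (K p)^2 * (Real.sin (α p))^2 * (Ey p) + (2) * (sEv)^4 * (sWv)^2 * (K p)^2 * (Real.cos (α p))^2 * (Fx p) + (-1) * (sEv)^4 * (sWv)^2 * (K p)^2 * (Real.cos (α p))^2 * (Ey p) + (-2) * (sEv)^5 * (sWv) * (F p) * (K p)^2 * (Real.sin (α p))^2 * (αy p) + (-2) * (sEv)^5 * (sWv) * (F p) * (K p)^2 * (Real.cos (α p))^2 * (αy p) + (2) * (sEv)^5 * (sWv)^3 * (K p)^2 * (Real.sin (α p))^2 * (αx p) + (2) * (sEv)^5 * (sWv)^3 * (K p)^2 * (Real.cos (α p))^2 * (αx p) + (2) * (sEv)^6 * (sWv)^2 * (K p) * (Ky p) * (Real.sin (α p))^2 + (2) * (sEv)^6 * (sWv)^2 * (K p) * (Ky p) * (Real.cos (α p))^2) = 0 ∧ ((1) * (F p)^2 * (K p)^2 * (Real.sin (α p))^2 * (Ex p) + (1) * (F p)^2 * (K p)^2 * (Real.cos (α p))^2 * (Ex p) + (-2) * (sEv)^2 * (F p) * (K p)^2 * (Real.sin (α p))^2 * (Fx p) + (-2) * (sEv)^2 * (F p)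 * (K p)^2 * (Real.cos (α p))^2 * (Fx p) + (-2) * (sEv)^3 * (sWv) * (F p) * (K p)^2 * (Real.sin (α p))^2 * (αx p) + (-2) * (sEv)^3 * (sWv) * (F p) * (K p)^2 * (Real.cos (α p))^2 * (αx p) + (1) * (sEv)^4 * (K p)^2 * (Real.sin (α p))^2 * (Gx p) + (1) * (sEv)^4 * (K p)^2 * (Real.cos (α p))^2 * (Gx p) + (-2) * (sEv)^4 * (sWv)^2 * (K p) * (Kx p) * (Real.sin (α p))^2 + (-2) * (sEv)^4 * (sWv)^2 * (K p) * (Kx p) * (Real.cos (α p))^2 + (2) * (sEv)^5 * (sWv) * (K p)^2 * (Real.sin (α p))^2 * (αy p) + (2) * (sEv)^5 * (sWv) * (K p)^2 * (Real.cos (α p))^2 * (αy p)) = 0) := by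
      constructor
      · intro h
        have hz : (((-1) * (F p)^3 * (K p)^2 * (Real.sin (α p))^2 * (Ex p) + (-1) * (F p)^3 * (K p)^2 * (Real.cos (α p))^2 * (Ex p) + (2) * (sEv)^2 * (F p)^2 * (K p)^2 * (Real.sin (α p))^2 * (Fx p) + (2) * (sEv)^2 * (F p)^2 * (K p)^2 * (Real.cos (α p))^2 * (Fx p) + (-1) * (sEv)^2 * (sWv)^2 * (F p) * (K p)^2 * (Real.sin (α p))^2 * (Ex p) + (-1) * (sEv)^2 * (sWv)^2 * (F p) * (K p)^2 * (Real.cos (α p))^2 * (Ex p) + (2) * (sEv)^3 * (sWv) * (F p)^2 * (K p)^2 * (Real.sin (α p))^2 * (αx p) + (2) * (sEv)^3 * (sWv) * (F p)^2 * (K p)^2 * (Real.cos (α p))^2 * (αx p) + (-1) * (sEv)^4 * (F p) * (K p)^2 * (Real.sin (α p))^2 * (Gx p) + (-1) * (sEv)^4 * (F p) * (K p)^2 * (Real.cos (α p))^2 * (Gx p) + (2) * (sEv)^4 * (sWv)^2 * (K p)^2 * (Real.sin (α p))^2 * (Fx p) + (-1) * (sEv)^4 * (sWv)^2 * (K p)^2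 * (Real.sin (α p))^2 * (Ey p) + (2) * (sEv)^4 * (sWv)^2 * (K p)^2 * (Real.cos (α p))^2 * (Fx p) + (-1) * (sEv)^4 * (sWv)^2 * (K p)^2 * (Real.cos (α p))^2 * (Ey p) + (-2) * (sEv)^5 * (sWv) * (F p) * (K p)^2 * (Real.sin (α p))^2 * (αy p) + (-2) * (sEv)^5 * (sWv) * (F p) * (K p)^2 * (Real.cos (α p))^2 * (αy p) + (2) * (sEv)^5 * (sWv)^3 * (K p)^2 * (Real.sin (α p))^2 * (αx p) + (2) * (sEv)^5 * (sWv)^3 * (K p)^2 * (Real.cos (α p))^2 * (αx p) + (2) * (sEv)^6 * (sWv)^2 * (K p) * (Ky p) * (Real.sin (α p))^2 + (2) * (sEv)^6 * (sWv)^2 * (K p) * (Ky p) * (Real.cos (α p))^2) / (2 * sEv ^ 7 * sWv ^ 3)) • fx p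
            + (((1) * (F p)^2 * (K p)^2 * (Real.sin (α p))^2 * (Ex p) + (1) * (F p)^2 * (K p)^2 * (Real.cos (α p))^2 * (Ex p) + (-2) * (sEv)^2 * (F p) * (K p)^2 * (Real.sin (α p))^2 * (Fx p) + (-2) * (sEv)^2 * (F p) * (K p)^2 * (Real.cos (α p))^2 * (Fx p) + (-2) * (sEv)^3 * (sWv) * (F p) * (K p)^2 * (Real.sin (α p))^2 * (αx p) + (-2) * (sEv)^3 * (sWv) * (F p) * (K p)^2 * (Real.cos (α p))^2 * (αx p) + (1) * (sEv)^4 * (K p)^2 * (Real.sin (α p))^2 * (Gx p) + (1) * (sEv)^4 * (K p)^2 * (Real.cos (α p))^2 * (Gx p) + (-2) * (sEv)^4 * (sWv)^2 * (K p) * (Kx p) * (Real.sin (α p))^2 + (-2) * (sEv)^4 * (sWv)^2 * (K p) * (Kx p) * (Real.cos (α p))^2 + (2) * (sEv)^5 * (sWv) * (K p)^2 * (Real.sin (α p))^2 * (αy p) + (2) * (sEv)^5 * (sWv) * (K p)^2 * (Real.cos (α p))^2 * (αy p)) / (2 * sEv ^ 5 * sWv ^ 3)) • fy p = 0 := by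
          rw [← hcomb, h, sub_self]
        obtain ⟨ha, hb⟩ := LinearIndependent.pair_iff.mp (hind p hp) _ _ hz
        constructor
        · rcases div_eq_zero_iff.mp ha with h' | h'
          · exact h'
          · exact absurd h' hd1
        · rcases div_eq_zero_iff.mp hb with h' | h'
          · exact h'
          · exact absurd h' hd2
      · rintro ⟨ha, hb⟩
        have hz : Lβf₁ p - Lγf₂ p = 0 := by rw [hcomb, ha, hb]; simp
        exact sub_eq_zero.mp hz
    -- scalar equation equivalences
    have key2 : (LβK p * Real.cos (α p) + LγK p * Real.sin (α p)) - (-(K p ^ 2) * (P₂ p + Q₂ p))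
        = ((-1) * (F p) * (K p)^2 * (Ex p) + (2) * (sEv)^2 * (K p)^2 * (Fx p) + (-1) * (sEv)^2 * (K p)^2 * (Ey p) + (-2) * (sEv)^2 * (F p) * (K p) * (Kx p) * (Real.sin (α p))^2 + (-2) * (sEv)^2 * (F p) * (K p) * (Kx p) * (Real.cos (α p))^2 + (2) * (sEv)^3 * (sWv) * (K p)^2 * (αx p) + (2) * (sEv)^4 * (K p) * (Ky p) * (Real.sin (α p))^2 + (2) * (sEv)^4 * (K p) * (Ky p) * (Real.cos (α p))^2) / (2 * sEv ^ 4 * sWv) := by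
      rw [hLβK p, hLγK p, hP₂ p, hQ₂ p]
      simp only [hsWv]
      simp only [hsEv]
      simp only [hE2]
      field_simp
      ring
    have key3 : (LβK p * Real.sin (α p) - LγK p * Real.cos (α p)) - (-(K p ^ 2) * (P₁ p + Q₁ p))
        = ((1) * (F p)^2 * (K p)^2 * (Ex p) + (-2) * (sEv)^2 * (F p) * (K p)^2 * (Fx p) + (-2) * (sEv)^3 * (sWv) * (F p) * (K p)^2 * (αx p) + (1) * (sEv)^4 * (K p)^2 * (Gx p) + (-2) * (sEv)^4 * (sWv)^2 * (K p) * (Kx p) * (Real.sin (α p))^2 + (-2) * (sEv)^4 * (sWv)^2 * (K p) * (Kx p) * (Real.cos (α p))^2 + (2) * (sEv)^5 * (sWv) * (K p)^2 * (αy p)) / (2 * sEv ^ 5 * sWv ^ 2) := by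
      rw [hLβK p, hLγK p, hP₁ p, hQ₁ p]
      simp only [hsWv]
      simp only [hW2]
      simp only [hsEv]
      simp only [hE2]
      field_simp
      ring
    have h2 : (LβK p * Real.cos (α p) + LγK p * Real.sin (α p) = -(K p ^ 2) * (P₂ p + Q₂ p))
        ↔ ((-1) * (F p) * (K p)^2 * (Ex p) + (2) * (sEv)^2 * (K p)^2 * (Fx p) + (-1) * (sEv)^2 * (K p)^2 * (Ey p) + (-2) * (sEv)^2 * (F p) * (K p) * (Kx p) * (Real.sin (α p))^2 + (-2) * (sEv)^2 * (F p) * (K p) * (Kx p) * (Real.cos (α p))^2 + (2) * (sEv)^3 * (sWv) * (K p)^2 * (αx p) + (2) * (sEv)^4 * (K p) * (Ky p) * (Real.sin (α p))^2 + (2) * (sEv)^4 * (K p) * (Ky p) * (Real.cos (α p))^2) = 0 := by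
      rw [← sub_eq_zero, key2, div_eq_zero_iff]
      simp [hd3]
    have h3 : (LβK p * Real.sin (α p) - LγK p * Real.cos (α p) = -(K p ^ 2) * (P₁ p + Q₁ p))
        ↔ ((1) * (F p)^2 * (K p)^2 * (Ex p) + (-2) * (sEv)^2 * (F p) * (K p)^2 * (Fx p) + (-2) * (sEv)^3 * (sWv) * (F p) * (K p)^2 * (αx p) + (1) * (sEv)^4 * (K p)^2 * (Gx p) + (-2) * (sEv)^4 * (sWv)^2 * (K p) * (Kx p) * (Real.sin (α p))^2 + (-2) * (sEv)^4 * (sWv)^2 * (K p) * (Kx p) * (Real.cos (α p))^2 + (2) * (sEv)^5 * (sWv) * (K p)^2 * (αy p)) = 0 := by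
      rw [← sub_eq_zero, key3, div_eq_zero_iff]
      simp [hd4]
    have c1 : ((-1) * (F p) * (K p)^2 * (Ex p) + (2) * (sEv)^2 * (K p)^2 * (Fx p) + (-1) * (sEv)^2 * (K p)^2 * (Ey p) + (-2) * (sEv)^2 * (F p) * (K p) * (Kx p) * (Real.sin (α p))^2 + (-2) * (sEv)^2 * (F p) * (K p) * (Kx p) * (Real.cos (α p))^2 + (2) * (sEv)^3 * (sWv) * (K p)^2 * (αx p) + (2) * (sEv)^4 * (K p) * (Ky p) * (Real.sin (α p))^2 + (2) * (sEv)^4 * (K p) * (Ky p) * (Real.cos (α p))^2) * (sEv ^ 2 * sWv ^ 2) = ((-1) * (F p)^3 * (K p)^2 * (Real.sin (α p))^2 * (Ex p) + (-1) * (F p)^3 * (K p)^2 * (Real.cos (α p))^2 * (Ex p) + (2) * (sEv)^2 * (F p)^2 * (K p)^2 * (Real.sin (α p))^2 * (Fx p) + (2) * (sEv)^2 * (F p)^2 * (K p)^2 * (Real.cos (α p))^2 * (Fx p) + (-1) * (sEv)^2 * (sWv)^2 * (F p) * (K p)^2 * (Real.sin (α p))^2 * (Ex p) + (-1) * (sEv)^2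 * (sWv)^2 * (F p) * (K p)^2 * (Real.cos (α p))^2 * (Ex p) + (2) * (sEv)^3 * (sWv) * (F p)^2 * (K p)^2 * (Real.sin (α p))^2 * (αx p) + (2) * (sEv)^3 * (sWv) * (F p)^2 * (K p)^2 * (Real.cos (α p))^2 * (αx p) + (-1) * (sEv)^4 * (F p) * (K p)^2 * (Real.sin (α p))^2 * (Gx p) + (-1) * (sEv)^4 * (F p) * (K p)^2 * (Real.cos (α p))^2 * (Gx p) + (2) * (sEv)^4 * (sWv)^2 * (K p)^2 * (Real.sin (α p))^2 * (Fx p) + (-1) * (sEv)^4 * (sWv)^2 * (K p)^2 * (Real.sin (α p))^2 * (Ey p) + (2) * (sEv)^4 * (sWv)^2 * (K p)^2 * (Real.cos (α p))^2 * (Fx p) + (-1) * (sEv)^4 * (sWv)^2 * (K p)^2 * (Real.cos (α p))^2 * (Ey p) + (-2) * (sEv)^5 * (sWv) * (F p) * (K p)^2 * (Real.sin (α p))^2 * (αy p) + (-2) * (sEv)^5 * (sWv) * (F p) * (K p)^2 * (Real.cos (α p))^2 * (αy p) + (2) * (sEv)^5 * (sWv)^3 * (K p)^2 * (Real.sin (α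 p))^2 * (αx p) + (2) * (sEv)^5 * (sWv)^3 * (K p)^2 * (Real.cos (α p))^2 * (αx p) + (2) * (sEv)^6 * (sWv)^2 * (K p) * (Ky p) * (Real.sin (α p))^2 + (2) * (sEv)^6 * (sWv)^2 * (K p) * (Ky p) * (Real.cos (α p))^2) + F p * ((1) * (F p)^2 * (K p)^2 * (Real.sin (α p))^2 * (Ex p) + (1) * (F p)^2 * (K p)^2 * (Real.cos (α p))^2 * (Ex p) + (-2) * (sEv)^2 * (F p) * (K p)^2 * (Real.sin (α p))^2 * (Fx p) + (-2) * (sEv)^2 * (F p) * (K p)^2 * (Real.cos (α p))^2 * (Fx p) + (-2) * (sEv)^3 * (sWv) * (F p) * (K p)^2 * (Real.sin (α p))^2 * (αx p) + (-2) * (sEv)^3 * (sWv) * (F p) * (K p)^2 * (Real.cos (α p))^2 * (αx p) + (1) * (sEv)^4 * (K p)^2 * (Real.sin (α p))^2 * (Gx p) + (1) * (sEv)^4 * (K p)^2 * (Real.cos (α p))^2 * (Gx p) + (-2) * (sEv)^4 * (sWv)^2 * (K p) * (Kx p) * (Real.sin (α p))^2 + (-2) * (sEv)^4 * (sWv)^2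 * (K p) * (Kx p) * (Real.cos (α p))^2 + (2) * (sEv)^5 * (sWv) * (K p)^2 * (Real.sin (α p))^2 * (αy p) + (2) * (sEv)^5 * (sWv) * (K p)^2 * (Real.cos (α p))^2 * (αy p)) := by
      linear_combination (((1) * (sEv)^2 * (sWv)^2 * (F p) * (K p)^2 * (Ex p) + (-2) * (sEv)^4 * (sWv)^2 * (K p)^2 * (Fx p) + (1) * (sEv)^4 * (sWv)^2 * (K p)^2 * (Ey p) + (-2) * (sEv)^5 * (sWv)^3 * (K p)^2 * (αx p))) * hcs
    have c2 : ((1) * (F p)^2 * (K p)^2 * (Ex p) + (-2) * (sEv)^2 * (F p) * (K p)^2 * (Fx p) + (-2) * (sEv)^3 * (sWv) * (F p) * (K p)^2 * (αx p) + (1) * (sEv)^4 * (K p)^2 * (Gx p) + (-2) * (sEv)^4 * (sWv)^2 * (K p) * (Kx p) * (Real.sin (α p))^2 + (-2) * (sEv)^4 * (sWv)^2 * (K p) * (Kx p) * (Real.cos (α p))^2 + (2) * (sEv)^5 * (sWv) * (K p)^2 * (αy p)) = ((1) * (F p)^2 * (K p)^2 * (Real.sin (α p))^2 * (Ex p) +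 (1) * (F p)^2 * (K p)^2 * (Real.cos (α p))^2 * (Ex p) + (-2) * (sEv)^2 * (F p) * (K p)^2 * (Real.sin (α p))^2 * (Fx p) + (-2) * (sEv)^2 * (F p) * (K p)^2 * (Real.cos (α p))^2 * (Fx p) + (-2) * (sEv)^3 * (sWv) * (F p) * (K p)^2 * (Real.sin (α p))^2 * (αx p) + (-2) * (sEv)^3 * (sWv) * (F p) * (K p)^2 * (Real.cos (α p))^2 * (αx p) + (1) * (sEv)^4 * (K p)^2 * (Real.sin (α p))^2 * (Gx p) + (1) * (sEv)^4 * (K p)^2 * (Real.cos (α p))^2 * (Gx p) + (-2) * (sEv)^4 * (sWv)^2 * (K p) * (Kx p) * (Real.sin (α p))^2 + (-2) * (sEv)^4 * (sWv)^2 * (K p) * (Kx p) * (Real.cos (α p))^2 + (2) * (sEv)^5 * (sWv) * (K p)^2 * (Real.sin (α p))^2 * (αy p) + (2) * (sEv)^5 * (sWv) * (K p)^2 * (Real.cos (α p))^2 * (αy p)) := by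
      linear_combination (((-1) * (F p)^2 * (K p)^2 * (Ex p) + (2) * (sEv)^2 * (F p) * (K p)^2 * (Fx p) + (2) * (sEv)^3 * (sWv) * (F p) * (K p)^2 * (αx p) + (-1) * (sEv)^4 * (K p)^2 * (Gx p) + (-2) * (sEv)^5 * (sWv) * (K p)^2 * (αy p))) * hcs
    have h4 : (((-1) * (F p)^3 * (K p)^2 * (Real.sin (α p))^2 * (Ex p) + (-1) * (F p)^3 * (K p)^2 * (Real.cos (α p))^2 * (Ex p) + (2) * (sEv)^2 * (F p)^2 * (K p)^2 * (Real.sin (α p))^2 * (Fx p) + (2) * (sEv)^2 * (F p)^2 * (K p)^2 * (Real.cos (α p))^2 * (Fx p) + (-1) * (sEv)^2 * (sWv)^2 * (F p) * (K p)^2 * (Real.sin (α p))^2 * (Ex p) + (-1) * (sEv)^2 * (sWv)^2 * (F p) * (K p)^2 * (Real.cos (α p))^2 * (Ex p) + (2) * (sEv)^3 * (sWv) * (F p)^2 * (K p)^2 * (Real.sin (α p))^2 * (αx p) + (2) * (sEv)^3 * (sWv) * (F p)^2 * (K p)^2 * (Real.cos (α p))^2 * (αx p) + (-1) * (sEv)^4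 * (F p) * (K p)^2 * (Real.sin (α p))^2 * (Gx p) + (-1) * (sEv)^4 * (F p) * (K p)^2 * (Real.cos (α p))^2 * (Gx p) + (2) * (sEv)^4 * (sWv)^2 * (K p)^2 * (Real.sin (α p))^2 * (Fx p) + (-1) * (sEv)^4 * (sWv)^2 * (K p)^2 * (Real.sin (α p))^2 * (Ey p) + (2) * (sEv)^4 * (sWv)^2 * (K p)^2 * (Real.cos (α p))^2 * (Fx p) + (-1) * (sEv)^4 * (sWv)^2 * (K p)^2 * (Real.cos (α p))^2 * (Ey p) + (-2) * (sEv)^5 * (sWv) * (F p) * (K p)^2 * (Real.sin (α p))^2 * (αy p) + (-2) * (sEv)^5 * (sWv) * (F p) * (K p)^2 * (Real.cos (α p))^2 * (αy p) + (2) * (sEv)^5 * (sWv)^3 * (K p)^2 * (Real.sin (α p))^2 * (αx p) + (2) * (sEv)^5 * (sWv)^3 * (K p)^2 * (Real.cos (α p))^2 * (αx p) + (2) * (sEv)^6 * (sWv)^2 * (K p) * (Ky p) * (Real.sin (α p))^2 + (2) * (sEv)^6 * (sWv)^2 * (K p) * (Ky p) * (Real.cos (α p))^2) = 0 ∧ ((1)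 * (F p)^2 * (K p)^2 * (Real.sin (α p))^2 * (Ex p) + (1) * (F p)^2 * (K p)^2 * (Real.cos (α p))^2 * (Ex p) + (-2) * (sEv)^2 * (F p) * (K p)^2 * (Real.sin (α p))^2 * (Fx p) + (-2) * (sEv)^2 * (F p) * (K p)^2 * (Real.cos (α p))^2 * (Fx p) + (-2) * (sEv)^3 * (sWv) * (F p) * (K p)^2 * (Real.sin (α p))^2 * (αx p) + (-2) * (sEv)^3 * (sWv) * (F p) * (K p)^2 * (Real.cos (α p))^2 * (αx p) + (1) * (sEv)^4 * (K p)^2 * (Real.sin (α p))^2 * (Gx p) + (1) * (sEv)^4 * (K p)^2 * (Real.cos (α p))^2 * (Gx p) + (-2) * (sEv)^4 * (sWv)^2 * (K p) * (Kx p) * (Real.sin (α p))^2 + (-2) * (sEv)^4 * (sWv)^2 * (K p) * (Kx p) * (Real.cos (α p))^2 + (2) * (sEv)^5 * (sWv) * (K p)^2 * (Real.sin (α p))^2 * (αy p) + (2) * (sEv)^5 * (sWv) * (K p)^2 * (Real.cos (α p))^2 * (αy p)) = 0) ↔ (((-1) * (F p) * (K p)^2 * (Ex p) + (2) * (sEv)^2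 * (K p)^2 * (Fx p) + (-1) * (sEv)^2 * (K p)^2 * (Ey p) + (-2) * (sEv)^2 * (F p) * (K p) * (Kx p) * (Real.sin (α p))^2 + (-2) * (sEv)^2 * (F p) * (K p) * (Kx p) * (Real.cos (α p))^2 + (2) * (sEv)^3 * (sWv) * (K p)^2 * (αx p) + (2) * (sEv)^4 * (K p) * (Ky p) * (Real.sin (α p))^2 + (2) * (sEv)^4 * (K p) * (Ky p) * (Real.cos (α p))^2) = 0 ∧ ((1) * (F p)^2 * (K p)^2 * (Ex p) + (-2) * (sEv)^2 * (F p) * (K p)^2 * (Fx p) + (-2) * (sEv)^3 * (sWv) * (F p) * (K p)^2 * (αx p) + (1) * (sEv)^4 * (K p)^2 * (Gx p) + (-2) * (sEv)^4 * (sWv)^2 * (K p) * (Kx p) * (Real.sin (α p))^2 + (-2) * (sEv)^4 * (sWv)^2 * (K p) * (Kx p) * (Real.cos (α p))^2 + (2) * (sEv)^5 * (sWv) * (K p)^2 * (αy p)) = 0) := by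
      constructor
      · rintro ⟨ha, hb⟩
        refine ⟨?_, by rw [c2, hb]⟩
        have hz : ((-1) * (F p) * (K p)^2 * (Ex p) + (2) * (sEv)^2 * (K p)^2 * (Fx p) + (-1) * (sEv)^2 * (K p)^2 * (Ey p) + (-2) * (sEv)^2 * (F p) * (K p) * (Kx p) * (Real.sin (α p))^2 + (-2) * (sEv)^2 * (F p) * (K p) * (Kx p) * (Real.cos (α p))^2 + (2) * (sEv)^3 * (sWv) * (K p)^2 * (αx p) + (2) * (sEv)^4 * (K p) * (Ky p) * (Real.sin (α p))^2 + (2) * (sEv)^4 * (K p) * (Ky p) * (Real.cos (α p))^2) * (sEv ^ 2 * sWv ^ 2) = 0 := by rw [c1, ha, hb]; ring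
        rcases mul_eq_zero.mp hz with h' | h'
        · exact h'
        · exact absurd h' (by positivity)
      · rintro ⟨ha, hb⟩
        have hb' : ((1) * (F p)^2 * (K p)^2 * (Real.sin (α p))^2 * (Ex p) + (1) * (F p)^2 * (K p)^2 * (Real.cos (α p))^2 * (Ex p) + (-2) * (sEv)^2 * (F p) * (K p)^2 * (Real.sin (α p))^2 * (Fx p) + (-2) * (sEv)^2 * (F p) * (K p)^2 * (Real.cos (α p))^2 * (Fx p) + (-2) * (sEv)^3 * (sWv) * (F p) * (K p)^2 * (Real.sin (α p))^2 * (αx p) + (-2) * (sEv)^3 * (sWv) * (F p) * (K p)^2 * (Real.cos (α p))^2 * (αx p) + (1) * (sEv)^4 * (K p)^2 * (Real.sin (α p))^2 * (Gx p) + (1) * (sEv)^4 * (K p)^2 * (Real.cos (α p))^2 * (Gx p) + (-2) * (sEv)^4 * (sWv)^2 * (K p) * (Kx p) * (Real.sin (α p))^2 + (-2) * (sEv)^4 * (sWv)^2 * (K p) * (Kx p) * (Real.cos (α p))^2 + (2) * (sEv)^5 * (sWv) * (K p)^2 * (Real.sin (α p))^2 * (αy p) + (2) * (sEv)^5 * (sWv)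 * (K p)^2 * (Real.cos (α p))^2 * (αy p)) = 0 := by rw [← c2]; exact hb
        refine ⟨?_, hb'⟩
        have := c1
        rw [ha, hb'] at this
        linarith
    exact h1.trans (h4.trans (and_congr h2 h3).symm)
  constructor
  · intro h p hp
    exact (key p hp).mp (h p hp)
  · intro h p hp
    exact (key p hp).mpr (h p hp)
end

section
/- The compatibility condition L_β f₁ = L_γ f₂ holds at every point of D if and only if K satisfies the PDE system (★), namely L_γ K = K²((P₁ + Q₁)cos α − (P₂ + Q₂)sin α) and L_β K = −K²((P₁ + Q₁)sin α + (P₂ + Q₂)cos α), at every point of D. -/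
set_option maxHeartbeats 1000000


private lemma lineX {W : Type*} [NormedAddCommGroup W] [NormedSpace ℝ W]
    {h : ℝ × ℝ → W} {p : ℝ × ℝ} (hh : DifferentiableAt ℝ h p) :
    HasDerivAt (fun t => h (t, p.2)) (fderiv ℝ h p (1, 0)) p.1 := by
  have hline : HasDerivAt (fun t : ℝ => ((t, p.2) : ℝ × ℝ)) ((1 : ℝ), (0 : ℝ)) p.1 :=
    (hasDerivAt_id _).prodMk (hasDerivAt_const _ _)
  exact hh.hasFDerivAt.comp_hasDerivAt p.1 hline

private lemma lineY {W : Type*} [NormedAddCommGroup W] [NormedSpace ℝ W]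
    {h : ℝ × ℝ → W} {p : ℝ × ℝ} (hh : DifferentiableAt ℝ h p) :
    HasDerivAt (fun t => h (p.1, t)) (fderiv ℝ h p (0, 1)) p.2 := by
  have hline : HasDerivAt (fun t : ℝ => ((p.1, t) : ℝ × ℝ)) ((0 : ℝ), (1 : ℝ)) p.2 :=
    (hasDerivAt_const _ _).prodMk (hasDerivAt_id _)
  exact hh.hasFDerivAt.comp_hasDerivAt p.2 hline

private lemma shapeA {E F G K C S : ℝ → ℝ} {Ex Fx Gx Kx Cx Sx x : ℝ}
    (hE : HasDerivAt E Ex x) (hF : HasDerivAt F Fx x) (hG : HasDerivAt G Gx x)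
    (hK : HasDerivAt K Kx x) (hC : HasDerivAt C Cx x) (hS : HasDerivAt S Sx x)
    (hEp : 0 < E x) (hwp : 0 < G x - F x ^ 2 / E x) :
    HasDerivAt
      (fun t => K t * (C t / Real.sqrt (E t) - S t * (F t / E t) / Real.sqrt (G t - F t ^ 2 / E t)))
      (Kx * (C x / Real.sqrt (E x) - S x * (F x / E x) / Real.sqrt (G x - F x ^ 2 / E x))
        + K x * (Cx / Real.sqrt (E x)
            - C x * Ex / (2 * Real.sqrt (E x) ^ 3)
            - Sx * (F x / E x) / Real.sqrt (G x - F x ^ 2 / E x)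
            - S x * ((Fx * E x - F x * Ex) / E x ^ 2) / Real.sqrt (G x - F x ^ 2 / E x)
            + S x * (F x / E x) * (Gx - (2 * F x * Fx * E x - F x ^ 2 * Ex) / E x ^ 2)
                / (2 * Real.sqrt (G x - F x ^ 2 / E x) ^ 3))) x := by
  have hE0 : E x ≠ 0 := ne_of_gt hEp
  have hw0 : G x - F x ^ 2 / E x ≠ 0 := ne_of_gt hwp
  have hsE : Real.sqrt (E x) ≠ 0 := Real.sqrt_ne_zero'.2 hEp
  have hsW : Real.sqrt (G x - F x ^ 2 / E x) ≠ 0 := Real.sqrt_ne_zero'.2 hwp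
  have h := hK.mul ((hC.div (hE.sqrt hE0) hsE).sub
    ((hS.mul (hF.div hE hE0)).div ((hG.sub ((hF.pow 2).div hE hE0)).sqrt hw0) hsW))
  refine h.congr_deriv ?_
  simp only [Pi.mul_apply, Pi.div_apply, Pi.sub_apply, Pi.pow_apply, Nat.cast_ofNat, Nat.reduceSub, pow_one]
  revert hsE hsW
  generalize Real.sqrt (E x) = e
  generalize Real.sqrt (G x - F x ^ 2 / E x) = g
  intro hsE hsW
  field_simp
  ring

private lemma shapeB {E F G K S : ℝ → ℝ} {Ex Fx Gx Kx Sx x : ℝ}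
    (hE : HasDerivAt E Ex x) (hF : HasDerivAt F Fx x) (hG : HasDerivAt G Gx x)
    (hK : HasDerivAt K Kx x) (hS : HasDerivAt S Sx x)
    (hEp : 0 < E x) (hwp : 0 < G x - F x ^ 2 / E x) :
    HasDerivAt (fun t => K t * S t / Real.sqrt (G t - F t ^ 2 / E t))
      (Kx * S x / Real.sqrt (G x - F x ^ 2 / E x)
        + K x * (Sx / Real.sqrt (G x - F x ^ 2 / E x)
          - S x * (Gx - (2 * F x * Fx * E x - F x ^ 2 * Ex) / E x ^ 2)
              / (2 * Real.sqrt (G x - F x ^ 2 / E x) ^ 3))) x := by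
  have hE0 : E x ≠ 0 := ne_of_gt hEp
  have hw0 : G x - F x ^ 2 / E x ≠ 0 := ne_of_gt hwp
  have hsW : Real.sqrt (G x - F x ^ 2 / E x) ≠ 0 := Real.sqrt_ne_zero'.2 hwp
  have h := (hK.mul hS).div ((hG.sub ((hF.pow 2).div hE hE0)).sqrt hw0) hsW
  refine h.congr_deriv ?_
  simp only [Pi.mul_apply, Pi.div_apply, Pi.sub_apply, Pi.pow_apply, Nat.cast_ofNat, Nat.reduceSub, pow_one]
  revert hsW
  generalize Real.sqrt (G x - F x ^ 2 / E x) = g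
  intro hsW
  field_simp
  ring

private lemma alg_iff {e g m s co S T X Y : ℝ} (he : e ≠ 0) (hg : g ≠ 0)
    (hpy : s ^ 2 + co ^ 2 = 1)
    (hJ1 : e * (S + m * T) = s * X + co * Y)
    (hJ2 : g * T = -co * X + s * Y) :
    (S = 0 ∧ T = 0) ↔ (X = 0 ∧ Y = 0) := by
  constructor
  · rintro ⟨hS, hT⟩
    constructor
    · linear_combination (-s) * hJ1 + co * hJ2 - X * hpy + (s * e) * hS + (s * e * m - co * g) * hT
    · linear_combination (-co) * hJ1 - s * hJ2 - Y * hpy + (co * e) * hS + (co * e * m + s * g) * hT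
  · rintro ⟨hX, hY⟩
    have hT : T = 0 := by
      have h1 : g * T = 0 := by rw [hJ2, hX, hY]; ring
      exact (mul_eq_zero.1 h1).resolve_left hg
    refine ⟨?_, hT⟩
    have h2 : e * S = 0 := by
      rw [hX, hY] at hJ1
      linear_combination hJ1 - e * m * hT
    exact (mul_eq_zero.1 h2).resolve_left he


/-!
STATEMENT 7: The compatibility condition L_β f₁ = L_γ f₂ holds at every point of D
if and only if K satisfies the PDE system (★), namely
L_γ K = K²((P₁ + Q₁)cos α − (P₂ + Q₂)sin α) and
L_β K = −K²((P₁ + Q₁)sin α + (P₂ + Q₂)cos α), at every point of D.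
-/

set_option maxHeartbeats 4000000 in
theorem stmt_7
    (D : Set (ℝ × ℝ)) (hD : IsOpen D)
    (f fx fy : ℝ × ℝ → EuclideanSpace ℝ (Fin 3))
    (hf : ContDiffOn ℝ (⊤ : ℕ∞) f D)
    (hfx : ∀ p ∈ D, HasDerivAt (fun t : ℝ => f (t, p.2)) (fx p) p.1)
    (hfy : ∀ p ∈ D, HasDerivAt (fun t : ℝ => f (p.1, t)) (fy p) p.2)
    (hind : ∀ p ∈ D, LinearIndependent ℝ ![fx p, fy p])
    (E F G : ℝ × ℝ → ℝ)
    (hE : ∀ p, E p = (inner ℝ (fx p) (fx p) : ℝ))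
    (hF : ∀ p, F p = (inner ℝ (fx p) (fy p) : ℝ))
    (hG : ∀ p, G p = (inner ℝ (fy p) (fy p) : ℝ))
    (hEpos : ∀ p ∈ D, 0 < E p)
    (hdisc : ∀ p ∈ D, 0 < E p * G p - F p ^ 2)
    (K α : ℝ × ℝ → ℝ)
    (hK : ContDiffOn ℝ (⊤ : ℕ∞) K D) (hKpos : ∀ p ∈ D, 0 < K p)
    (hα : ContDiffOn ℝ (⊤ : ℕ∞) α D)
    (D₁ D₂ f₁ f₂ : ℝ × ℝ → EuclideanSpace ℝ (Fin 3))
    (hD₁ : ∀ p, D₁ p = (Real.sqrt (E p))⁻¹ • fx p)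
    (hD₂ : ∀ p, D₂ p = (Real.sqrt (G p - F p ^ 2 / E p))⁻¹ • (fy p - (F p / E p) • fx p))
    (hf₁ : ∀ p, f₁ p = K p • (Real.cos (α p) • D₁ p + Real.sin (α p) • D₂ p))
    (hf₂ : ∀ p, f₂ p = K p • ((-Real.sin (α p)) • D₁ p + Real.cos (α p) • D₂ p))
    -- partial derivatives of the scalar data E, F, G, α, K
    (Ex Ey Fx Gx αx αy Kx Ky : ℝ × ℝ → ℝ)
    (hEx : ∀ p ∈ D, HasDerivAt (fun t : ℝ => E (t, p.2)) (Ex p) p.1)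
    (hEy : ∀ p ∈ D, HasDerivAt (fun t : ℝ => E (p.1, t)) (Ey p) p.2)
    (hFx : ∀ p ∈ D, HasDerivAt (fun t : ℝ => F (t, p.2)) (Fx p) p.1)
    (hGx : ∀ p ∈ D, HasDerivAt (fun t : ℝ => G (t, p.2)) (Gx p) p.1)
    (hαx : ∀ p ∈ D, HasDerivAt (fun t : ℝ => α (t, p.2)) (αx p) p.1)
    (hαy : ∀ p ∈ D, HasDerivAt (fun t : ℝ => α (p.1, t)) (αy p) p.2)
    (hKx : ∀ p ∈ D, HasDerivAt (fun t : ℝ => K (t, p.2)) (Kx p) p.1)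
    (hKy : ∀ p ∈ D, HasDerivAt (fun t : ℝ => K (p.1, t)) (Ky p) p.2)
    -- the quantities P₁, P₂, Q₁, Q₂
    (P₁ P₂ Q₁ Q₂ : ℝ × ℝ → ℝ)
    (hP₁ : ∀ p, P₁ p = ((F p ^ 2 / E p ^ 2) * Ex p - 2 * (F p / E p) * Fx p + Gx p)
        / (2 * (G p - F p ^ 2 / E p) * Real.sqrt (E p)))
    (hP₂ : ∀ p, P₂ p = (-Ey p - (F p / E p) * Ex p + 2 * Fx p)
        / (2 * E p * Real.sqrt (G p - F p ^ 2 / E p)))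
    (hQ₁ : ∀ p, Q₁ p = (αy p - (F p / E p) * αx p) / Real.sqrt (G p - F p ^ 2 / E p))
    (hQ₂ : ∀ p, Q₂ p = αx p / Real.sqrt (E p))
    -- L_γ K and L_β K
    (LγK LβK : ℝ × ℝ → ℝ)
    (hLγK : ∀ p, LγK p = K p * (Real.cos (α p) * Kx p / Real.sqrt (E p)
        + Real.sin (α p) * (Ky p - (F p / E p) * Kx p)
          / Real.sqrt (G p - F p ^ 2 / E p)))
    (hLβK : ∀ p, LβK p = K p * (-(Real.sin (α p)) * Kx p / Real.sqrt (E p)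
        + Real.cos (α p) * (Ky p - (F p / E p) * Kx p)
          / Real.sqrt (G p - F p ^ 2 / E p)))
    -- partial derivatives of the vector fields f₁ and f₂
    (f₁x f₁y f₂x f₂y : ℝ × ℝ → EuclideanSpace ℝ (Fin 3))
    (hf₁x : ∀ p ∈ D, HasDerivAt (fun t : ℝ => f₁ (t, p.2)) (f₁x p) p.1)
    (hf₁y : ∀ p ∈ D, HasDerivAt (fun t : ℝ => f₁ (p.1, t)) (f₁y p) p.2)
    (hf₂x : ∀ p ∈ D, HasDerivAt (fun t : ℝ => f₂ (t, p.2)) (f₂x p) p.1)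
    (hf₂y : ∀ p ∈ D, HasDerivAt (fun t : ℝ => f₂ (p.1, t)) (f₂y p) p.2)
    -- L_β f₁ and L_γ f₂
    (Lβf₁ Lγf₂ : ℝ × ℝ → EuclideanSpace ℝ (Fin 3))
    (hLβf₁ : ∀ p, Lβf₁ p = K p • ((-(Real.sin (α p)) / Real.sqrt (E p)) • f₁x p
        + (Real.cos (α p) / Real.sqrt (G p - F p ^ 2 / E p))
          • (f₁y p - (F p / E p) • f₁x p)))
    (hLγf₂ : ∀ p, Lγf₂ p = K p • ((Real.cos (α p) / Real.sqrt (E p)) • f₂x p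
        + (Real.sin (α p) / Real.sqrt (G p - F p ^ 2 / E p))
          • (f₂y p - (F p / E p) • f₂x p))) :
    (∀ p ∈ D, Lβf₁ p = Lγf₂ p)
      ↔ (∀ p ∈ D,
          LγK p = K p ^ 2 * ((P₁ p + Q₁ p) * Real.cos (α p)
              - (P₂ p + Q₂ p) * Real.sin (α p))
          ∧ LβK p = -(K p ^ 2) * ((P₁ p + Q₁ p) * Real.sin (α p)
              + (P₂ p + Q₂ p) * Real.cos (α p))) := by
  classical
  -- global preparation: smoothness of the first derivatives
  have hfdiff : ∀ q ∈ D, DifferentiableAt ℝ f q := fun q hq =>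
    (hf.contDiffAt (hD.mem_nhds hq)).differentiableAt (by simp)
  have hDfC : ContDiffOn ℝ (⊤ : ℕ∞) (fderiv ℝ f) D := hf.fderiv_of_isOpen hD (by simp)
  have hDfd : ∀ q ∈ D, DifferentiableAt ℝ (fderiv ℝ f) q := fun q hq =>
    (hDfC.contDiffAt (hD.mem_nhds hq)).differentiableAt (by simp)
  set g1 : ℝ × ℝ → EuclideanSpace ℝ (Fin 3) := fun q => fderiv ℝ f q (1, 0) with hg1def
  set g2 : ℝ × ℝ → EuclideanSpace ℝ (Fin 3) := fun q => fderiv ℝ f q (0, 1) with hg2def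
  have hg1d : ∀ q ∈ D, DifferentiableAt ℝ g1 q := fun q hq =>
    ((ContinuousLinearMap.apply ℝ (EuclideanSpace ℝ (Fin 3))
      ((1 : ℝ), (0 : ℝ))).differentiable.differentiableAt).comp q (hDfd q hq)
  have hg2d : ∀ q ∈ D, DifferentiableAt ℝ g2 q := fun q hq =>
    ((ContinuousLinearMap.apply ℝ (EuclideanSpace ℝ (Fin 3))
      ((0 : ℝ), (1 : ℝ))).differentiable.differentiableAt).comp q (hDfd q hq)
  have hfxg : ∀ q ∈ D, fx q = g1 q := fun q hq => (hfx q hq).unique (lineX (hfdiff q hq))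
  have hfyg : ∀ q ∈ D, fy q = g2 q := fun q hq => (hfy q hq).unique (lineY (hfdiff q hq))
  have hFonD : ∀ q ∈ D, F q = (inner ℝ (g1 q) (g2 q) : ℝ) := fun q hq => by
    rw [hF, hfxg q hq, hfyg q hq]
  have hGonD : ∀ q ∈ D, G q = (inner ℝ (g2 q) (g2 q) : ℝ) := fun q hq => by
    rw [hG, hfyg q hq]
  -- decomposition of f₁ and f₂ in the basis (fx, fy)
  have hf1ab : ∀ q, f₁ q =
      (K q * (Real.cos (α q) / Real.sqrt (E q)
        - Real.sin (α q) * (F q / E q) / Real.sqrt (G q - F q ^ 2 / E q))) • fx q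
      + (K q * Real.sin (α q) / Real.sqrt (G q - F q ^ 2 / E q)) • fy q := fun q => by
    rw [hf₁, hD₁, hD₂]
    match_scalars <;> ring
  have hf2cd : ∀ q, f₂ q =
      (K q * ((-Real.sin (α q)) / Real.sqrt (E q)
        - Real.cos (α q) * (F q / E q) / Real.sqrt (G q - F q ^ 2 / E q))) • fx q
      + (K q * Real.cos (α q) / Real.sqrt (G q - F q ^ 2 / E q)) • fy q := fun q => by
    rw [hf₂, hD₁, hD₂]
    match_scalars <;> ring
  refine forall₂_congr fun p hp => ?_
  obtain ⟨x, y⟩ := p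
  -- basic positivity at the point
  have hE0 : 0 < E (x, y) := hEpos (x, y) hp
  have hw0 : 0 < G (x, y) - F (x, y) ^ 2 / E (x, y) := by
    have h1 := hdisc (x, y) hp
    have h2 := hEpos (x, y) hp
    have h3 : G (x, y) - F (x, y) ^ 2 / E (x, y)
        = (E (x, y) * G (x, y) - F (x, y) ^ 2) / E (x, y) := by field_simp
    rw [h3]; exact div_pos h1 h2
  have hsE0 : Real.sqrt (E (x, y)) ≠ 0 := Real.sqrt_ne_zero'.2 hE0
  have hsW0 : Real.sqrt (G (x, y) - F (x, y) ^ 2 / E (x, y)) ≠ 0 := Real.sqrt_ne_zero'.2 hw0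
  have hsE2 : Real.sqrt (E (x, y)) ^ 2 = E (x, y) := Real.sq_sqrt hE0.le
  have hsW2 : Real.sqrt (G (x, y) - F (x, y) ^ 2 / E (x, y)) ^ 2
      = G (x, y) - F (x, y) ^ 2 / E (x, y) := Real.sq_sqrt hw0.le
  -- eventual membership along the two coordinate lines
  have hevx : ∀ᶠ t in nhds x, (t, y) ∈ D := by
    have ho : IsOpen {t : ℝ | (t, y) ∈ D} := hD.preimage (continuous_id.prodMk continuous_const)
    exact ho.mem_nhds hp
  have hevy : ∀ᶠ t in nhds y, (x, t) ∈ D := by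
    have ho : IsOpen {t : ℝ | (x, t) ∈ D} := hD.preimage (continuous_const.prodMk continuous_id)
    exact ho.mem_nhds hp
  -- second derivative data
  have hg1dp : DifferentiableAt ℝ g1 (x, y) := hg1d (x, y) hp
  have hg2dp : DifferentiableAt ℝ g2 (x, y) := hg2d (x, y) hp
  have hfxxD : HasDerivAt (fun t => fx (t, y)) (fderiv ℝ g1 (x, y) (1, 0)) x :=
    (lineX hg1dp).congr_of_eventuallyEq (hevx.mono fun t ht => hfxg (t, y) ht)
  have hfxyD : HasDerivAt (fun t => fx (x, t)) (fderiv ℝ g1 (x, y) (0, 1)) y :=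
    (lineY hg1dp).congr_of_eventuallyEq (hevy.mono fun t ht => hfxg (x, t) ht)
  have hfyxD : HasDerivAt (fun t => fy (t, y)) (fderiv ℝ g2 (x, y) (1, 0)) x :=
    (lineX hg2dp).congr_of_eventuallyEq (hevx.mono fun t ht => hfyg (t, y) ht)
  have hfyyD : HasDerivAt (fun t => fy (x, t)) (fderiv ℝ g2 (x, y) (0, 1)) y :=
    (lineY hg2dp).congr_of_eventuallyEq (hevy.mono fun t ht => hfyg (x, t) ht)
  -- Clairaut: symmetry of second derivatives
  have hDfdp : DifferentiableAt ℝ (fderiv ℝ f) (x, y) := hDfd (x, y) hp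
  have hsymm := second_derivative_symmetric_of_eventually
    (f := f) (f' := fderiv ℝ f) (x := ((x : ℝ), (y : ℝ)))
    (by filter_upwards [hD.mem_nhds hp] with q hq using (hfdiff q hq).hasFDerivAt)
    hDfdp.hasFDerivAt
  have hcomp1 : HasFDerivAt g1
      ((ContinuousLinearMap.apply ℝ (EuclideanSpace ℝ (Fin 3)) ((1 : ℝ), (0 : ℝ))).comp
        (fderiv ℝ (fderiv ℝ f) (x, y))) (x, y) :=
    (ContinuousLinearMap.apply ℝ (EuclideanSpace ℝ (Fin 3))
      ((1 : ℝ), (0 : ℝ))).hasFDerivAt.comp (x, y) hDfdp.hasFDerivAt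
  have hcomp2 : HasFDerivAt g2
      ((ContinuousLinearMap.apply ℝ (EuclideanSpace ℝ (Fin 3)) ((0 : ℝ), (1 : ℝ))).comp
        (fderiv ℝ (fderiv ℝ f) (x, y))) (x, y) :=
    (ContinuousLinearMap.apply ℝ (EuclideanSpace ℝ (Fin 3))
      ((0 : ℝ), (1 : ℝ))).hasFDerivAt.comp (x, y) hDfdp.hasFDerivAt
  have hfxyeq : fderiv ℝ g1 (x, y) (0, 1) = fderiv ℝ g2 (x, y) (1, 0) := by
    rw [hcomp1.fderiv, hcomp2.fderiv]
    exact hsymm (0, 1) (1, 0)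
  -- derivatives of F and G in the y-direction (exist by smoothness)
  obtain ⟨FY, hFY⟩ : ∃ v, HasDerivAt (fun t => F (x, t)) v y :=
    ⟨_, (HasDerivAt.inner ℝ (lineY hg1dp) (lineY hg2dp)).congr_of_eventuallyEq
      (hevy.mono fun t ht => hFonD (x, t) ht)⟩
  obtain ⟨GY, hGY⟩ : ∃ v, HasDerivAt (fun t => G (x, t)) v y :=
    ⟨_, (HasDerivAt.inner ℝ (lineY hg2dp) (lineY hg2dp)).congr_of_eventuallyEq
      (hevy.mono fun t ht => hGonD (x, t) ht)⟩
  -- clean restatements of given scalar derivative facts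
  have hEX : HasDerivAt (fun t => E (t, y)) (Ex (x, y)) x := hEx (x, y) hp
  have hEY : HasDerivAt (fun t => E (x, t)) (Ey (x, y)) y := hEy (x, y) hp
  have hFX : HasDerivAt (fun t => F (t, y)) (Fx (x, y)) x := hFx (x, y) hp
  have hGX : HasDerivAt (fun t => G (t, y)) (Gx (x, y)) x := hGx (x, y) hp
  have hAX : HasDerivAt (fun t => α (t, y)) (αx (x, y)) x := hαx (x, y) hp
  have hAY : HasDerivAt (fun t => α (x, t)) (αy (x, y)) y := hαy (x, y) hp
  have hKX : HasDerivAt (fun t => K (t, y)) (Kx (x, y)) x := hKx (x, y) hp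
  have hKY : HasDerivAt (fun t => K (x, t)) (Ky (x, y)) y := hKy (x, y) hp
  -- derivatives of the coefficient functions
  have haX : HasDerivAt (fun t => K (t, y) * (Real.cos (α (t, y)) / Real.sqrt (E (t, y))
      - Real.sin (α (t, y)) * (F (t, y) / E (t, y))
        / Real.sqrt (G (t, y) - F (t, y) ^ 2 / E (t, y))))
      (Kx (x, y) * (Real.cos (α (x, y)) / Real.sqrt (E (x, y)) - Real.sin (α (x, y)) * (F (x, y) / E (x, y)) / Real.sqrt (G (x, y) - F (x, y) ^ 2 / E (x, y))) + K (x, y) * ((-Real.sin (α (x, y)) * αx (x, y)) / Real.sqrt (E (x, y)) - Real.cos (α (x, y)) * Ex (x, y) / (2 * Real.sqrt (E (x, y)) ^ 3) - (Real.cos (α (x, y)) * αx (x, y)) * (F (x, y) / E (x, y)) / Real.sqrt (G (x, y) - F (x, y) ^ 2 / E (x, y)) - Real.sin (α (x, y)) * ((Fx (x, y) * E (x, y) - F (x, y) * Ex (x, y)) / E (x, y) ^ 2) / Real.sqrt (G (x, y) - F (x, y) ^ 2 / E (x, y)) + Real.sin (α (x, y)) * (F (x, y) / E (x, y)) * (Gx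 (x, y) - (2 * F (x, y) * Fx (x, y) * E (x, y) - F (x, y) ^ 2 * Ex (x, y)) / E (x, y) ^ 2) / (2 * Real.sqrt (G (x, y) - F (x, y) ^ 2 / E (x, y)) ^ 3))) x :=
    shapeA hEX hFX hGX hKX hAX.cos hAX.sin hE0 hw0
  have haY : HasDerivAt (fun t => K (x, t) * (Real.cos (α (x, t)) / Real.sqrt (E (x, t))
      - Real.sin (α (x, t)) * (F (x, t) / E (x, t))
        / Real.sqrt (G (x, t) - F (x, t) ^ 2 / E (x, t))))
      (Ky (x, y) * (Real.cos (α (x, y)) / Real.sqrt (E (x, y)) - Real.sin (α (x, y)) * (F (x, y) / E (x, y)) / Real.sqrt (G (x, y) - F (x, y) ^ 2 / E (x, y))) + K (x, y) * ((-Real.sin (α (x, y)) * αy (x, y)) / Real.sqrt (E (x, y)) - Real.cos (α (x, y)) * Ey (x, y) / (2 * Real.sqrt (E (x, y)) ^ 3) - (Real.cos (α (x, y)) * αy (x, y)) * (F (x, y) / E (x, y)) / Real.sqrt (G (x, y) - F (x, y) ^ 2 / E (x, y)) - Real.sin (α (x, y)) * ((FY * E (x, y) - F (x, y) * Ey (x,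 y)) / E (x, y) ^ 2) / Real.sqrt (G (x, y) - F (x, y) ^ 2 / E (x, y)) + Real.sin (α (x, y)) * (F (x, y) / E (x, y)) * (GY - (2 * F (x, y) * FY * E (x, y) - F (x, y) ^ 2 * Ey (x, y)) / E (x, y) ^ 2) / (2 * Real.sqrt (G (x, y) - F (x, y) ^ 2 / E (x, y)) ^ 3))) y :=
    shapeA hEY hFY hGY hKY hAY.cos hAY.sin hE0 hw0
  have hbX : HasDerivAt (fun t => K (t, y) * Real.sin (α (t, y))
        / Real.sqrt (G (t, y) - F (t, y) ^ 2 / E (t, y)))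
      (Kx (x, y) * Real.sin (α (x, y)) / Real.sqrt (G (x, y) - F (x, y) ^ 2 / E (x, y)) + K (x, y) * ((Real.cos (α (x, y)) * αx (x, y)) / Real.sqrt (G (x, y) - F (x, y) ^ 2 / E (x, y)) - Real.sin (α (x, y)) * (Gx (x, y) - (2 * F (x, y) * Fx (x, y) * E (x, y) - F (x, y) ^ 2 * Ex (x, y)) / E (x, y) ^ 2) / (2 * Real.sqrt (G (x, y) - F (x, y) ^ 2 / E (x, y)) ^ 3))) x :=
    shapeB hEX hFX hGX hKX hAX.sin hE0 hw0
  have hbY : HasDerivAt (fun t => K (x, t) * Real.sin (α (x, t))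
        / Real.sqrt (G (x, t) - F (x, t) ^ 2 / E (x, t)))
      (Ky (x, y) * Real.sin (α (x, y)) / Real.sqrt (G (x, y) - F (x, y) ^ 2 / E (x, y)) + K (x, y) * ((Real.cos (α (x, y)) * αy (x, y)) / Real.sqrt (G (x, y) - F (x, y) ^ 2 / E (x, y)) - Real.sin (α (x, y)) * (GY - (2 * F (x, y) * FY * E (x, y) - F (x, y) ^ 2 * Ey (x, y)) / E (x, y) ^ 2) / (2 * Real.sqrt (G (x, y) - F (x, y) ^ 2 / E (x, y)) ^ 3))) y :=
    shapeB hEY hFY hGY hKY hAY.sin hE0 hw0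
  have hcX : HasDerivAt (fun t => K (t, y) * ((-Real.sin (α (t, y))) / Real.sqrt (E (t, y))
      - Real.cos (α (t, y)) * (F (t, y) / E (t, y))
        / Real.sqrt (G (t, y) - F (t, y) ^ 2 / E (t, y))))
      (Kx (x, y) * ((-Real.sin (α (x, y))) / Real.sqrt (E (x, y)) - Real.cos (α (x, y)) * (F (x, y) / E (x, y)) / Real.sqrt (G (x, y) - F (x, y) ^ 2 / E (x, y))) + K (x, y) * ((-(Real.cos (α (x, y)) * αx (x, y))) / Real.sqrt (E (x, y)) - (-Real.sin (α (x, y))) * Ex (x, y) / (2 * Real.sqrt (E (x, y)) ^ 3) - (-Real.sin (α (x, y)) * αx (x, y)) * (F (x, y) / E (x, y)) / Real.sqrt (G (x, y) - F (x, y) ^ 2 / E (x, y)) - Real.cos (α (x, y)) * ((Fx (x, y) * E (x, y) - F (x, y) * Ex (x, y)) / E (x, y) ^ 2) / Real.sqrt (G (x, y) - F (x, y) ^ 2 / E (x, y)) + Real.cos (α (x, y)) * (F (x, y) / E (x, y)) * (Gx (x, y) - (2 * F (x, y) * Fx (x, y) * E (x, y) - F (x, y) ^ 2 * Ex (x, y))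 / E (x, y) ^ 2) / (2 * Real.sqrt (G (x, y) - F (x, y) ^ 2 / E (x, y)) ^ 3))) x :=
    shapeA hEX hFX hGX hKX hAX.sin.neg hAX.cos hE0 hw0
  have hcY : HasDerivAt (fun t => K (x, t) * ((-Real.sin (α (x, t))) / Real.sqrt (E (x, t))
      - Real.cos (α (x, t)) * (F (x, t) / E (x, t))
        / Real.sqrt (G (x, t) - F (x, t) ^ 2 / E (x, t))))
      (Ky (x, y) * ((-Real.sin (α (x, y))) / Real.sqrt (E (x, y)) - Real.cos (α (x, y)) * (F (x, y) / E (x, y)) / Real.sqrt (G (x, y) - F (x, y) ^ 2 / E (x, y))) + K (x, y) * ((-(Real.cos (α (x, y)) * αy (x, y))) / Real.sqrt (E (x, y)) - (-Real.sin (α (x, y))) * Ey (x, y) / (2 * Real.sqrt (E (x, y)) ^ 3) - (-Real.sin (α (x, y)) * αy (x, y)) * (F (x, y) / E (x, y)) / Real.sqrt (G (x, y) - F (x, y) ^ 2 / E (x, y)) - Real.cos (α (x, y)) * ((FY * E (x, y) - F (x, y) * Ey (x, y)) / E (x, y) ^ 2) / Real.sqrt (G (x, y) - F (x, y) ^ 2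 / E (x, y)) + Real.cos (α (x, y)) * (F (x, y) / E (x, y)) * (GY - (2 * F (x, y) * FY * E (x, y) - F (x, y) ^ 2 * Ey (x, y)) / E (x, y) ^ 2) / (2 * Real.sqrt (G (x, y) - F (x, y) ^ 2 / E (x, y)) ^ 3))) y :=
    shapeA hEY hFY hGY hKY hAY.sin.neg hAY.cos hE0 hw0
  have hdX : HasDerivAt (fun t => K (t, y) * Real.cos (α (t, y))
        / Real.sqrt (G (t, y) - F (t, y) ^ 2 / E (t, y)))
      (Kx (x, y) * Real.cos (α (x, y)) / Real.sqrt (G (x, y) - F (x, y) ^ 2 / E (x, y)) + K (x, y) * ((-Real.sin (α (x, y)) * αx (x, y)) / Real.sqrt (G (x, y) - F (x, y) ^ 2 / E (x, y)) - Real.cos (α (x, y)) * (Gx (x, y) - (2 * F (x, y) * Fx (x, y) * E (x, y) - F (x, y) ^ 2 * Ex (x, y)) / E (x, y) ^ 2) / (2 * Real.sqrt (G (x, y) - F (x, y) ^ 2 / E (x, y)) ^ 3))) x :=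
    shapeB hEX hFX hGX hKX hAX.cos hE0 hw0
  have hdY : HasDerivAt (fun t => K (x, t) * Real.cos (α (x, t))
        / Real.sqrt (G (x, t) - F (x, t) ^ 2 / E (x, t)))
      (Ky (x, y) * Real.cos (α (x, y)) / Real.sqrt (G (x, y) - F (x, y) ^ 2 / E (x, y)) + K (x, y) * ((-Real.sin (α (x, y)) * αy (x, y)) / Real.sqrt (G (x, y) - F (x, y) ^ 2 / E (x, y)) - Real.cos (α (x, y)) * (GY - (2 * F (x, y) * FY * E (x, y) - F (x, y) ^ 2 * Ey (x, y)) / E (x, y) ^ 2) / (2 * Real.sqrt (G (x, y) - F (x, y) ^ 2 / E (x, y)) ^ 3))) y :=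
    shapeB hEY hFY hGY hKY hAY.cos hE0 hw0
  -- identify the partial derivatives of f₁ and f₂
  have hl1x : (fun t => f₁ (t, y)) = fun t =>
      (K (t, y) * (Real.cos (α (t, y)) / Real.sqrt (E (t, y))
        - Real.sin (α (t, y)) * (F (t, y) / E (t, y))
          / Real.sqrt (G (t, y) - F (t, y) ^ 2 / E (t, y)))) • fx (t, y)
      + (K (t, y) * Real.sin (α (t, y))
          / Real.sqrt (G (t, y) - F (t, y) ^ 2 / E (t, y))) • fy (t, y) :=
    funext fun t => hf1ab (t, y)
  have hl1y : (fun t => f₁ (x, t)) = fun t =>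
      (K (x, t) * (Real.cos (α (x, t)) / Real.sqrt (E (x, t))
        - Real.sin (α (x, t)) * (F (x, t) / E (x, t))
          / Real.sqrt (G (x, t) - F (x, t) ^ 2 / E (x, t)))) • fx (x, t)
      + (K (x, t) * Real.sin (α (x, t))
          / Real.sqrt (G (x, t) - F (x, t) ^ 2 / E (x, t))) • fy (x, t) :=
    funext fun t => hf1ab (x, t)
  have hl2x : (fun t => f₂ (t, y)) = fun t =>
      (K (t, y) * ((-Real.sin (α (t, y))) / Real.sqrt (E (t, y))
        - Real.cos (α (t, y)) * (F (t, y) / E (t, y))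
          / Real.sqrt (G (t, y) - F (t, y) ^ 2 / E (t, y)))) • fx (t, y)
      + (K (t, y) * Real.cos (α (t, y))
          / Real.sqrt (G (t, y) - F (t, y) ^ 2 / E (t, y))) • fy (t, y) :=
    funext fun t => hf2cd (t, y)
  have hl2y : (fun t => f₂ (x, t)) = fun t =>
      (K (x, t) * ((-Real.sin (α (x, t))) / Real.sqrt (E (x, t))
        - Real.cos (α (x, t)) * (F (x, t) / E (x, t))
          / Real.sqrt (G (x, t) - F (x, t) ^ 2 / E (x, t)))) • fx (x, t)
      + (K (x, t) * Real.cos (α (x, t))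
          / Real.sqrt (G (x, t) - F (x, t) ^ 2 / E (x, t))) • fy (x, t) :=
    funext fun t => hf2cd (x, t)
  have H1x : HasDerivAt (fun t => f₁ (t, y)) (f₁x (x, y)) x := hf₁x (x, y) hp
  have H1y : HasDerivAt (fun t => f₁ (x, t)) (f₁y (x, y)) y := hf₁y (x, y) hp
  have H2x : HasDerivAt (fun t => f₂ (t, y)) (f₂x (x, y)) x := hf₂x (x, y) hp
  have H2y : HasDerivAt (fun t => f₂ (x, t)) (f₂y (x, y)) y := hf₂y (x, y) hp
  rw [hl1x] at H1x
  rw [hl1y] at H1y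
  rw [hl2x] at H2x
  rw [hl2y] at H2y
  have hf1xval := H1x.unique ((haX.smul hfxxD).add (hbX.smul hfyxD))
  have hf1yval := H1y.unique ((haY.smul hfxyD).add (hbY.smul hfyyD))
  have hf2xval := H2x.unique ((hcX.smul hfxxD).add (hdX.smul hfyxD))
  have hf2yval := H2y.unique ((hcY.smul hfxyD).add (hdY.smul hfyyD))
  -- the key vector identity
  have hveceq : Lβf₁ (x, y) - Lγf₂ (x, y)
      = ((K (x, y) * ((-Real.sin (α (x, y))) / Real.sqrt (E (x, y)) - Real.cos (α (x, y)) * (F (x, y) / E (x, y)) / Real.sqrt (G (x, y) - F (x, y) ^ 2 / E (x, y)))) * (Kx (x, y) * (Real.cos (α (x, y)) / Real.sqrt (E (x, y)) - Real.sin (α (x, y)) * (F (x, y) / E (x, y)) / Real.sqrt (G (x, y) - F (x, y) ^ 2 / E (x, y))) + K (x, y) * ((-Real.sin (α (x, y)) * αx (x, y)) / Real.sqrt (E (x, y)) - Real.cos (α (x, y)) * Ex (x, y) / (2 * Real.sqrt (E (x, y)) ^ 3) - (Real.cos (α (x, y)) * αx (x, y)) * (F (x, y) / E (x, y)) / Real.sqrt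 (G (x, y) - F (x, y) ^ 2 / E (x, y)) - Real.sin (α (x, y)) * ((Fx (x, y) * E (x, y) - F (x, y) * Ex (x, y)) / E (x, y) ^ 2) / Real.sqrt (G (x, y) - F (x, y) ^ 2 / E (x, y)) + Real.sin (α (x, y)) * (F (x, y) / E (x, y)) * (Gx (x, y) - (2 * F (x, y) * Fx (x, y) * E (x, y) - F (x, y) ^ 2 * Ex (x, y)) / E (x, y) ^ 2) / (2 * Real.sqrt (G (x, y) - F (x, y) ^ 2 / E (x, y)) ^ 3))) + (K (x, y) * Real.cos (α (x, y)) / Real.sqrt (G (x, y) - F (x, y) ^ 2 / E (x, y))) * (Ky (x, y) * (Real.cos (α (x, y)) / Real.sqrt (E (x, y)) - Real.sin (α (x, y)) * (F (x, y) / E (x, y)) / Real.sqrt (G (x, y) - F (x, y) ^ 2 / E (x, y))) + K (x, y) * ((-Real.sin (α (x, y)) * αy (x, y)) / Real.sqrt (E (x, y)) - Real.cos (α (x, y)) * Ey (x, y) / (2 * Real.sqrt (E (x, y)) ^ 3) - (Real.cos (α (x, y)) * αy (x, y)) * (F (x, y) / E (x, y)) / Real.sqrt (G (x, y) - F (x,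 y) ^ 2 / E (x, y)) - Real.sin (α (x, y)) * ((FY * E (x, y) - F (x, y) * Ey (x, y)) / E (x, y) ^ 2) / Real.sqrt (G (x, y) - F (x, y) ^ 2 / E (x, y)) + Real.sin (α (x, y)) * (F (x, y) / E (x, y)) * (GY - (2 * F (x, y) * FY * E (x, y) - F (x, y) ^ 2 * Ey (x, y)) / E (x, y) ^ 2) / (2 * Real.sqrt (G (x, y) - F (x, y) ^ 2 / E (x, y)) ^ 3))) - (K (x, y) * (Real.cos (α (x, y)) / Real.sqrt (E (x, y)) - Real.sin (α (x, y)) * (F (x, y) / E (x, y)) / Real.sqrt (G (x, y) - F (x, y) ^ 2 / E (x, y)))) * (Kx (x, y) * ((-Real.sin (α (x, y))) / Real.sqrt (E (x, y)) - Real.cos (α (x, y)) * (F (x, y) / E (x, y)) / Real.sqrt (G (x, y) - F (x, y) ^ 2 / E (x, y))) + K (x, y) * ((-(Real.cos (α (x, y)) * αx (x, y))) / Real.sqrt (E (x, y)) - (-Real.sin (α (x, y))) * Ex (x, y) / (2 * Real.sqrt (E (x, y)) ^ 3) - (-Real.sin (α (x, y)) * αx (x, y)) * (F (x, y) / E (x,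 y)) / Real.sqrt (G (x, y) - F (x, y) ^ 2 / E (x, y)) - Real.cos (α (x, y)) * ((Fx (x, y) * E (x, y) - F (x, y) * Ex (x, y)) / E (x, y) ^ 2) / Real.sqrt (G (x, y) - F (x, y) ^ 2 / E (x, y)) + Real.cos (α (x, y)) * (F (x, y) / E (x, y)) * (Gx (x, y) - (2 * F (x, y) * Fx (x, y) * E (x, y) - F (x, y) ^ 2 * Ex (x, y)) / E (x, y) ^ 2) / (2 * Real.sqrt (G (x, y) - F (x, y) ^ 2 / E (x, y)) ^ 3))) - (K (x, y) * Real.sin (α (x, y)) / Real.sqrt (G (x, y) - F (x, y) ^ 2 / E (x, y))) * (Ky (x, y) * ((-Real.sin (α (x, y))) / Real.sqrt (E (x, y)) - Real.cos (α (x, y)) * (F (x, y) / E (x, y)) / Real.sqrt (G (x, y) - F (x, y) ^ 2 / E (x, y))) + K (x, y) * ((-(Real.cos (α (x, y)) * αy (x, y))) / Real.sqrt (E (x, y)) - (-Real.sin (α (x, y))) * Ey (x, y) / (2 * Real.sqrt (E (x, y)) ^ 3) - (-Real.sin (α (x, y)) * αy (x, y)) * (F (x, y) / E (x, y)) / Real.sqrt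 (G (x, y) - F (x, y) ^ 2 / E (x, y)) - Real.cos (α (x, y)) * ((FY * E (x, y) - F (x, y) * Ey (x, y)) / E (x, y) ^ 2) / Real.sqrt (G (x, y) - F (x, y) ^ 2 / E (x, y)) + Real.cos (α (x, y)) * (F (x, y) / E (x, y)) * (GY - (2 * F (x, y) * FY * E (x, y) - F (x, y) ^ 2 * Ey (x, y)) / E (x, y) ^ 2) / (2 * Real.sqrt (G (x, y) - F (x, y) ^ 2 / E (x, y)) ^ 3)))) • fx (x, y) + ((K (x, y) * ((-Real.sin (α (x, y))) / Real.sqrt (E (x, y)) - Real.cos (α (x, y)) * (F (x, y) / E (x, y)) / Real.sqrt (G (x, y) - F (x, y) ^ 2 / E (x, y)))) * (Kx (x, y) * Real.sin (α (x, y)) / Real.sqrt (G (x, y) - F (x, y) ^ 2 / E (x, y)) + K (x, y) * ((Real.cos (α (x, y)) * αx (x, y)) / Real.sqrt (G (x, y) - F (x, y) ^ 2 / E (x, y)) - Real.sin (α (x, y)) * (Gx (x, y) - (2 * F (x, y) * Fx (x, y) * E (x, y) - F (x, y) ^ 2 * Ex (x, y)) / E (x, y) ^ 2) / (2 * Real.sqrt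 (G (x, y) - F (x, y) ^ 2 / E (x, y)) ^ 3))) + (K (x, y) * Real.cos (α (x, y)) / Real.sqrt (G (x, y) - F (x, y) ^ 2 / E (x, y))) * (Ky (x, y) * Real.sin (α (x, y)) / Real.sqrt (G (x, y) - F (x, y) ^ 2 / E (x, y)) + K (x, y) * ((Real.cos (α (x, y)) * αy (x, y)) / Real.sqrt (G (x, y) - F (x, y) ^ 2 / E (x, y)) - Real.sin (α (x, y)) * (GY - (2 * F (x, y) * FY * E (x, y) - F (x, y) ^ 2 * Ey (x, y)) / E (x, y) ^ 2) / (2 * Real.sqrt (G (x, y) - F (x, y) ^ 2 / E (x, y)) ^ 3))) - (K (x, y) * (Real.cos (α (x, y)) / Real.sqrt (E (x, y)) - Real.sin (α (x, y)) * (F (x, y) / E (x, y)) / Real.sqrt (G (x, y) - F (x, y) ^ 2 / E (x, y)))) * (Kx (x, y) * Real.cos (α (x, y)) / Real.sqrt (G (x, y) - F (x, y) ^ 2 / E (x, y)) + K (x, y) * ((-Real.sin (α (x, y)) * αx (x, y)) / Real.sqrt (G (x, y) - F (x, y) ^ 2 / E (x, y)) - Real.cos (α (x, y)) * (Gx (x,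 y) - (2 * F (x, y) * Fx (x, y) * E (x, y) - F (x, y) ^ 2 * Ex (x, y)) / E (x, y) ^ 2) / (2 * Real.sqrt (G (x, y) - F (x, y) ^ 2 / E (x, y)) ^ 3))) - (K (x, y) * Real.sin (α (x, y)) / Real.sqrt (G (x, y) - F (x, y) ^ 2 / E (x, y))) * (Ky (x, y) * Real.cos (α (x, y)) / Real.sqrt (G (x, y) - F (x, y) ^ 2 / E (x, y)) + K (x, y) * ((-Real.sin (α (x, y)) * αy (x, y)) / Real.sqrt (G (x, y) - F (x, y) ^ 2 / E (x, y)) - Real.cos (α (x, y)) * (GY - (2 * F (x, y) * FY * E (x, y) - F (x, y) ^ 2 * Ey (x, y)) / E (x, y) ^ 2) / (2 * Real.sqrt (G (x, y) - F (x, y) ^ 2 / E (x, y)) ^ 3)))) • fy (x, y) := by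
    rw [hLβf₁, hLγf₂, hf1xval, hf1yval, hf2xval, hf2yval, hfxyeq]
    match_scalars <;> ring
  -- linear independence step
  have hiff1 : Lβf₁ (x, y) = Lγf₂ (x, y) ↔ (((K (x, y) * ((-Real.sin (α (x, y))) / Real.sqrt (E (x, y)) - Real.cos (α (x, y)) * (F (x, y) / E (x, y)) / Real.sqrt (G (x, y) - F (x, y) ^ 2 / E (x, y)))) * (Kx (x, y) * (Real.cos (α (x, y)) / Real.sqrt (E (x, y)) - Real.sin (α (x, y)) * (F (x, y) / E (x, y)) / Real.sqrt (G (x, y) - F (x, y) ^ 2 / E (x, y))) + K (x, y) * ((-Real.sin (α (x, y)) * αx (x, y)) / Real.sqrt (E (x, y)) - Real.cos (α (x, y)) * Ex (x, y) / (2 * Real.sqrt (E (x, y)) ^ 3) - (Real.cos (α (x, y)) * αx (x, y)) * (F (x, y) / E (x, y)) / Real.sqrt (G (x, y) - F (x, y) ^ 2 / E (x, y)) - Real.sin (α (x, y)) * ((Fx (x, y) * E (x, y) - F (x, y) * Ex (x, y)) / E (x, y) ^ 2) / Real.sqrt (G (x, y) - F (x, y) ^ 2 / E (x, y)) + Real.sin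 (α (x, y)) * (F (x, y) / E (x, y)) * (Gx (x, y) - (2 * F (x, y) * Fx (x, y) * E (x, y) - F (x, y) ^ 2 * Ex (x, y)) / E (x, y) ^ 2) / (2 * Real.sqrt (G (x, y) - F (x, y) ^ 2 / E (x, y)) ^ 3))) + (K (x, y) * Real.cos (α (x, y)) / Real.sqrt (G (x, y) - F (x, y) ^ 2 / E (x, y))) * (Ky (x, y) * (Real.cos (α (x, y)) / Real.sqrt (E (x, y)) - Real.sin (α (x, y)) * (F (x, y) / E (x, y)) / Real.sqrt (G (x, y) - F (x, y) ^ 2 / E (x, y))) + K (x, y) * ((-Real.sin (α (x, y)) * αy (x, y)) / Real.sqrt (E (x, y)) - Real.cos (α (x, y)) * Ey (x, y) / (2 * Real.sqrt (E (x, y)) ^ 3) - (Real.cos (α (x, y)) * αy (x, y)) * (F (x, y) / E (x, y)) / Real.sqrt (G (x, y) - F (x, y) ^ 2 / E (x, y)) - Real.sin (α (x, y)) * ((FY * E (x, y) - F (x, y) * Ey (x, y)) / E (x, y) ^ 2) / Real.sqrt (G (x, y) - F (x, y) ^ 2 / E (x, y)) + Real.sin (α (x, y)) * (F (x, y) / E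 (x, y)) * (GY - (2 * F (x, y) * FY * E (x, y) - F (x, y) ^ 2 * Ey (x, y)) / E (x, y) ^ 2) / (2 * Real.sqrt (G (x, y) - F (x, y) ^ 2 / E (x, y)) ^ 3))) - (K (x, y) * (Real.cos (α (x, y)) / Real.sqrt (E (x, y)) - Real.sin (α (x, y)) * (F (x, y) / E (x, y)) / Real.sqrt (G (x, y) - F (x, y) ^ 2 / E (x, y)))) * (Kx (x, y) * ((-Real.sin (α (x, y))) / Real.sqrt (E (x, y)) - Real.cos (α (x, y)) * (F (x, y) / E (x, y)) / Real.sqrt (G (x, y) - F (x, y) ^ 2 / E (x, y))) + K (x, y) * ((-(Real.cos (α (x, y)) * αx (x, y))) / Real.sqrt (E (x, y)) - (-Real.sin (α (x, y))) * Ex (x, y) / (2 * Real.sqrt (E (x, y)) ^ 3) - (-Real.sin (α (x, y)) * αx (x, y)) * (F (x, y) / E (x, y)) / Real.sqrt (G (x, y) - F (x, y) ^ 2 / E (x, y)) - Real.cos (α (x, y)) * ((Fx (x, y) * E (x, y) - F (x, y) * Ex (x, y)) / E (x, y) ^ 2) / Real.sqrt (G (x, y) - F (x, y) ^ 2 / E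 (x, y)) + Real.cos (α (x, y)) * (F (x, y) / E (x, y)) * (Gx (x, y) - (2 * F (x, y) * Fx (x, y) * E (x, y) - F (x, y) ^ 2 * Ex (x, y)) / E (x, y) ^ 2) / (2 * Real.sqrt (G (x, y) - F (x, y) ^ 2 / E (x, y)) ^ 3))) - (K (x, y) * Real.sin (α (x, y)) / Real.sqrt (G (x, y) - F (x, y) ^ 2 / E (x, y))) * (Ky (x, y) * ((-Real.sin (α (x, y))) / Real.sqrt (E (x, y)) - Real.cos (α (x, y)) * (F (x, y) / E (x, y)) / Real.sqrt (G (x, y) - F (x, y) ^ 2 / E (x, y))) + K (x, y) * ((-(Real.cos (α (x, y)) * αy (x, y))) / Real.sqrt (E (x, y)) - (-Real.sin (α (x, y))) * Ey (x, y) / (2 * Real.sqrt (E (x, y)) ^ 3) - (-Real.sin (α (x, y)) * αy (x, y)) * (F (x, y) / E (x, y)) / Real.sqrt (G (x, y) - F (x, y) ^ 2 / E (x, y)) - Real.cos (α (x, y)) * ((FY * E (x, y) - F (x, y) * Ey (x, y)) / E (x, y) ^ 2) / Real.sqrt (G (x, y) - F (x, y) ^ 2 / E (x, y)) + Real.cos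 (α (x, y)) * (F (x, y) / E (x, y)) * (GY - (2 * F (x, y) * FY * E (x, y) - F (x, y) ^ 2 * Ey (x, y)) / E (x, y) ^ 2) / (2 * Real.sqrt (G (x, y) - F (x, y) ^ 2 / E (x, y)) ^ 3)))) = 0 ∧ ((K (x, y) * ((-Real.sin (α (x, y))) / Real.sqrt (E (x, y)) - Real.cos (α (x, y)) * (F (x, y) / E (x, y)) / Real.sqrt (G (x, y) - F (x, y) ^ 2 / E (x, y)))) * (Kx (x, y) * Real.sin (α (x, y)) / Real.sqrt (G (x, y) - F (x, y) ^ 2 / E (x, y)) + K (x, y) * ((Real.cos (α (x, y)) * αx (x, y)) / Real.sqrt (G (x, y) - F (x, y) ^ 2 / E (x, y)) - Real.sin (α (x, y)) * (Gx (x, y) - (2 * F (x, y) * Fx (x, y) * E (x, y) - F (x, y) ^ 2 * Ex (x, y)) / E (x, y) ^ 2) / (2 * Real.sqrt (G (x, y) - F (x, y) ^ 2 / E (x, y)) ^ 3))) + (K (x, y) * Real.cos (α (x, y)) / Real.sqrt (G (x, y) - F (x, y) ^ 2 / E (x, y))) * (Ky (x, y) * Real.sin (α (x, y)) / Real.sqrt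 (G (x, y) - F (x, y) ^ 2 / E (x, y)) + K (x, y) * ((Real.cos (α (x, y)) * αy (x, y)) / Real.sqrt (G (x, y) - F (x, y) ^ 2 / E (x, y)) - Real.sin (α (x, y)) * (GY - (2 * F (x, y) * FY * E (x, y) - F (x, y) ^ 2 * Ey (x, y)) / E (x, y) ^ 2) / (2 * Real.sqrt (G (x, y) - F (x, y) ^ 2 / E (x, y)) ^ 3))) - (K (x, y) * (Real.cos (α (x, y)) / Real.sqrt (E (x, y)) - Real.sin (α (x, y)) * (F (x, y) / E (x, y)) / Real.sqrt (G (x, y) - F (x, y) ^ 2 / E (x, y)))) * (Kx (x, y) * Real.cos (α (x, y)) / Real.sqrt (G (x, y) - F (x, y) ^ 2 / E (x, y)) + K (x, y) * ((-Real.sin (α (x, y)) * αx (x, y)) / Real.sqrt (G (x, y) - F (x, y) ^ 2 / E (x, y)) - Real.cos (α (x, y)) * (Gx (x, y) - (2 * F (x, y) * Fx (x, y) * E (x, y) - F (x, y) ^ 2 * Ex (x, y)) / E (x, y) ^ 2) / (2 * Real.sqrt (G (x, y) - F (x, y) ^ 2 / E (x, y)) ^ 3))) - (K (x, y) * Real.sin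 (α (x, y)) / Real.sqrt (G (x, y) - F (x, y) ^ 2 / E (x, y))) * (Ky (x, y) * Real.cos (α (x, y)) / Real.sqrt (G (x, y) - F (x, y) ^ 2 / E (x, y)) + K (x, y) * ((-Real.sin (α (x, y)) * αy (x, y)) / Real.sqrt (G (x, y) - F (x, y) ^ 2 / E (x, y)) - Real.cos (α (x, y)) * (GY - (2 * F (x, y) * FY * E (x, y) - F (x, y) ^ 2 * Ey (x, y)) / E (x, y) ^ 2) / (2 * Real.sqrt (G (x, y) - F (x, y) ^ 2 / E (x, y)) ^ 3)))) = 0) := by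
    rw [← sub_eq_zero, hveceq]
    constructor
    · intro h
      exact LinearIndependent.pair_iff.1 (hind (x, y) hp) _ _ h
    · rintro ⟨h1, h2⟩
      rw [h1, h2]
      simp
  -- the two rotation identities
  have hJ1 : Real.sqrt (E (x, y)) * (((K (x, y) * ((-Real.sin (α (x, y))) / Real.sqrt (E (x, y)) - Real.cos (α (x, y)) * (F (x, y) / E (x, y)) / Real.sqrt (G (x, y) - F (x, y) ^ 2 / E (x, y)))) * (Kx (x, y) * (Real.cos (α (x, y)) / Real.sqrt (E (x, y)) - Real.sin (α (x, y)) * (F (x, y) / E (x, y)) / Real.sqrt (G (x, y) - F (x, y) ^ 2 / E (x, y))) + K (x, y) * ((-Real.sin (α (x, y)) * αx (x, y)) / Real.sqrt (E (x, y)) - Real.cos (α (x, y)) * Ex (x, y) / (2 * Real.sqrt (E (x, y)) ^ 3) - (Real.cos (α (x, y)) * αx (x, y)) * (F (x, y) / E (x, y)) / Real.sqrt (G (x, y) - F (x, y) ^ 2 / E (x, y)) - Real.sin (α (x, y)) * ((Fx (x, y) * E (x, y) - F (x, y) * Ex (x, y)) / E (x, y) ^ 2) / Real.sqrt (G (x,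 y) - F (x, y) ^ 2 / E (x, y)) + Real.sin (α (x, y)) * (F (x, y) / E (x, y)) * (Gx (x, y) - (2 * F (x, y) * Fx (x, y) * E (x, y) - F (x, y) ^ 2 * Ex (x, y)) / E (x, y) ^ 2) / (2 * Real.sqrt (G (x, y) - F (x, y) ^ 2 / E (x, y)) ^ 3))) + (K (x, y) * Real.cos (α (x, y)) / Real.sqrt (G (x, y) - F (x, y) ^ 2 / E (x, y))) * (Ky (x, y) * (Real.cos (α (x, y)) / Real.sqrt (E (x, y)) - Real.sin (α (x, y)) * (F (x, y) / E (x, y)) / Real.sqrt (G (x, y) - F (x, y) ^ 2 / E (x, y))) + K (x, y) * ((-Real.sin (α (x, y)) * αy (x, y)) / Real.sqrt (E (x, y)) - Real.cos (α (x, y)) * Ey (x, y) / (2 * Real.sqrt (E (x, y)) ^ 3) - (Real.cos (α (x, y)) * αy (x, y)) * (F (x, y) / E (x, y)) / Real.sqrt (G (x, y) - F (x, y) ^ 2 / E (x, y)) - Real.sin (α (x, y)) * ((FY * E (x, y) - F (x, y) * Ey (x, y)) / E (x, y) ^ 2) / Real.sqrt (G (x, y) - F (x, y) ^ 2 / E (x,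 y)) + Real.sin (α (x, y)) * (F (x, y) / E (x, y)) * (GY - (2 * F (x, y) * FY * E (x, y) - F (x, y) ^ 2 * Ey (x, y)) / E (x, y) ^ 2) / (2 * Real.sqrt (G (x, y) - F (x, y) ^ 2 / E (x, y)) ^ 3))) - (K (x, y) * (Real.cos (α (x, y)) / Real.sqrt (E (x, y)) - Real.sin (α (x, y)) * (F (x, y) / E (x, y)) / Real.sqrt (G (x, y) - F (x, y) ^ 2 / E (x, y)))) * (Kx (x, y) * ((-Real.sin (α (x, y))) / Real.sqrt (E (x, y)) - Real.cos (α (x, y)) * (F (x, y) / E (x, y)) / Real.sqrt (G (x, y) - F (x, y) ^ 2 / E (x, y))) + K (x, y) * ((-(Real.cos (α (x, y)) * αx (x, y))) / Real.sqrt (E (x, y)) - (-Real.sin (α (x, y))) * Ex (x, y) / (2 * Real.sqrt (E (x, y)) ^ 3) - (-Real.sin (α (x, y)) * αx (x, y)) * (F (x, y) / E (x, y)) / Real.sqrt (G (x, y) - F (x, y) ^ 2 / E (x, y)) - Real.cos (α (x, y)) * ((Fx (x, y) * E (x, y) - F (x, y) * Ex (x, y)) / E (x, y) ^ 2) / Real.sqrt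 (G (x, y) - F (x, y) ^ 2 / E (x, y)) + Real.cos (α (x, y)) * (F (x, y) / E (x, y)) * (Gx (x, y) - (2 * F (x, y) * Fx (x, y) * E (x, y) - F (x, y) ^ 2 * Ex (x, y)) / E (x, y) ^ 2) / (2 * Real.sqrt (G (x, y) - F (x, y) ^ 2 / E (x, y)) ^ 3))) - (K (x, y) * Real.sin (α (x, y)) / Real.sqrt (G (x, y) - F (x, y) ^ 2 / E (x, y))) * (Ky (x, y) * ((-Real.sin (α (x, y))) / Real.sqrt (E (x, y)) - Real.cos (α (x, y)) * (F (x, y) / E (x, y)) / Real.sqrt (G (x, y) - F (x, y) ^ 2 / E (x, y))) + K (x, y) * ((-(Real.cos (α (x, y)) * αy (x, y))) / Real.sqrt (E (x, y)) - (-Real.sin (α (x, y))) * Ey (x, y) / (2 * Real.sqrt (E (x, y)) ^ 3) - (-Real.sin (α (x, y)) * αy (x, y)) * (F (x, y) / E (x, y)) / Real.sqrt (G (x, y) - F (x, y) ^ 2 / E (x, y)) - Real.cos (α (x, y)) * ((FY * E (x, y) - F (x, y) * Ey (x, y)) / E (x, y) ^ 2) / Real.sqrt (G (x, y) - F (x,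 y) ^ 2 / E (x, y)) + Real.cos (α (x, y)) * (F (x, y) / E (x, y)) * (GY - (2 * F (x, y) * FY * E (x, y) - F (x, y) ^ 2 * Ey (x, y)) / E (x, y) ^ 2) / (2 * Real.sqrt (G (x, y) - F (x, y) ^ 2 / E (x, y)) ^ 3)))) + F (x, y) / E (x, y) * ((K (x, y) * ((-Real.sin (α (x, y))) / Real.sqrt (E (x, y)) - Real.cos (α (x, y)) * (F (x, y) / E (x, y)) / Real.sqrt (G (x, y) - F (x, y) ^ 2 / E (x, y)))) * (Kx (x, y) * Real.sin (α (x, y)) / Real.sqrt (G (x, y) - F (x, y) ^ 2 / E (x, y)) + K (x, y) * ((Real.cos (α (x, y)) * αx (x, y)) / Real.sqrt (G (x, y) - F (x, y) ^ 2 / E (x, y)) - Real.sin (α (x, y)) * (Gx (x, y) - (2 * F (x, y) * Fx (x, y) * E (x, y) - F (x, y) ^ 2 * Ex (x, y)) / E (x, y) ^ 2) / (2 * Real.sqrt (G (x, y) - F (x, y) ^ 2 / E (x, y)) ^ 3))) + (K (x, y) * Real.cos (α (x, y)) / Real.sqrt (G (x, y) - F (x, y) ^ 2 / E (x, y))) *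 (Ky (x, y) * Real.sin (α (x, y)) / Real.sqrt (G (x, y) - F (x, y) ^ 2 / E (x, y)) + K (x, y) * ((Real.cos (α (x, y)) * αy (x, y)) / Real.sqrt (G (x, y) - F (x, y) ^ 2 / E (x, y)) - Real.sin (α (x, y)) * (GY - (2 * F (x, y) * FY * E (x, y) - F (x, y) ^ 2 * Ey (x, y)) / E (x, y) ^ 2) / (2 * Real.sqrt (G (x, y) - F (x, y) ^ 2 / E (x, y)) ^ 3))) - (K (x, y) * (Real.cos (α (x, y)) / Real.sqrt (E (x, y)) - Real.sin (α (x, y)) * (F (x, y) / E (x, y)) / Real.sqrt (G (x, y) - F (x, y) ^ 2 / E (x, y)))) * (Kx (x, y) * Real.cos (α (x, y)) / Real.sqrt (G (x, y) - F (x, y) ^ 2 / E (x, y)) + K (x, y) * ((-Real.sin (α (x, y)) * αx (x, y)) / Real.sqrt (G (x, y) - F (x, y) ^ 2 / E (x, y)) - Real.cos (α (x, y)) * (Gx (x, y) - (2 * F (x, y) * Fx (x, y) * E (x, y) - F (x, y) ^ 2 * Ex (x, y)) / E (x, y) ^ 2) / (2 * Real.sqrt (G (x, y) - F (x, y) ^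 2 / E (x, y)) ^ 3))) - (K (x, y) * Real.sin (α (x, y)) / Real.sqrt (G (x, y) - F (x, y) ^ 2 / E (x, y))) * (Ky (x, y) * Real.cos (α (x, y)) / Real.sqrt (G (x, y) - F (x, y) ^ 2 / E (x, y)) + K (x, y) * ((-Real.sin (α (x, y)) * αy (x, y)) / Real.sqrt (G (x, y) - F (x, y) ^ 2 / E (x, y)) - Real.cos (α (x, y)) * (GY - (2 * F (x, y) * FY * E (x, y) - F (x, y) ^ 2 * Ey (x, y)) / E (x, y) ^ 2) / (2 * Real.sqrt (G (x, y) - F (x, y) ^ 2 / E (x, y)) ^ 3)))))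
      = Real.sin (α (x, y)) * (LγK (x, y) - K (x, y) ^ 2 * ((P₁ (x, y) + Q₁ (x, y)) * Real.cos (α (x, y)) - (P₂ (x, y) + Q₂ (x, y)) * Real.sin (α (x, y)))) + Real.cos (α (x, y)) * (LβK (x, y) + K (x, y) ^ 2 * ((P₁ (x, y) + Q₁ (x, y)) * Real.sin (α (x, y)) + (P₂ (x, y) + Q₂ (x, y)) * Real.cos (α (x, y)))) := by
    rw [hLγK, hLβK, hP₁, hP₂, hQ₁, hQ₂]
    set gg := Real.sqrt (G (x, y) - F (x, y) ^ 2 / E (x, y)) with hggdef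
    set ee := Real.sqrt (E (x, y)) with heedef
    have hGv : G (x, y) = gg ^ 2 + F (x, y) ^ 2 / E (x, y) := by linarith [hsW2]
    rw [hGv]
    have hEv : E (x, y) = ee ^ 2 := hsE2.symm
    rw [hEv]
    have hee0 : ee ≠ 0 := hsE0
    have hgg0 : gg ≠ 0 := hsW0
    field_simp
    ring
  have hJ2 : Real.sqrt (G (x, y) - F (x, y) ^ 2 / E (x, y)) * ((K (x, y) * ((-Real.sin (α (x, y))) / Real.sqrt (E (x, y)) - Real.cos (α (x, y)) * (F (x, y) / E (x, y)) / Real.sqrt (G (x, y) - F (x, y) ^ 2 / E (x, y)))) * (Kx (x, y) * Real.sin (α (x, y)) / Real.sqrt (G (x, y) - F (x, y) ^ 2 / E (x, y)) + K (x, y) * ((Real.cos (α (x, y)) * αx (x, y)) / Real.sqrt (G (x, y) - F (x, y) ^ 2 / E (x, y)) - Real.sin (α (x, y)) * (Gx (x, y) - (2 * F (x, y) * Fx (x, y) * E (x, y) - F (x, y) ^ 2 * Ex (x, y)) / E (x, y) ^ 2) / (2 * Real.sqrt (G (x, y) - F (x, y) ^ 2 / E (x, y)) ^ 3))) + (K (x,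 y) * Real.cos (α (x, y)) / Real.sqrt (G (x, y) - F (x, y) ^ 2 / E (x, y))) * (Ky (x, y) * Real.sin (α (x, y)) / Real.sqrt (G (x, y) - F (x, y) ^ 2 / E (x, y)) + K (x, y) * ((Real.cos (α (x, y)) * αy (x, y)) / Real.sqrt (G (x, y) - F (x, y) ^ 2 / E (x, y)) - Real.sin (α (x, y)) * (GY - (2 * F (x, y) * FY * E (x, y) - F (x, y) ^ 2 * Ey (x, y)) / E (x, y) ^ 2) / (2 * Real.sqrt (G (x, y) - F (x, y) ^ 2 / E (x, y)) ^ 3))) - (K (x, y) * (Real.cos (α (x, y)) / Real.sqrt (E (x, y)) - Real.sin (α (x, y)) * (F (x, y) / E (x, y)) / Real.sqrt (G (x, y) - F (x, y) ^ 2 / E (x, y)))) * (Kx (x, y) * Real.cos (α (x, y)) / Real.sqrt (G (x, y) - F (x, y) ^ 2 / E (x, y)) + K (x, y) * ((-Real.sin (α (x, y)) * αx (x, y)) / Real.sqrt (G (x, y) - F (x, y) ^ 2 / E (x, y)) - Real.cos (α (x, y)) * (Gx (x, y) - (2 * F (x, y) * Fx (x, y) * E (x, y) - F (x, y) ^ 2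 * Ex (x, y)) / E (x, y) ^ 2) / (2 * Real.sqrt (G (x, y) - F (x, y) ^ 2 / E (x, y)) ^ 3))) - (K (x, y) * Real.sin (α (x, y)) / Real.sqrt (G (x, y) - F (x, y) ^ 2 / E (x, y))) * (Ky (x, y) * Real.cos (α (x, y)) / Real.sqrt (G (x, y) - F (x, y) ^ 2 / E (x, y)) + K (x, y) * ((-Real.sin (α (x, y)) * αy (x, y)) / Real.sqrt (G (x, y) - F (x, y) ^ 2 / E (x, y)) - Real.cos (α (x, y)) * (GY - (2 * F (x, y) * FY * E (x, y) - F (x, y) ^ 2 * Ey (x, y)) / E (x, y) ^ 2) / (2 * Real.sqrt (G (x, y) - F (x, y) ^ 2 / E (x, y)) ^ 3))))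
      = -Real.cos (α (x, y)) * (LγK (x, y) - K (x, y) ^ 2 * ((P₁ (x, y) + Q₁ (x, y)) * Real.cos (α (x, y)) - (P₂ (x, y) + Q₂ (x, y)) * Real.sin (α (x, y)))) + Real.sin (α (x, y)) * (LβK (x, y) + K (x, y) ^ 2 * ((P₁ (x, y) + Q₁ (x, y)) * Real.sin (α (x, y)) + (P₂ (x, y) + Q₂ (x, y)) * Real.cos (α (x, y)))) := by
    rw [hLγK, hLβK, hP₁, hP₂, hQ₁, hQ₂]
    set gg := Real.sqrt (G (x, y) - F (x, y) ^ 2 / E (x, y)) with hggdef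
    set ee := Real.sqrt (E (x, y)) with heedef
    have hGv : G (x, y) = gg ^ 2 + F (x, y) ^ 2 / E (x, y) := by linarith [hsW2]
    rw [hGv]
    have hEv : E (x, y) = ee ^ 2 := hsE2.symm
    rw [hEv]
    have hee0 : ee ≠ 0 := hsE0
    have hgg0 : gg ≠ 0 := hsW0
    field_simp
    ring
  have hiff2 := alg_iff hsE0 hsW0 (Real.sin_sq_add_cos_sq (α (x, y))) hJ1 hJ2
  refine (hiff1.trans (hiff2.trans ?_))
  refine and_congr sub_eq_zero ?_
  rw [add_eq_zero_iff_eq_neg, neg_mul]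
end

section
/- Assume D is connected. If K and K̃ are two smooth positive functions on D, each satisfying the PDE system (★), and K(p₀) = K̃(p₀) at some point p₀ ∈ D, then K = K̃ on all of D. -/
/-!
STATEMENT 10: Assume D is connected. If K and K' are two smooth positive
functions on D, each satisfying the PDE system (★), and K(p₀) = K'(p₀) at some
point p₀ ∈ D, then K = K' on all of D.
-/

theorem stmt_10
    (D : Set (ℝ × ℝ)) (hD : IsOpen D) (hconn : IsConnected D)
    (f fx fy : ℝ × ℝ → EuclideanSpace ℝ (Fin 3))
    (hf : ContDiffOn ℝ (⊤ : ℕ∞) f D)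
    (hfx : ∀ p ∈ D, HasDerivAt (fun t : ℝ => f (t, p.2)) (fx p) p.1)
    (hfy : ∀ p ∈ D, HasDerivAt (fun t : ℝ => f (p.1, t)) (fy p) p.2)
    (hind : ∀ p ∈ D, LinearIndependent ℝ ![fx p, fy p])
    (E F G : ℝ × ℝ → ℝ)
    (hE : ∀ p, E p = (inner ℝ (fx p) (fx p) : ℝ))
    (hF : ∀ p, F p = (inner ℝ (fx p) (fy p) : ℝ))
    (hG : ∀ p, G p = (inner ℝ (fy p) (fy p) : ℝ))
    (hEpos : ∀ p ∈ D, 0 < E p)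
    (hdisc : ∀ p ∈ D, 0 < E p * G p - F p ^ 2)
    (α : ℝ × ℝ → ℝ)
    (hα : ContDiffOn ℝ (⊤ : ℕ∞) α D)
    -- partial derivatives of the scalar data E, F, G, α
    (Ex Ey Fx Gx αx αy : ℝ × ℝ → ℝ)
    (hEx : ∀ p ∈ D, HasDerivAt (fun t : ℝ => E (t, p.2)) (Ex p) p.1)
    (hEy : ∀ p ∈ D, HasDerivAt (fun t : ℝ => E (p.1, t)) (Ey p) p.2)
    (hFx : ∀ p ∈ D, HasDerivAt (fun t : ℝ => F (t, p.2)) (Fx p) p.1)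
    (hGx : ∀ p ∈ D, HasDerivAt (fun t : ℝ => G (t, p.2)) (Gx p) p.1)
    (hαx : ∀ p ∈ D, HasDerivAt (fun t : ℝ => α (t, p.2)) (αx p) p.1)
    (hαy : ∀ p ∈ D, HasDerivAt (fun t : ℝ => α (p.1, t)) (αy p) p.2)
    -- the quantities P₁, P₂, Q₁, Q₂
    (P₁ P₂ Q₁ Q₂ : ℝ × ℝ → ℝ)
    (hP₁ : ∀ p, P₁ p = ((F p ^ 2 / E p ^ 2) * Ex p - 2 * (F p / E p) * Fx p + Gx p)
        / (2 * (G p - F p ^ 2 / E p) * Real.sqrt (E p)))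
    (hP₂ : ∀ p, P₂ p = (-Ey p - (F p / E p) * Ex p + 2 * Fx p)
        / (2 * E p * Real.sqrt (G p - F p ^ 2 / E p)))
    (hQ₁ : ∀ p, Q₁ p = (αy p - (F p / E p) * αx p) / Real.sqrt (G p - F p ^ 2 / E p))
    (hQ₂ : ∀ p, Q₂ p = αx p / Real.sqrt (E p))
    -- the smooth positive function K with its partial derivatives, satisfying (★)
    (K : ℝ × ℝ → ℝ)
    (hK : ContDiffOn ℝ (⊤ : ℕ∞) K D) (hKpos : ∀ p ∈ D, 0 < K p)
    (Kx Ky : ℝ × ℝ → ℝ)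
    (hKx : ∀ p ∈ D, HasDerivAt (fun t : ℝ => K (t, p.2)) (Kx p) p.1)
    (hKy : ∀ p ∈ D, HasDerivAt (fun t : ℝ => K (p.1, t)) (Ky p) p.2)
    (hstar : ∀ p ∈ D,
      K p * (Real.cos (α p) * Kx p / Real.sqrt (E p)
          + Real.sin (α p) * (Ky p - (F p / E p) * Kx p)
            / Real.sqrt (G p - F p ^ 2 / E p))
        = K p ^ 2 * ((P₁ p + Q₁ p) * Real.cos (α p)
            - (P₂ p + Q₂ p) * Real.sin (α p))
      ∧ K p * (-(Real.sin (α p)) * Kx p / Real.sqrt (E p)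
          + Real.cos (α p) * (Ky p - (F p / E p) * Kx p)
            / Real.sqrt (G p - F p ^ 2 / E p))
        = -(K p ^ 2) * ((P₁ p + Q₁ p) * Real.sin (α p)
            + (P₂ p + Q₂ p) * Real.cos (α p)))
    -- the smooth positive function K' with its partial derivatives, satisfying (★)
    (K' : ℝ × ℝ → ℝ)
    (hK' : ContDiffOn ℝ (⊤ : ℕ∞) K' D) (hK'pos : ∀ p ∈ D, 0 < K' p)
    (K'x K'y : ℝ × ℝ → ℝ)
    (hK'x : ∀ p ∈ D, HasDerivAt (fun t : ℝ => K' (t, p.2)) (K'x p) p.1)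
    (hK'y : ∀ p ∈ D, HasDerivAt (fun t : ℝ => K' (p.1, t)) (K'y p) p.2)
    (hstar' : ∀ p ∈ D,
      K' p * (Real.cos (α p) * K'x p / Real.sqrt (E p)
          + Real.sin (α p) * (K'y p - (F p / E p) * K'x p)
            / Real.sqrt (G p - F p ^ 2 / E p))
        = K' p ^ 2 * ((P₁ p + Q₁ p) * Real.cos (α p)
            - (P₂ p + Q₂ p) * Real.sin (α p))
      ∧ K' p * (-(Real.sin (α p)) * K'x p / Real.sqrt (E p)
          + Real.cos (α p) * (K'y p - (F p / E p) * K'x p)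
            / Real.sqrt (G p - F p ^ 2 / E p))
        = -(K' p ^ 2) * ((P₁ p + Q₁ p) * Real.sin (α p)
            + (P₂ p + Q₂ p) * Real.cos (α p)))
    -- the two functions agree at some point of D
    (p₀ : ℝ × ℝ) (hp₀ : p₀ ∈ D) (hval : K p₀ = K' p₀) :
    ∀ p ∈ D, K p = K' p := by
  -- Key pointwise fact: the logarithmic gradients of K and K' agree.
  have key : ∀ p ∈ D, Kx p * K' p = K'x p * K p ∧ Ky p * K' p = K'y p * K p := by
    intro p hp
    obtain ⟨e1, e2⟩ := hstar p hp
    obtain ⟨e1', e2'⟩ := hstar' p hp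
    have hpyth : Real.sin (α p) ^ 2 + Real.cos (α p) ^ 2 = 1 :=
      Real.sin_sq_add_cos_sq (α p)
    have hE0 := hEpos p hp
    have hW0 : 0 < G p - F p ^ 2 / E p := by
      have h : G p - F p ^ 2 / E p = (E p * G p - F p ^ 2) / E p := by
        field_simp
      rw [h]
      exact div_pos (hdisc p hp) hE0
    have hrE : (0:ℝ) < Real.sqrt (E p) := Real.sqrt_pos.2 hE0
    have hrW : (0:ℝ) < Real.sqrt (G p - F p ^ 2 / E p) := Real.sqrt_pos.2 hW0
    have hK0 : K p ≠ 0 := (hKpos p hp).ne'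
    have hK'0 : K' p ≠ 0 := (hK'pos p hp).ne'
    set c := Real.cos (α p) with hc
    set s := Real.sin (α p) with hs
    set a := P₁ p + Q₁ p with ha
    set b := P₂ p + Q₂ p with hb
    -- u := Kx/√E, v := (Ky - (F/E)Kx)/√W
    have hu : K p * (Kx p / Real.sqrt (E p)) = K p ^ 2 * a := by
      linear_combination c * e1 - s * e2 +
        (K p ^ 2 * a - K p * (Kx p / Real.sqrt (E p))) * hpyth
    have hv : K p * ((Ky p - F p / E p * Kx p) / Real.sqrt (G p - F p ^ 2 / E p))
        = -(K p ^ 2 * b) := by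
      linear_combination s * e1 + c * e2 +
        (-(K p ^ 2 * b) - K p * ((Ky p - F p / E p * Kx p)
          / Real.sqrt (G p - F p ^ 2 / E p))) * hpyth
    have hu' : K' p * (K'x p / Real.sqrt (E p)) = K' p ^ 2 * a := by
      linear_combination c * e1' - s * e2' +
        (K' p ^ 2 * a - K' p * (K'x p / Real.sqrt (E p))) * hpyth
    have hv' : K' p * ((K'y p - F p / E p * K'x p) / Real.sqrt (G p - F p ^ 2 / E p))
        = -(K' p ^ 2 * b) := by
      linear_combination s * e1' + c * e2' +
        (-(K' p ^ 2 * b) - K' p * ((K'y p - F p / E p * K'x p)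
          / Real.sqrt (G p - F p ^ 2 / E p))) * hpyth
    -- solve for the partial derivatives
    have hu1 : Kx p / Real.sqrt (E p) = K p * a :=
      mul_left_cancel₀ hK0 (by linear_combination hu)
    have hKx_eq : Kx p = K p * a * Real.sqrt (E p) := (div_eq_iff hrE.ne').1 hu1
    have hu1' : K'x p / Real.sqrt (E p) = K' p * a :=
      mul_left_cancel₀ hK'0 (by linear_combination hu')
    have hK'x_eq : K'x p = K' p * a * Real.sqrt (E p) := (div_eq_iff hrE.ne').1 hu1'
    have hv1 : (Ky p - F p / E p * Kx p) / Real.sqrt (G p - F p ^ 2 / E p)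
        = -(K p * b) := mul_left_cancel₀ hK0 (by linear_combination hv)
    have hKy_eq : Ky p = F p / E p * Kx p
        - K p * b * Real.sqrt (G p - F p ^ 2 / E p) := by
      have := (div_eq_iff hrW.ne').1 hv1
      linarith [this]
    have hv1' : (K'y p - F p / E p * K'x p) / Real.sqrt (G p - F p ^ 2 / E p)
        = -(K' p * b) := mul_left_cancel₀ hK'0 (by linear_combination hv')
    have hK'y_eq : K'y p = F p / E p * K'x p
        - K' p * b * Real.sqrt (G p - F p ^ 2 / E p) := by
      have := (div_eq_iff hrW.ne').1 hv1'
      linarith [this]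
    constructor
    · rw [hKx_eq, hK'x_eq]; ring
    · rw [hKy_eq, hK'y_eq, hKx_eq, hK'x_eq]; ring
  -- The quotient g = K / K'
  set g : ℝ × ℝ → ℝ := fun q => K q / K' q with hg
  have hKdiff : ∀ q ∈ D, DifferentiableAt ℝ K q := fun q hq =>
    (hK.contDiffAt (hD.mem_nhds hq)).differentiableAt (by simp)
  have hK'diff : ∀ q ∈ D, DifferentiableAt ℝ K' q := fun q hq =>
    (hK'.contDiffAt (hD.mem_nhds hq)).differentiableAt (by simp)
  have hgdiff : ∀ q ∈ D, DifferentiableAt ℝ g q := by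
    intro q hq
    rw [hg]
    simp only [div_eq_mul_inv]
    exact (hKdiff q hq).mul ((hK'diff q hq).inv (hK'pos q hq).ne')
  -- the full derivative of g vanishes on D
  have hfd : ∀ q ∈ D, fderiv ℝ g q = 0 := by
    intro q hq
    have hK'0 : K' q ≠ 0 := (hK'pos q hq).ne'
    have hgq := hgdiff q hq
    obtain ⟨keyx, keyy⟩ := key q hq
    -- derivative in the first coordinate direction
    have hline1 : HasDerivAt (fun t : ℝ => ((t, q.2) : ℝ × ℝ)) ((1 : ℝ), (0 : ℝ)) q.1 :=
      HasDerivAt.prodMk (hasDerivAt_id q.1) (hasDerivAt_const q.1 q.2)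
    have h1 : HasDerivAt (fun t : ℝ => K (t, q.2) / K' (t, q.2))
        ((fderiv ℝ g q) (1, 0)) q.1 := by
      have := hgq.hasFDerivAt.comp_hasDerivAt q.1 hline1
      exact this
    have h1' : HasDerivAt (fun t : ℝ => K (t, q.2) / K' (t, q.2))
        ((Kx q * K' q - K q * K'x q) / K' q ^ 2) q.1 :=
      (hKx q hq).div (hK'x q hq) hK'0
    have e10 : (fderiv ℝ g q) (1, 0) = 0 := by
      have := h1.unique h1'
      rw [this]
      rw [div_eq_zero_iff]
      left
      linarith [keyx]
    -- derivative in the second coordinate direction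
    have hline2 : HasDerivAt (fun t : ℝ => ((q.1, t) : ℝ × ℝ)) ((0 : ℝ), (1 : ℝ)) q.2 :=
      HasDerivAt.prodMk (hasDerivAt_const q.2 q.1) (hasDerivAt_id q.2)
    have h2 : HasDerivAt (fun t : ℝ => K (q.1, t) / K' (q.1, t))
        ((fderiv ℝ g q) (0, 1)) q.2 := by
      have := hgq.hasFDerivAt.comp_hasDerivAt q.2 hline2
      exact this
    have h2' : HasDerivAt (fun t : ℝ => K (q.1, t) / K' (q.1, t))
        ((Ky q * K' q - K q * K'y q) / K' q ^ 2) q.2 :=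
      (hKy q hq).div (hK'y q hq) hK'0
    have e01 : (fderiv ℝ g q) (0, 1) = 0 := by
      have := h2.unique h2'
      rw [this]
      rw [div_eq_zero_iff]
      left
      linarith [keyy]
    apply ContinuousLinearMap.ext
    intro x
    have hx : x = x.1 • ((1 : ℝ), (0 : ℝ)) + x.2 • ((0 : ℝ), (1 : ℝ)) := by
      simp [Prod.ext_iff]
    have hLx : (fderiv ℝ g q) x
        = x.1 • ((fderiv ℝ g q) (1, 0)) + x.2 • ((fderiv ℝ g q) (0, 1)) := by
      rw [← map_smul, ← map_smul, ← map_add, ← hx]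
    rw [hLx, e10, e01]
    simp
  -- local constancy of g on D
  have hloc : ∀ q ∈ D, ∃ r > 0, Metric.ball q r ⊆ D ∧
      ∀ x ∈ Metric.ball q r, g x = g q := by
    intro q hq
    obtain ⟨r, hr, hball⟩ := Metric.isOpen_iff.1 hD q hq
    refine ⟨r, hr, hball, fun x hx => ?_⟩
    refine (convex_ball q r).is_const_of_fderivWithin_eq_zero
      (fun y hy => ((hgdiff y (hball hy)).differentiableWithinAt)) ?_ hx
      (Metric.mem_ball_self hr)
    intro y hy
    rw [fderivWithin_eq_fderiv (Metric.isOpen_ball.uniqueDiffWithinAt hy)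
      (hgdiff y (hball hy))]
    exact hfd y (hball hy)
  -- g is constant on D by connectedness
  have hconst : ∀ p ∈ D, g p = g p₀ := by
    by_contra hcon
    push_neg at hcon
    obtain ⟨p₁, hp₁, hne⟩ := hcon
    set U : Set (ℝ × ℝ) := {q | ∃ r > 0, Metric.ball q r ⊆ D ∧
      ∀ x ∈ Metric.ball q r, g x = g p₀} with hU
    set V : Set (ℝ × ℝ) := {q | ∃ r > 0, Metric.ball q r ⊆ D ∧
      ∀ x ∈ Metric.ball q r, g x ≠ g p₀} with hV
    have hUopen : IsOpen U := by
      rw [Metric.isOpen_iff]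
      rintro q ⟨r, hr, hball, hconstq⟩
      refine ⟨r, hr, fun x hx => ?_⟩
      obtain ⟨r', hr', hsub⟩ := Metric.isOpen_iff.1 Metric.isOpen_ball x hx
      exact ⟨r', hr', fun y hy => hball (hsub hy),
        fun y hy => hconstq y (hsub hy)⟩
    have hVopen : IsOpen V := by
      rw [Metric.isOpen_iff]
      rintro q ⟨r, hr, hball, hconstq⟩
      refine ⟨r, hr, fun x hx => ?_⟩
      obtain ⟨r', hr', hsub⟩ := Metric.isOpen_iff.1 Metric.isOpen_ball x hx
      exact ⟨r', hr', fun y hy => hball (hsub hy),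
        fun y hy => hconstq y (hsub hy)⟩
    have hcover : D ⊆ U ∪ V := by
      intro q hq
      obtain ⟨r, hr, hball, hcq⟩ := hloc q hq
      by_cases h : g q = g p₀
      · exact Or.inl ⟨r, hr, hball, fun x hx => by rw [hcq x hx, h]⟩
      · exact Or.inr ⟨r, hr, hball, fun x hx => by rw [hcq x hx]; exact h⟩
    have hUne : (D ∩ U).Nonempty := by
      obtain ⟨r, hr, hball, hcq⟩ := hloc p₀ hp₀
      exact ⟨p₀, hp₀, r, hr, hball, fun x hx => hcq x hx⟩
    have hVne : (D ∩ V).Nonempty := by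
      obtain ⟨r, hr, hball, hcq⟩ := hloc p₁ hp₁
      exact ⟨p₁, hp₁, r, hr, hball, fun x hx => by rw [hcq x hx]; exact hne⟩
    obtain ⟨z, _, hzU, hzV⟩ := hconn.isPreconnected U V hUopen hVopen hcover hUne hVne
    obtain ⟨r, hr, _, hcU⟩ := hzU
    obtain ⟨r', hr', _, hcV⟩ := hzV
    exact hcV z (Metric.mem_ball_self hr') (hcU z (Metric.mem_ball_self hr))
  -- conclude
  intro p hp
  have h := hconst p hp
  have h0 : g p₀ = 1 := by
    simp only [hg]
    rw [hval, div_self (hK'pos p₀ hp₀).ne']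
  rw [h0] at h
  have h2 : K p / K' p = 1 := h
  exact (div_eq_one_iff_eq (hK'pos p hp).ne').1 h2
end

section
/- Suppose F = 0 identically on D and the rotation angle is α = 0 identically (the choice corresponding to m = 0 away from umbilic points). Then condition (C) holds at a point of D if and only if at that point the mixed partial derivative ∂_x∂_y(ln(G/E)) vanishes. -/
/-!
STATEMENT 13: Suppose F = 0 identically on D and the rotation angle is α = 0
identically. Then condition (C) holds at a point of D if and only if at that
point the mixed partial derivative ∂_x∂_y(ln(G/E)) vanishes.
-/

open Real Filter Topology

lemma sliceX' {Fc : Type*} [NormedAddCommGroup Fc] [NormedSpace ℝ Fc]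
    {h : ℝ × ℝ → Fc} {p : ℝ × ℝ} (hh : DifferentiableAt ℝ h p) :
    HasDerivAt (fun t => h (t, p.2)) (fderiv ℝ h p (1, 0)) p.1 := by
  have hline : HasDerivAt (fun t : ℝ => (t, p.2)) ((1 : ℝ), (0 : ℝ)) p.1 :=
    (hasDerivAt_id p.1).prodMk (hasDerivAt_const p.1 p.2)
  have := hh.hasFDerivAt.comp_hasDerivAt p.1 hline
  simpa [Function.comp_def] using this

lemma sliceY' {Fc : Type*} [NormedAddCommGroup Fc] [NormedSpace ℝ Fc]
    {h : ℝ × ℝ → Fc} {p : ℝ × ℝ} (hh : DifferentiableAt ℝ h p) :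
    HasDerivAt (fun t => h (p.1, t)) (fderiv ℝ h p (0, 1)) p.2 := by
  have hline : HasDerivAt (fun t : ℝ => (p.1, t)) ((0 : ℝ), (1 : ℝ)) p.2 :=
    (hasDerivAt_const p.2 p.1).prodMk (hasDerivAt_id p.2)
  have := hh.hasFDerivAt.comp_hasDerivAt p.2 hline
  simpa [Function.comp_def] using this

lemma algebra_key (e g se sg ex ey gx gy exy gxy : ℝ)
    (he : se ^ 2 = e) (hg : sg ^ 2 = g) (hse : se ≠ 0) (hsg : sg ≠ 0) :
    (gxy * (2 * g * se) - gx * (2 * gy * se + 2 * g * (ey / (2 * se)))) / (2 * g * se) ^ 2 / sg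
      + (-exy * (2 * e * sg) - -ey * (2 * ex * sg + 2 * e * (gx / (2 * sg)))) / (2 * e * sg) ^ 2 / se
    = ((gxy * g - gy * gx) / g ^ 2 - (exy * e - ey * ex) / e ^ 2) / (2 * se * sg) := by
  subst he; subst hg
  field_simp
  ring
theorem stmt_13
    (D : Set (ℝ × ℝ)) (hD : IsOpen D)
    (f fx fy : ℝ × ℝ → EuclideanSpace ℝ (Fin 3))
    (hf : ContDiffOn ℝ (⊤ : ℕ∞) f D)
    (hfx : ∀ p ∈ D, HasDerivAt (fun t : ℝ => f (t, p.2)) (fx p) p.1)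
    (hfy : ∀ p ∈ D, HasDerivAt (fun t : ℝ => f (p.1, t)) (fy p) p.2)
    (hind : ∀ p ∈ D, LinearIndependent ℝ ![fx p, fy p])
    (E F G : ℝ × ℝ → ℝ)
    (hE : ∀ p, E p = (inner ℝ (fx p) (fx p) : ℝ))
    (hF : ∀ p, F p = (inner ℝ (fx p) (fy p) : ℝ))
    (hG : ∀ p, G p = (inner ℝ (fy p) (fy p) : ℝ))
    (hEpos : ∀ p ∈ D, 0 < E p)
    (hdisc : ∀ p ∈ D, 0 < E p * G p - F p ^ 2)
    (α : ℝ × ℝ → ℝ)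
    (hα : ContDiffOn ℝ (⊤ : ℕ∞) α D)
    -- partial derivatives of the scalar data E, F, G, α
    (Ex Ey Fx Gx αx αy : ℝ × ℝ → ℝ)
    (hEx : ∀ p ∈ D, HasDerivAt (fun t : ℝ => E (t, p.2)) (Ex p) p.1)
    (hEy : ∀ p ∈ D, HasDerivAt (fun t : ℝ => E (p.1, t)) (Ey p) p.2)
    (hFx : ∀ p ∈ D, HasDerivAt (fun t : ℝ => F (t, p.2)) (Fx p) p.1)
    (hGx : ∀ p ∈ D, HasDerivAt (fun t : ℝ => G (t, p.2)) (Gx p) p.1)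
    (hαx : ∀ p ∈ D, HasDerivAt (fun t : ℝ => α (t, p.2)) (αx p) p.1)
    (hαy : ∀ p ∈ D, HasDerivAt (fun t : ℝ => α (p.1, t)) (αy p) p.2)
    -- the quantities P₁, P₂, Q₁, Q₂
    (P₁ P₂ Q₁ Q₂ : ℝ × ℝ → ℝ)
    (hP₁ : ∀ p, P₁ p = ((F p ^ 2 / E p ^ 2) * Ex p - 2 * (F p / E p) * Fx p + Gx p)
        / (2 * (G p - F p ^ 2 / E p) * Real.sqrt (E p)))
    (hP₂ : ∀ p, P₂ p = (-Ey p - (F p / E p) * Ex p + 2 * Fx p)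
        / (2 * E p * Real.sqrt (G p - F p ^ 2 / E p)))
    (hQ₁ : ∀ p, Q₁ p = (αy p - (F p / E p) * αx p) / Real.sqrt (G p - F p ^ 2 / E p))
    (hQ₂ : ∀ p, Q₂ p = αx p / Real.sqrt (E p))
    -- the partial derivatives of P₁, P₂, Q₁, Q₂ appearing in condition (C)
    (P₁x P₁y P₂x Q₁x Q₁y Q₂x : ℝ × ℝ → ℝ)
    (hP₁x : ∀ p ∈ D, HasDerivAt (fun t : ℝ => P₁ (t, p.2)) (P₁x p) p.1)
    (hP₁y : ∀ p ∈ D, HasDerivAt (fun t : ℝ => P₁ (p.1, t)) (P₁y p) p.2)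
    (hP₂x : ∀ p ∈ D, HasDerivAt (fun t : ℝ => P₂ (t, p.2)) (P₂x p) p.1)
    (hQ₁x : ∀ p ∈ D, HasDerivAt (fun t : ℝ => Q₁ (t, p.2)) (Q₁x p) p.1)
    (hQ₁y : ∀ p ∈ D, HasDerivAt (fun t : ℝ => Q₁ (p.1, t)) (Q₁y p) p.2)
    (hQ₂x : ∀ p ∈ D, HasDerivAt (fun t : ℝ => Q₂ (t, p.2)) (Q₂x p) p.1)
    -- F vanishes identically and α = 0 identically on D
    (hF0 : ∀ p ∈ D, F p = 0)
    (hα0 : ∀ p ∈ D, α p = 0)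
    -- the mixed partial derivative ∂_x∂_y(ln(G/E))
    (R Ry Ryx : ℝ × ℝ → ℝ)
    (hR : ∀ p, R p = Real.log (G p / E p))
    (hRy : ∀ p ∈ D, HasDerivAt (fun t : ℝ => R (p.1, t)) (Ry p) p.2)
    (hRyx : ∀ p ∈ D, HasDerivAt (fun t : ℝ => Ry (t, p.2)) (Ryx p) p.1) :
    ∀ p ∈ D,
      -- condition (C) at p
      (((P₁y p - (F p / E p) * P₁x p) / Real.sqrt (G p - F p ^ 2 / E p)
          + P₂x p / Real.sqrt (E p) + P₁ p * Q₂ p - P₂ p * Q₁ p)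
        - (Q₂x p / Real.sqrt (E p) + Q₁ p * Q₂ p
          + Q₁y p / Real.sqrt (G p - F p ^ 2 / E p)
          - (F p / E p) * (Q₁x p + Q₂ p * αx p)
            / Real.sqrt (G p - F p ^ 2 / E p)) = 0)
      ↔
      -- the mixed partial ∂_x∂_y(ln(G/E)) vanishes at p
      Ryx p = 0 := by
  intro p hp
  -- positivity
  have hEp : 0 < E p := hEpos p hp
  have hGposD : ∀ q ∈ D, 0 < G q := by
    intro q hq
    have h1 := hdisc q hq
    rw [hF0 q hq] at h1
    nlinarith [hEpos q hq]
  have hGp : 0 < G p := hGposD p hp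
  -- slice membership eventualities
  have memx : ∀ q ∈ D, ∀ᶠ t in 𝓝 q.1, (t, q.2) ∈ D := fun q hq =>
    ((continuous_id.prodMk continuous_const).continuousAt).eventually_mem (hD.mem_nhds hq)
  have memy : ∀ q ∈ D, ∀ᶠ t in 𝓝 q.2, (q.1, t) ∈ D := fun q hq =>
    ((continuous_const.prodMk continuous_id).continuousAt).eventually_mem (hD.mem_nhds hq)
  -- α and F have vanishing derivatives on D
  have hαx0 : ∀ q ∈ D, αx q = 0 := by
    intro q hq
    exact (hαx q hq).unique <| (hasDerivAt_const q.1 (0 : ℝ)).congr_of_eventuallyEq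
      ((memx q hq).mono fun t ht => hα0 _ ht)
  have hαy0 : ∀ q ∈ D, αy q = 0 := by
    intro q hq
    exact (hαy q hq).unique <| (hasDerivAt_const q.2 (0 : ℝ)).congr_of_eventuallyEq
      ((memy q hq).mono fun t ht => hα0 _ ht)
  have hFx0 : ∀ q ∈ D, Fx q = 0 := by
    intro q hq
    exact (hFx q hq).unique <| (hasDerivAt_const q.1 (0 : ℝ)).congr_of_eventuallyEq
      ((memx q hq).mono fun t ht => hF0 _ ht)
  -- Q₁, Q₂ vanish on D, together with their derivatives at p
  have hQ₁0 : ∀ q ∈ D, Q₁ q = 0 := by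
    intro q hq; rw [hQ₁ q, hαy0 q hq, hαx0 q hq]; simp
  have hQ₂0 : ∀ q ∈ D, Q₂ q = 0 := by
    intro q hq; rw [hQ₂ q, hαx0 q hq]; simp
  have hQ₁x0 : Q₁x p = 0 :=
    (hQ₁x p hp).unique <| (hasDerivAt_const p.1 (0 : ℝ)).congr_of_eventuallyEq
      ((memx p hp).mono fun t ht => hQ₁0 _ ht)
  have hQ₁y0 : Q₁y p = 0 :=
    (hQ₁y p hp).unique <| (hasDerivAt_const p.2 (0 : ℝ)).congr_of_eventuallyEq
      ((memy p hp).mono fun t ht => hQ₁0 _ ht)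
  have hQ₂x0 : Q₂x p = 0 :=
    (hQ₂x p hp).unique <| (hasDerivAt_const p.1 (0 : ℝ)).congr_of_eventuallyEq
      ((memx p hp).mono fun t ht => hQ₂0 _ ht)
  -- smoothness of E and G on D
  have hfC : ∀ q ∈ D, ContDiffAt ℝ 3 f q := fun q hq =>
    ((hf q hq).contDiffAt (hD.mem_nhds hq)).of_le (WithTop.coe_le_coe.2 le_top)
  have hdfC : ∀ q ∈ D, ContDiffAt ℝ 2 (fderiv ℝ f) q := fun q hq =>
    (hfC q hq).fderiv_right (by norm_num)
  have hfx' : ∀ q ∈ D, fx q = fderiv ℝ f q (1, 0) := fun q hq =>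
    (hfx q hq).unique (sliceX' ((hfC q hq).differentiableAt (by norm_num)))
  have hfy' : ∀ q ∈ D, fy q = fderiv ℝ f q (0, 1) := fun q hq =>
    (hfy q hq).unique (sliceY' ((hfC q hq).differentiableAt (by norm_num)))
  have hEC : ∀ q ∈ D, ContDiffAt ℝ 2 E q := by
    intro q hq
    have h1 : ContDiffAt ℝ 2
        (fun r => (inner ℝ (fderiv ℝ f r (1, 0)) (fderiv ℝ f r (1, 0)) : ℝ)) q :=
      ((hdfC q hq).clm_apply contDiffAt_const).inner ℝ ((hdfC q hq).clm_apply contDiffAt_const)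
    exact h1.congr_of_eventuallyEq <| Filter.eventually_of_mem (hD.mem_nhds hq)
      fun r hr => by rw [hE r, hfx' r hr]
  have hGC : ∀ q ∈ D, ContDiffAt ℝ 2 G q := by
    intro q hq
    have h1 : ContDiffAt ℝ 2
        (fun r => (inner ℝ (fderiv ℝ f r (0, 1)) (fderiv ℝ f r (0, 1)) : ℝ)) q :=
      ((hdfC q hq).clm_apply contDiffAt_const).inner ℝ ((hdfC q hq).clm_apply contDiffAt_const)
    exact h1.congr_of_eventuallyEq <| Filter.eventually_of_mem (hD.mem_nhds hq)
      fun r hr => by rw [hG r, hfy' r hr]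
  have hED : ∀ q ∈ D, DifferentiableAt ℝ E q := fun q hq =>
    (hEC q hq).differentiableAt two_ne_zero
  have hGD : ∀ q ∈ D, DifferentiableAt ℝ G q := fun q hq =>
    (hGC q hq).differentiableAt two_ne_zero
  have hAD : DifferentiableAt ℝ (fun q => fderiv ℝ E q (0, 1)) p :=
    (((hEC p hp).fderiv_right le_rfl).clm_apply contDiffAt_const).differentiableAt one_ne_zero
  have hCfnD : DifferentiableAt ℝ (fun q => fderiv ℝ G q (1, 0)) p :=
    (((hGC p hp).fderiv_right le_rfl).clm_apply contDiffAt_const).differentiableAt one_ne_zero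
  have hDfnD : DifferentiableAt ℝ (fun q => fderiv ℝ G q (0, 1)) p :=
    (((hGC p hp).fderiv_right le_rfl).clm_apply contDiffAt_const).differentiableAt one_ne_zero
  -- identification of given partials with fderiv
  have hEy' : ∀ q ∈ D, Ey q = fderiv ℝ E q (0, 1) := fun q hq =>
    (hEy q hq).unique (sliceY' (hED q hq))
  have hGx' : ∀ q ∈ D, Gx q = fderiv ℝ G q (1, 0) := fun q hq =>
    (hGx q hq).unique (sliceX' (hGD q hq))
  -- Clairaut
  have hsymm : fderiv ℝ (fun q => fderiv ℝ G q (1, 0)) p (0, 1)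
      = fderiv ℝ (fun q => fderiv ℝ G q (0, 1)) p (1, 0) := by
    have hsd : IsSymmSndFDerivAt ℝ G p := (hGC p hp).isSymmSndFDerivAt (by simp)
    have hdG : DifferentiableAt ℝ (fderiv ℝ G) p :=
      ((hGC p hp).fderiv_right le_rfl).differentiableAt one_ne_zero
    have h1 : fderiv ℝ (fun q => fderiv ℝ G q (1, 0)) p
        = (fderiv ℝ (fderiv ℝ G) p).flip ((1 : ℝ), (0 : ℝ)) := by
      rw [fderiv_clm_apply hdG (differentiableAt_const _)]
      simp
    have h2 : fderiv ℝ (fun q => fderiv ℝ G q (0, 1)) p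
        = (fderiv ℝ (fderiv ℝ G) p).flip ((0 : ℝ), (1 : ℝ)) := by
      rw [fderiv_clm_apply hdG (differentiableAt_const _)]
      simp
    rw [h1, h2]
    exact hsd (0, 1) (1, 0)
  -- identification of P₁, P₂, Ry with explicit formulas on D
  have hP₁eq : ∀ q ∈ D, P₁ q = fderiv ℝ G q (1, 0) / (2 * G q * Real.sqrt (E q)) := by
    intro q hq
    rw [hP₁ q, hF0 q hq, hGx' q hq]
    norm_num
  have hP₂eq : ∀ q ∈ D, P₂ q = -fderiv ℝ E q (0, 1) / (2 * E q * Real.sqrt (G q)) := by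
    intro q hq
    rw [hP₂ q, hF0 q hq, hFx0 q hq, hEy' q hq]
    norm_num
  have hRyeq : ∀ q ∈ D, Ry q = fderiv ℝ G q (0, 1) / G q - fderiv ℝ E q (0, 1) / E q := by
    intro q hq
    refine (hRy q hq).unique ?_
    have hev : (fun t => R (q.1, t)) =ᶠ[𝓝 q.2]
        (fun t => Real.log (G (q.1, t)) - Real.log (E (q.1, t))) :=
      (memy q hq).mono fun t ht => by
        show R (q.1, t) = Real.log (G (q.1, t)) - Real.log (E (q.1, t))
        rw [hR, Real.log_div (ne_of_gt (hGposD _ ht)) (ne_of_gt (hEpos _ ht))]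
    exact (((sliceY' (hGD q hq)).log (ne_of_gt (hGposD q hq))).sub
      ((sliceY' (hED q hq)).log (ne_of_gt (hEpos q hq)))).congr_of_eventuallyEq hev
  -- positivity of square roots
  have hseP : 0 < Real.sqrt (E p) := Real.sqrt_pos.2 hEp
  have hsgP : 0 < Real.sqrt (G p) := Real.sqrt_pos.2 hGp
  have hden1 : (2 * G p * Real.sqrt (E p)) ≠ 0 :=
    ne_of_gt (mul_pos (mul_pos two_pos hGp) hseP)
  have hden2 : (2 * E p * Real.sqrt (G p)) ≠ 0 :=
    ne_of_gt (mul_pos (mul_pos two_pos hEp) hsgP)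
  -- explicit values of P₁y, P₂x, Ryx at p
  have hV : HasDerivAt
      (fun t => fderiv ℝ G (p.1, t) (1, 0) / (2 * G (p.1, t) * Real.sqrt (E (p.1, t))))
      ((fderiv ℝ (fun q => fderiv ℝ G q (1, 0)) p (0, 1) * (2 * G p * Real.sqrt (E p))
        - fderiv ℝ G p (1, 0) * (2 * fderiv ℝ G p (0, 1) * Real.sqrt (E p)
            + 2 * G p * (fderiv ℝ E p (0, 1) / (2 * Real.sqrt (E p)))))
        / (2 * G p * Real.sqrt (E p)) ^ 2) p.2 :=
    (sliceY' hCfnD).div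
      (((sliceY' (hGD p hp)).const_mul 2).mul ((sliceY' (hED p hp)).sqrt (ne_of_gt hEp)))
      hden1
  have hP1yv : P₁y p
      = (fderiv ℝ (fun q => fderiv ℝ G q (1, 0)) p (0, 1) * (2 * G p * Real.sqrt (E p))
        - fderiv ℝ G p (1, 0) * (2 * fderiv ℝ G p (0, 1) * Real.sqrt (E p)
            + 2 * G p * (fderiv ℝ E p (0, 1) / (2 * Real.sqrt (E p)))))
        / (2 * G p * Real.sqrt (E p)) ^ 2 :=
    (hP₁y p hp).unique <| hV.congr_of_eventuallyEq
      ((memy p hp).mono fun t ht => hP₁eq (p.1, t) ht)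
  have hW : HasDerivAt
      (fun t => -fderiv ℝ E (t, p.2) (0, 1) / (2 * E (t, p.2) * Real.sqrt (G (t, p.2))))
      ((-fderiv ℝ (fun q => fderiv ℝ E q (0, 1)) p (1, 0) * (2 * E p * Real.sqrt (G p))
        - -fderiv ℝ E p (0, 1) * (2 * fderiv ℝ E p (1, 0) * Real.sqrt (G p)
            + 2 * E p * (fderiv ℝ G p (1, 0) / (2 * Real.sqrt (G p)))))
        / (2 * E p * Real.sqrt (G p)) ^ 2) p.1 :=
    ((sliceX' hAD).neg).div
      (((sliceX' (hED p hp)).const_mul 2).mul ((sliceX' (hGD p hp)).sqrt (ne_of_gt hGp)))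
      hden2
  have hP2xv : P₂x p
      = (-fderiv ℝ (fun q => fderiv ℝ E q (0, 1)) p (1, 0) * (2 * E p * Real.sqrt (G p))
        - -fderiv ℝ E p (0, 1) * (2 * fderiv ℝ E p (1, 0) * Real.sqrt (G p)
            + 2 * E p * (fderiv ℝ G p (1, 0) / (2 * Real.sqrt (G p)))))
        / (2 * E p * Real.sqrt (G p)) ^ 2 :=
    (hP₂x p hp).unique <| hW.congr_of_eventuallyEq
      ((memx p hp).mono fun t ht => hP₂eq (t, p.2) ht)
  have hX : HasDerivAt
      (fun t => fderiv ℝ G (t, p.2) (0, 1) / G (t, p.2) - fderiv ℝ E (t, p.2) (0, 1) / E (t, p.2))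
      ((fderiv ℝ (fun q => fderiv ℝ G q (0, 1)) p (1, 0) * G p
          - fderiv ℝ G p (0, 1) * fderiv ℝ G p (1, 0)) / G p ^ 2
        - (fderiv ℝ (fun q => fderiv ℝ E q (0, 1)) p (1, 0) * E p
          - fderiv ℝ E p (0, 1) * fderiv ℝ E p (1, 0)) / E p ^ 2) p.1 :=
    ((sliceX' hDfnD).div (sliceX' (hGD p hp)) (ne_of_gt hGp)).sub
      ((sliceX' hAD).div (sliceX' (hED p hp)) (ne_of_gt hEp))
  have hRyxv : Ryx p
      = (fderiv ℝ (fun q => fderiv ℝ G q (0, 1)) p (1, 0) * G p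
          - fderiv ℝ G p (0, 1) * fderiv ℝ G p (1, 0)) / G p ^ 2
        - (fderiv ℝ (fun q => fderiv ℝ E q (0, 1)) p (1, 0) * E p
          - fderiv ℝ E p (0, 1) * fderiv ℝ E p (1, 0)) / E p ^ 2 :=
    (hRyx p hp).unique <| hX.congr_of_eventuallyEq
      ((memx p hp).mono fun t ht => hRyeq (t, p.2) ht)
  rw [← hsymm] at hRyxv
  -- reduce the condition using the vanishing quantities
  rw [hF0 p hp, hQ₁0 p hp, hQ₂0 p hp, hQ₁x0, hQ₁y0, hQ₂x0]
  norm_num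
  rw [hP1yv, hP2xv, hRyxv,
    algebra_key (E p) (G p) (Real.sqrt (E p)) (Real.sqrt (G p))
      (fderiv ℝ E p (1, 0)) (fderiv ℝ E p (0, 1)) (fderiv ℝ G p (1, 0)) (fderiv ℝ G p (0, 1))
      (fderiv ℝ (fun q => fderiv ℝ E q (0, 1)) p (1, 0))
      (fderiv ℝ (fun q => fderiv ℝ G q (1, 0)) p (0, 1))
      (Real.sq_sqrt hEp.le) (Real.sq_sqrt hGp.le) (ne_of_gt hseP) (ne_of_gt hsgP),
    div_eq_zero_iff]
  have hne : ¬(2 * Real.sqrt (E p) * Real.sqrt (G p) = 0) :=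
    ne_of_gt (mul_pos (mul_pos two_pos hseP) hsgP)
  simp [hne]
end
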